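/- arXiv:2102.01823 — 2 statements merged into one kernel-verified Lean document; each statement's English description precedes it below -/
import Mathlib

section
/- Let B₁ and B₂ be bouquets with isomorphic signed intersection graphs. Then ε(B₁) = ε(B₂); equivalently, since they have the same number of chords, f(B₁) = f(B₂). -/
open Polynomial
open scoped Classical

/-- A bouquet (one-vertex ribbon graph) with `n` loops, encoded as a signed chord
diagram on the circle `ZMod (2*n)`: `σ` is a fixed-point-free involution pairing the
two endpoints of each chord, and `t` records which chords are twisted.
(For `n = 0` the data is pinned to a canonical value, since `ZMod 0 = ℤ`.) -/
structure Bouquet (n : ℕ) where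
  σ : ZMod (2*n) → ZMod (2*n)
  invol : ∀ i, σ (σ i) = i
  fpf : ∀ i, σ i ≠ i
  t : ZMod (2*n) → Bool
  t_inv : ∀ i, t (σ i) = t i
  pin_σ : n = 0 → ∀ i, σ i = -(i+1)
  pin_t : n = 0 → ∀ i, t i = false

namespace Bouquet

variable {n : ℕ}

/-- A canonical (planar, all-untwisted) bouquet with `m` chords. -/
def canonical (m : ℕ) : Bouquet m where
  σ := fun x => -(x+1)
  invol := by intro i; ring
  fpf := by
    intro i h
    have h1 : (2 : ZMod (2*m)) * i + 1 = 0 := by linear_combination - h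
    have h2 := congrArg (ZMod.castHom (⟨m, rfl⟩ : (2:ℕ) ∣ 2*m) (ZMod 2)) h1
    rw [map_add, map_mul, map_one, map_zero, map_ofNat] at h2
    have h3 : ((2 : ℕ) : ZMod 2) = 0 := by decide
    simp only [Nat.cast_ofNat] at h3
    rw [h3, zero_mul, zero_add] at h2
    exact one_ne_zero h2
  t := fun _ => false
  t_inv := fun _ => rfl
  pin_σ := fun _ _ => rfl
  pin_t := fun _ _ => rfl

/-- Transport of a bouquet structure along a bijective relabelling of a
`σ`-invariant set of endpoints. -/
def transport {m : ℕ} (hm : m ≠ 0) (B : Bouquet n) (S : Finset (ZMod (2*n)))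
    (hS : ∀ i ∈ S, B.σ i ∈ S) (e : ZMod (2*m) ≃ {x : ZMod (2*n) // x ∈ S}) :
    Bouquet m where
  σ := fun x => e.symm ⟨B.σ (e x), hS _ (e x).2⟩
  invol := by intro x; simp [B.invol]
  fpf := by
    intro x h
    apply B.fpf ((e x : {x // x ∈ S}) : ZMod (2*n))
    have h2 := congrArg (fun y => (e y : {x // x ∈ S})) h
    simp only [Equiv.apply_symm_apply] at h2
    exact congrArg Subtype.val h2
  t := fun x => B.t (e x)
  t_inv := by intro x; simp [B.t_inv]
  pin_σ := fun h0 => absurd h0 hm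
  pin_t := fun h0 => absurd h0 hm

/-- The order isomorphism `ZMod M ≃ Fin M` (via `ZMod.val`), for `M ≠ 0`. -/
def zmodFinEquiv (M : ℕ) [NeZero M] : ZMod M ≃ Fin M where
  toFun x := ⟨x.val, ZMod.val_lt x⟩
  invFun k := (k.val : ZMod M)
  left_inv x := ZMod.natCast_rightInverse x
  right_inv k := by
    ext
    simpa using ZMod.val_cast_of_lt k.isLt

/-- The induced signed chord diagram `B|S` on a `σ`-invariant set `S` of endpoints,
relabelled order-preservingly by `ZMod (2*(S.card/2))`.  (Junk value otherwise.) -/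
noncomputable def restrict (B : Bouquet n) (S : Finset (ZMod (2*n))) :
    Bouquet (S.card / 2) :=
  if h : n ≠ 0 ∧ S.card / 2 ≠ 0 ∧ S.card = 2 * (S.card / 2) ∧ ∀ i ∈ S, B.σ i ∈ S then
    haveI h1 : NeZero (2*n) := ⟨by omega⟩
    haveI h2 : NeZero (2*(S.card/2)) := ⟨by omega⟩
    let E := zmodFinEquiv (2*n)
    let S' : Finset (Fin (2*n)) := S.image E
    have hc : S'.card = 2*(S.card/2) := by
      rw [Finset.card_image_of_injective _ E.injective]; exact h.2.2.1
    transport h.2.1 B S h.2.2.2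
      ((zmodFinEquiv (2*(S.card/2))).trans
        ((S'.orderIsoOfFin hc).toEquiv.trans (Equiv.subtypeEquiv E.symm (by
          intro a
          simp only [S', Finset.mem_image]
          constructor
          · rintro ⟨b, hb, rfl⟩; simpa using hb
          · intro ha; exact ⟨E.symm a, ha, by simp⟩))))
  else canonical (S.card / 2)

/-- The boundary-tracing permutation `Φ` of a bouquet. -/
def Phi (B : Bouquet n) : ZMod (2*n) × Bool → ZMod (2*n) × Bool :=
  fun p =>
    match p with
    | (i, false) => if B.t (i+1) = true then (B.σ (i+1) - 1, true) else (B.σ (i+1), false)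
    | (i, true) => if B.t i = true then (B.σ i, false) else (B.σ i - 1, true)

/-- The number of classes of the equivalence relation generated by a relation. -/
noncomputable def relClasses {α : Type*} (r : α → α → Prop) : ℕ :=
  Nat.card (Quotient (Relation.EqvGen.setoid r))

/-- The number of orbits of (the permutation generated by) a self-map. -/
noncomputable def orbitCount {α : Type*} (f : α → α) : ℕ :=
  relClasses (fun x y => f x = y)

/-- The number of boundary components `f(B)`: half the number of orbits of `Φ`. -/
noncomputable def numBoundary (B : Bouquet n) : ℕ :=
  if n = 0 then 1 else orbitCount (Phi B) / 2

/-- The Euler genus `ε(B) = 1 + n - f(B)`. -/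
noncomputable def eulerGenus (B : Bouquet n) : ℕ := 1 + n - numBoundary B

/-- `i` and `j` represent the same chord of `B`. -/
def SameChord (B : Bouquet n) (i j : ZMod (2*n)) : Prop := j = i ∨ j = B.σ i

/-- The chords through `i` and through `j` interlace: exactly one endpoint of the
chord through `j` lies strictly between the two endpoints of the chord through `i`
(so the four endpoints alternate in the cyclic order). -/
def Interlace (B : Bouquet n) (i j : ZMod (2*n)) : Prop :=
  Xor' (min i.val (B.σ i).val < j.val ∧ j.val < max i.val (B.σ i).val)
       (min i.val (B.σ i).val < (B.σ j).val ∧ (B.σ j).val < max i.val (B.σ i).val)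

/-- The partial-dual Euler genus polynomial
`∂ε_B(z) = Σ_{A ⊆ chords(B)} z^(ε(B|A) + ε(B|Aᶜ))`, the sum running over all
(σ-invariant endpoint sets of) sets of chords of `B`. -/
noncomputable def pdPoly (B : Bouquet n) : Polynomial ℤ :=
  if h : n = 0 then 1 else
    haveI : NeZero (2*n) := ⟨by omega⟩
    ∑ S ∈ Finset.univ.filter (fun S : Finset (ZMod (2*n)) => ∀ i ∈ S, B.σ i ∈ S),
      (Polynomial.X : Polynomial ℤ) ^
        (eulerGenus (B.restrict S) + eulerGenus (B.restrict Sᶜ))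


/-- An isomorphism of signed intersection graphs `SI(B₁) ≅ SI(B₂)`: a bijection
between the chord sets (described on endpoint representatives) preserving
interlacement and twistedness. -/
def SIso {n₁ n₂ : ℕ} (B₁ : Bouquet n₁) (B₂ : Bouquet n₂) : Prop :=
  ∃ φ : ZMod (2*n₁) → ZMod (2*n₂),
    (∀ i, SameChord B₂ (φ i) (φ (B₁.σ i))) ∧
    (∀ i j, SameChord B₂ (φ i) (φ j) → SameChord B₁ i j) ∧
    (∀ j, ∃ i, SameChord B₂ (φ i) j) ∧
    (∀ i j, Interlace B₁ i j ↔ Interlace B₂ (φ i) (φ j)) ∧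
    (∀ i, B₂.t (φ i) = B₁.t i)


/-! ### Auxiliary development for the main theorem -/

section Aux

/-! #### Generic counting of equivalence classes -/

/-- Functions invariant under a relation are the same as functions on the quotient. -/
noncomputable def invariantEquiv {α : Type*} (r : α → α → Prop) :
    {g : α → ZMod 2 // ∀ a b, r a b → g a = g b} ≃
      (Quotient (Relation.EqvGen.setoid r) → ZMod 2) where
  toFun g := Quotient.lift g.1 (fun a b hab => by
    induction hab with
    | rel a b h => exact g.2 a b h
    | refl a => rfl
    | symm a b _ ih => exact ih.symm
    | trans a b c _ _ ih1 ih2 => exact ih1.trans ih2)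
  invFun h := ⟨fun a => h (Quotient.mk _ a), fun a b hab => by
    exact congrArg h (Quotient.sound (Relation.EqvGen.rel a b hab))⟩
  left_inv g := Subtype.ext rfl
  right_inv h := by
    funext q
    induction q using Quotient.ind
    rfl

lemma card_invariant {α : Type*} [Finite α] (r : α → α → Prop) :
    Nat.card {g : α → ZMod 2 // ∀ a b, r a b → g a = g b} = 2 ^ relClasses r := by
  haveI : Finite (Quotient (Relation.EqvGen.setoid r)) := Quotient.finite _
  rw [Nat.card_congr (invariantEquiv r), Nat.card_fun, Nat.card_zmod]
  rfl

/-- Pairing of orbits under a "reversal" involution. -/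
lemma relClasses_pairing {α : Type*} [Finite α] (f g : α → α)
    (hfg : ∀ a, f (g (f a)) = g a) (hg : ∀ a, g (g a) = a)
    (d : α → ZMod 2) (hd : ∀ a, d (f a) = d a) (hdg : ∀ a, d (g a) ≠ d a) :
    relClasses (fun a b => f a = b) = 2 * relClasses (fun a b => f a = b ∨ g a = b) := by
  classical
  set r1 : α → α → Prop := fun a b => f a = b with hr1
  set r2 : α → α → Prop := fun a b => f a = b ∨ g a = b with hr2
  have hdinv : ∀ a b, Relation.EqvGen r1 a b → d a = d b := by
    intro a b hab
    induction hab with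
    | rel a b h => rw [← h, hd]
    | refl a => rfl
    | symm _ _ _ ih => exact ih.symm
    | trans _ _ _ _ _ ih1 ih2 => exact ih1.trans ih2
  have hgmap : ∀ a b, Relation.EqvGen r1 a b → Relation.EqvGen r1 (g a) (g b) := by
    intro a b hab
    induction hab with
    | rel a b h => exact (Relation.EqvGen.rel (g b) (g a) (by rw [← h]; exact hfg a)).symm _ _
    | refl a => exact Relation.EqvGen.refl _
    | symm x y _ ih => exact ih.symm _ _
    | trans x y z _ _ ih1 ih2 => exact ih1.trans _ _ _ ih2
  have h12 : ∀ a b, Relation.EqvGen r1 a b → Relation.EqvGen r2 a b := by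
    intro a b hab
    exact Relation.EqvGen.mono (fun a b h => Or.inl h) _ _ hab
  have hchar : ∀ a b, Relation.EqvGen r2 a b ↔
      (Relation.EqvGen r1 a b ∨ Relation.EqvGen r1 a (g b)) := by
    intro a b
    constructor
    · intro hab
      induction hab with
      | rel a b h =>
        rcases h with h | h
        · exact Or.inl (Relation.EqvGen.rel _ _ h)
        · refine Or.inr ?_
          rw [← h, hg]
          exact Relation.EqvGen.refl a
      | refl a => exact Or.inl (Relation.EqvGen.refl a)
      | symm x y _ ih =>
        rcases ih with ih | ih
        · exact Or.inl (ih.symm _ _)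
        · refine Or.inr ?_
          have := hgmap _ _ ih
          rw [hg] at this
          exact this.symm _ _
      | trans x y z _ _ ih1 ih2 =>
        rcases ih1 with ih1 | ih1 <;> rcases ih2 with ih2 | ih2
        · exact Or.inl (ih1.trans _ _ _ ih2)
        · exact Or.inr (ih1.trans _ _ _ ih2)
        · have := hgmap _ _ ih2
          exact Or.inr (ih1.trans _ _ _ this)
        · have := hgmap _ _ ih2
          rw [hg] at this
          exact Or.inl (ih1.trans _ _ _ this)
    · intro h
      rcases h with h | h
      · exact h12 _ _ h
      · refine (h12 _ _ h).trans _ _ _ ?_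
        exact Relation.EqvGen.rel _ _ (Or.inr (hg b))
  set s1 := Relation.EqvGen.setoid r1 with hs1
  set s2 := Relation.EqvGen.setoid r2 with hs2
  haveI : Finite (Quotient s1) := Quotient.finite _
  haveI : Finite (Quotient s2) := Quotient.finite _
  haveI : Fintype (Quotient s1) := Fintype.ofFinite _
  haveI : Fintype (Quotient s2) := Fintype.ofFinite _
  let p : Quotient s1 → Quotient s2 :=
    Quotient.lift (fun a => Quotient.mk s2 a) (fun a b h => Quotient.sound (h12 a b h))
  have key : ∀ y : Quotient s2, (Finset.univ.filter (fun x => p x = y)).card = 2 := by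
    intro y
    induction y using Quotient.ind with
    | _ a =>
    have hset : Finset.univ.filter (fun x => p x = Quotient.mk s2 a) =
        {Quotient.mk s1 a, Quotient.mk s1 (g a)} := by
      ext x
      induction x using Quotient.ind with
      | _ b =>
      simp only [Finset.mem_filter, Finset.mem_univ, true_and, Finset.mem_insert,
        Finset.mem_singleton]
      constructor
      · intro hpb
        have : Relation.EqvGen r2 b a := Quotient.exact hpb
        rcases (hchar b a).mp this with h | h
        · exact Or.inl (Quotient.sound h)
        · exact Or.inr (Quotient.sound h)
      · intro hb
        rcases hb with hb | hb
        · have : Relation.EqvGen r1 b a := Quotient.exact hb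
          exact Quotient.sound (h12 _ _ this)
        · have : Relation.EqvGen r1 b (g a) := Quotient.exact hb
          have : Relation.EqvGen r2 b a := (hchar b a).mpr (Or.inr this)
          exact Quotient.sound this
    rw [hset]
    rw [Finset.card_insert_of_notMem, Finset.card_singleton]
    simp only [Finset.mem_singleton]
    intro hEq
    have : Relation.EqvGen r1 a (g a) := Quotient.exact hEq
    exact hdg a ((hdinv _ _ this).symm)
  have hcard : Fintype.card (Quotient s1) = 2 * Fintype.card (Quotient s2) := by
    rw [← Finset.card_univ, Finset.card_eq_sum_card_fiberwise
      (f := p) (t := Finset.univ) (fun x _ => Finset.mem_univ _)]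
    rw [Finset.sum_congr rfl (fun y _ => key y), Finset.sum_const, Finset.card_univ,
      smul_eq_mul, mul_comm]
  show Nat.card (Quotient s1) = 2 * Nat.card (Quotient s2)
  rw [Nat.card_eq_fintype_card, Nat.card_eq_fintype_card, hcard]

/-- Over `GF(2)`, the diagonal of a symmetric matrix lies in its column space. -/
lemma exists_mulVec_eq_diag {ι : Type*} [Fintype ι] [DecidableEq ι]
    (M : Matrix ι ι (ZMod 2)) (hsym : ∀ i j, M i j = M j i) :
    ∃ x, ∀ i, M.mulVec x i = M i i := by
  have htwo : ∀ a : ZMod 2, a + a = 0 := by decide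
  have hsq : ∀ a : ZMod 2, a * a = a := by decide
  haveI : Fact (Nat.Prime 2) := ⟨Nat.prime_two⟩
  classical
  let L : (ι → ZMod 2) →ₗ[ZMod 2] (ι → ZMod 2) := M.mulVecLin
  set K := LinearMap.ker L with hK
  set b0 : ι → ZMod 2 := fun i => M i i with hb0
  have hmul : ∀ y : ι → ZMod 2, ∀ i, L y i = ∑ j, M i j * y j := by
    intro y i
    simp [L, Matrix.mulVecLin_apply, Matrix.mulVec, dotProduct]
  have step1 : ∀ y ∈ K, ∑ i, b0 i * y i = 0 := by
    intro y hy
    have hLy : L y = 0 := hy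
    have h0 : ∑ p ∈ (Finset.univ ×ˢ Finset.univ : Finset (ι × ι)),
        y p.1 * M p.1 p.2 * y p.2 = 0 := by
      rw [Finset.sum_product]
      calc ∑ i, ∑ j, y i * M i j * y j = ∑ i, y i * L y i := by
            refine Finset.sum_congr rfl fun i _ => ?_
            rw [hmul, Finset.mul_sum]
            exact Finset.sum_congr rfl fun j _ => by ring
        _ = 0 := by rw [hLy]; simp
    have hsplit := Finset.sum_filter_add_sum_filter_not
      (Finset.univ ×ˢ Finset.univ : Finset (ι × ι)) (fun p => p.1 = p.2)
      (fun p => y p.1 * M p.1 p.2 * y p.2)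
    have hoff : ∑ p ∈ (Finset.univ ×ˢ Finset.univ : Finset (ι × ι)).filter
        (fun p => ¬ p.1 = p.2), y p.1 * M p.1 p.2 * y p.2 = 0 := by
      refine Finset.sum_involution (fun p _ => (p.2, p.1)) ?_ ?_ ?_ ?_
      · intro p hp
        have : y p.2 * M p.2 p.1 * y p.1 = y p.1 * M p.1 p.2 * y p.2 := by
          rw [hsym p.2 p.1, hsym p.1 p.2]; ring
        rw [this]; exact htwo _
      · intro p hp _
        simp only [Finset.mem_filter, Finset.mem_product, Finset.mem_univ, true_and] at hp
        intro hcon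
        apply hp
        have h2 := congrArg Prod.snd hcon
        simp only [] at h2
        first
          | exact h2
          | exact h2.symm
      · intro p hp
        simp only [Finset.mem_filter, Finset.mem_product, Finset.mem_univ, true_and] at hp ⊢
        exact fun hc => hp hc.symm
      · intro p hp; rfl
    have hdiag : ∑ p ∈ (Finset.univ ×ˢ Finset.univ : Finset (ι × ι)).filter
        (fun p => p.1 = p.2), y p.1 * M p.1 p.2 * y p.2 = ∑ i, b0 i * y i := by
      rw [Finset.sum_filter, Finset.sum_product]
      refine Finset.sum_congr rfl fun i _ => ?_
      rw [Finset.sum_ite_eq]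
      simp only [Finset.mem_univ, if_true, hb0]
      calc y i * M i i * y i = M i i * (y i * y i) := by ring
        _ = M i i * y i := by rw [hsq]
    rw [hdiag, hoff, add_zero] at hsplit
    rw [hsplit, h0]
  -- duality
  let bas := Pi.basisFun (ZMod 2) ι
  let e : (ι → ZMod 2) ≃ₗ[ZMod 2] Module.Dual (ZMod 2) (ι → ZMod 2) := bas.toDualEquiv
  have he : ∀ u y : ι → ZMod 2, e u y = ∑ i, y i * u i := by
    intro u y
    have hy : y = ∑ i, y i • bas i := by
      funext k
      simp [bas, Pi.basisFun_apply, Finset.sum_apply, Pi.single_apply]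
    conv_lhs => rw [hy]
    rw [map_sum]
    refine Finset.sum_congr rfl fun i _ => ?_
    rw [map_smul]
    have : e u (bas i) = u i := by
      simp only [e, Module.Basis.toDualEquiv_apply]
      rw [Module.Basis.toDual_apply_left]
      simp [bas]
    rw [this]
    simp
  set N := Submodule.comap (e : (ι → ZMod 2) →ₗ[ZMod 2] Module.Dual (ZMod 2) (ι → ZMod 2)) K.dualAnnihilator
    with hN
  have hmemN : ∀ x : ι → ZMod 2, x ∈ N ↔ ∀ y ∈ K, ∑ i, y i * x i = 0 := by
    intro x
    rw [hN, Submodule.mem_comap]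
    rw [Submodule.mem_dualAnnihilator]
    constructor
    · intro h y hy
      have := h y hy
      simp only [LinearEquiv.coe_coe] at this
      rw [he] at this
      exact this
    · intro h y hy
      simp only [LinearEquiv.coe_coe]
      rw [he]
      exact h y hy
  have hrank1 : Module.finrank (ZMod 2) N = Module.finrank (ZMod 2) K.dualAnnihilator := by
    rw [hN, Submodule.comap_equiv_eq_map_symm]
    exact LinearEquiv.finrank_map_eq _ _
  have hrank2 : Module.finrank (ZMod 2) K.dualAnnihilator
      = Module.finrank (ZMod 2) (ι → ZMod 2) - Module.finrank (ZMod 2) K := by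
    have h1 : Module.finrank (ZMod 2) ((ι → ZMod 2) ⧸ K)
        = Module.finrank (ZMod 2) K.dualAnnihilator :=
      LinearEquiv.finrank_eq (Subspace.quotEquivAnnihilator K)
    have h2 := Submodule.finrank_quotient_add_finrank K
    omega
  have hrank3 := LinearMap.finrank_range_add_finrank_ker L
  have hle : LinearMap.range L ≤ N := by
    rintro _ ⟨z, rfl⟩
    rw [hmemN]
    intro y hy
    have hLy : L y = 0 := hy
    calc ∑ i, y i * L z i = ∑ i, ∑ j, y i * M i j * z j := by
          refine Finset.sum_congr rfl fun i _ => ?_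
          rw [hmul, Finset.mul_sum]
          exact Finset.sum_congr rfl fun j _ => by ring
      _ = ∑ j, ∑ i, y i * M i j * z j := Finset.sum_comm
      _ = ∑ j, L y j * z j := by
          refine Finset.sum_congr rfl fun j _ => ?_
          rw [hmul, Finset.sum_mul]
          refine Finset.sum_congr rfl fun i _ => ?_
          rw [hsym j i]
          ring
      _ = 0 := by rw [hLy]; simp
  have heq : LinearMap.range L = N := by
    have hKK : Module.finrank (ZMod 2) K ≤ Module.finrank (ZMod 2) (ι → ZMod 2) := by
      rw [hK]
      omega
    refine Submodule.eq_of_le_of_finrank_le hle ?_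
    rw [hrank1, hrank2]
    rw [hK] at *
    omega
  have hb0N : b0 ∈ N := by
    rw [hmemN]
    intro y hy
    rw [show ∑ i, y i * b0 i = ∑ i, b0 i * y i from
      Finset.sum_congr rfl fun i _ => mul_comm _ _]
    exact step1 y hy
  rw [← heq] at hb0N
  obtain ⟨x, hx⟩ := hb0N
  refine ⟨x, fun i => ?_⟩
  have := congrFun hx i
  rw [show L x i = M.mulVec x i from rfl] at this
  exact this

end Aux

section BouquetAux

variable {n : ℕ} (B : Bouquet n)

/-- Representatives of chords: the endpoint with smaller `val`. -/
def Reps : Type := {j : ZMod (2*n) // j.val < (B.σ j).val}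

instance [NeZero (2*n)] : Finite (Reps B) := by
  unfold Reps; infer_instance

noncomputable instance [NeZero (2*n)] : Fintype (Reps B) := Fintype.ofFinite _

/-- Indicator of a twisted endpoint. -/
def tInd (j : ZMod (2*n)) : ZMod 2 := if B.t j then 1 else 0

/-- The half-open interval indicator attached to a chord representative. -/
def Ain (c i : ZMod (2*n)) : ZMod 2 :=
  if c.val ≤ i.val ∧ i.val < (B.σ c).val then 1 else 0

/-- The signed interlacement matrix entry, at endpoint level. -/
noncomputable def Mt (c d : ZMod (2*n)) : ZMod 2 :=
  if SameChord B c d then tInd B d else if Interlace B c d then 1 else 0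

/-- The potential function attached to a chord-indexed vector. -/
noncomputable def gfun [NeZero (2*n)] (x : Reps B → ZMod 2) (i : ZMod (2*n)) : ZMod 2 :=
  ∑ c : Reps B, x c * Ain B c.val i

/-- Solutions of the homogeneous system of the signed interlacement matrix. -/
def Sol [NeZero (2*n)] : Type := {x : Reps B → ZMod 2 //
  ∀ j : ZMod (2*n), (∑ c : Reps B, Mt B c.val j * x c) = 0}

instance [NeZero (2*n)] : Finite (Sol B) := by unfold Sol; infer_instance

/-- The reversal involution on boundary states. -/
def RR : ZMod (2*n) × Bool → ZMod (2*n) × Bool := fun q => (q.1, !q.2)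

end BouquetAux

section Core

variable {n : ℕ} (B : Bouquet n) [NeZero (2*n)]

omit [NeZero (2*n)] in
lemma sigma_inj : Function.Injective B.σ :=
  Function.LeftInverse.injective B.invol

lemma val_inj {i j : ZMod (2*n)} : i.val = j.val ↔ i = j :=
  ⟨fun h => ZMod.val_injective _ h, fun h => h ▸ rfl⟩

omit [NeZero (2*n)] in
lemma val_sub_one [NeZero (2*n)] (i : ZMod (2*n)) (hn : 1 ≤ n) :
    (i - 1).val = if i.val = 0 then 2*n - 1 else i.val - 1 := by
  have hN : 2 ≤ 2*n := by omega
  have hvi := ZMod.val_lt i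
  by_cases h : i.val = 0
  · have hi : i = 0 := (ZMod.val_eq_zero i).mp h
    subst hi
    rw [if_pos h]
    have h1 : (0 : ZMod (2*n)) - 1 = ((2*n - 1 : ℕ) : ZMod (2*n)) := by
      rw [Nat.cast_sub (by omega : 1 ≤ 2*n), ZMod.natCast_self, Nat.cast_one]
    rw [h1, ZMod.val_cast_of_lt (by omega)]
  · rw [if_neg h]
    have hi : ((i.val : ℕ) : ZMod (2*n)) = i := ZMod.natCast_zmod_val i
    conv_lhs => rw [← hi]
    rw [← Nat.cast_one, ← Nat.cast_sub (by omega : 1 ≤ i.val),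
      ZMod.val_cast_of_lt (by omega)]

lemma ain_jump (c : Reps B) (i : ZMod (2*n)) (hn : 1 ≤ n) :
    Ain B c.val i = Ain B c.val (i - 1)
      + (if i = c.val ∨ i = B.σ c.val then 1 else 0) := by
  have hc := c.2
  have hvi := ZMod.val_lt i
  have hva := ZMod.val_lt c.val
  have hvb := ZMod.val_lt (B.σ c.val)
  unfold Ain
  rw [val_sub_one i hn]
  simp only [← val_inj]
  split_ifs <;> first | rfl | decide | omega

omit [NeZero (2*n)] in
lemma not_same_facts {i j : ZMod (2*n)} (h : ¬ SameChord B i j) :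
    j ≠ i ∧ j ≠ B.σ i ∧ B.σ j ≠ i ∧ B.σ j ≠ B.σ i := by
  have h1 : ¬ (j = i ∨ j = B.σ i) := h
  push_neg at h1
  refine ⟨h1.1, h1.2, ?_, ?_⟩
  · intro hc
    exact h1.2 (by rw [← hc, B.invol])
  · intro hc
    exact h1.1 (sigma_inj B hc)

/-- Key step identity, case of traversing at an untwisted chord endpoint. -/
lemma ain_step_untw (c : Reps B) (j : ZMod (2*n)) (hn : 1 ≤ n) (hτ : B.t j = false) :
    Ain B c.val (B.σ j) = Ain B c.val (j - 1) + Mt B c.val j ∧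
    Ain B c.val (B.σ j - 1) = Ain B c.val j + Mt B c.val j := by
  have hc := c.2
  have hva := ZMod.val_lt c.val
  have hvb := ZMod.val_lt (B.σ c.val)
  have hvj := ZMod.val_lt j
  have hvs := ZMod.val_lt (B.σ j)
  by_cases hsc : SameChord B c.val j
  · have hmt : Mt B c.val j = 0 := by
      unfold Mt tInd
      rw [if_pos hsc, hτ]
      simp
    rcases hsc with h | h
    · subst h
      rw [hmt]
      unfold Ain
      rw [val_sub_one _ hn, val_sub_one _ hn]
      constructor <;> (split_ifs <;> first | rfl | decide | omega)
    · subst h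
      rw [hmt, B.invol]
      unfold Ain
      rw [val_sub_one _ hn, val_sub_one _ hn]
      constructor <;> (split_ifs <;> first | rfl | decide | omega)
  · obtain ⟨h1, h2, h3, h4⟩ := not_same_facts B hsc
    have hv1 : j.val ≠ (c.val : ZMod (2*n)).val := fun hv => h1 (val_inj.mp hv)
    have hv2 : j.val ≠ (B.σ c.val).val := fun hv => h2 (val_inj.mp hv)
    have hv3 : (B.σ j).val ≠ (c.val : ZMod (2*n)).val := fun hv => h3 (val_inj.mp hv)
    have hv4 : (B.σ j).val ≠ (B.σ c.val).val := fun hv => h4 (val_inj.mp hv)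
    have hmt : Mt B c.val j = (if Interlace B c.val j then 1 else 0) := by
      unfold Mt
      rw [if_neg hsc]
    rw [hmt]
    unfold Ain Interlace
    rw [min_eq_left (le_of_lt hc), max_eq_right (le_of_lt hc),
      val_sub_one _ hn, val_sub_one _ hn]
    unfold Xor' Xor
    constructor <;> (split_ifs <;> first | rfl | decide | omega)

/-- Key step identity, case of traversing at a twisted chord endpoint. -/
lemma ain_step_tw (c : Reps B) (j : ZMod (2*n)) (hn : 1 ≤ n) (hτ : B.t j = true) :
    Ain B c.val (B.σ j - 1) = Ain B c.val (j - 1) + Mt B c.val j ∧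
    Ain B c.val (B.σ j) = Ain B c.val j + Mt B c.val j := by
  have hc := c.2
  have hva := ZMod.val_lt c.val
  have hvb := ZMod.val_lt (B.σ c.val)
  have hvj := ZMod.val_lt j
  have hvs := ZMod.val_lt (B.σ j)
  by_cases hsc : SameChord B c.val j
  · have hmt : Mt B c.val j = 1 := by
      unfold Mt tInd
      rw [if_pos hsc, hτ]
      simp
    rcases hsc with h | h
    · subst h
      rw [hmt]
      unfold Ain
      rw [val_sub_one _ hn, val_sub_one _ hn]
      constructor <;> (split_ifs <;> first | rfl | decide | omega)
    · subst h
      rw [hmt, B.invol]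
      unfold Ain
      rw [val_sub_one _ hn, val_sub_one _ hn]
      constructor <;> (split_ifs <;> first | rfl | decide | omega)
  · obtain ⟨h1, h2, h3, h4⟩ := not_same_facts B hsc
    have hv1 : j.val ≠ (c.val : ZMod (2*n)).val := fun hv => h1 (val_inj.mp hv)
    have hv2 : j.val ≠ (B.σ c.val).val := fun hv => h2 (val_inj.mp hv)
    have hv3 : (B.σ j).val ≠ (c.val : ZMod (2*n)).val := fun hv => h3 (val_inj.mp hv)
    have hv4 : (B.σ j).val ≠ (B.σ c.val).val := fun hv => h4 (val_inj.mp hv)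
    have hmt : Mt B c.val j = (if Interlace B c.val j then 1 else 0) := by
      unfold Mt
      rw [if_neg hsc]
    rw [hmt]
    unfold Ain Interlace
    rw [min_eq_left (le_of_lt hc), max_eq_right (le_of_lt hc),
      val_sub_one _ hn, val_sub_one _ hn]
    unfold Xor' Xor
    constructor <;> (split_ifs <;> first | rfl | decide | omega)

/-- The canonical representative of the chord through `j`. -/
noncomputable def repOf (j : ZMod (2*n)) : Reps B :=
  if h : j.val < (B.σ j).val then ⟨j, h⟩
  else ⟨B.σ j, by
    rw [B.invol]
    rcases lt_trichotomy ((B.σ j).val) j.val with h' | h' | h'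
    · exact h'
    · exact absurd (val_inj.mp h') (B.fpf j)
    · exact absurd h' h⟩

lemma repOf_same (j : ZMod (2*n)) : j = (repOf B j).val ∨ j = B.σ (repOf B j).val := by
  by_cases h : j.val < (B.σ j).val
  · have e : (repOf B j).val = j := congrArg Subtype.val (dif_pos h : repOf B j = _)
    rw [e]; exact Or.inl rfl
  · have e : (repOf B j).val = B.σ j := congrArg Subtype.val (dif_neg h : repOf B j = _)
    rw [e]; exact Or.inr (B.invol j).symm

lemma sum_eInd (x : Reps B → ZMod 2) (j : ZMod (2*n)) :
    (∑ c : Reps B, x c * (if j = c.val ∨ j = B.σ c.val then 1 else 0))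
      = x (repOf B j) := by
  rw [Finset.sum_eq_single (repOf B j)]
  · rcases repOf_same B j with h | h
    · rw [if_pos (Or.inl h), mul_one]
    · rw [if_pos (Or.inr h), mul_one]
  · intro c _ hne
    rw [if_neg, mul_zero]
    rintro (h | h)
    · apply hne
      rw [repOf]
      have hlt : j.val < (B.σ j).val := by rw [h]; exact c.2
      refine Eq.trans ?_ (dif_pos hlt).symm
      exact Subtype.ext h.symm
    · apply hne
      rw [repOf]
      have hσ : B.σ j = c.val := by rw [h, B.invol]
      have hlt : ¬ j.val < (B.σ j).val := by
        rw [h, B.invol]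
        have := c.2
        omega
      refine Eq.trans ?_ (dif_neg hlt).symm
      exact Subtype.ext hσ.symm
  · intro h
    exact absurd (Finset.mem_univ _) h

/-- The jump of `gfun` across an index. -/
lemma gfun_jump (x : Reps B → ZMod 2) (j : ZMod (2*n)) (hn : 1 ≤ n) :
    gfun B x j = gfun B x (j - 1) + x (repOf B j) := by
  rw [← sum_eInd B x j]
  unfold gfun
  rw [← Finset.sum_add_distrib]
  refine Finset.sum_congr rfl fun c _ => ?_
  rw [ain_jump B c j hn, mul_add]

omit [NeZero (2*n)] in
lemma sameChord_symm {i j : ZMod (2*n)} (h : SameChord B i j) : SameChord B j i := by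
  rcases h with h | h
  · exact Or.inl h.symm
  · right
    rw [h, B.invol]

omit [NeZero (2*n)] in
lemma sameChord_sigma_right (c d : ZMod (2*n)) :
    SameChord B c (B.σ d) ↔ SameChord B c d := by
  unfold SameChord
  constructor
  · rintro (h | h)
    · exact Or.inr (by rw [← h, B.invol])
    · exact Or.inl (sigma_inj B h)
  · rintro (h | h)
    · exact Or.inr (by rw [h])
    · exact Or.inl (by rw [h, B.invol])

omit [NeZero (2*n)] in
lemma interlace_sigma_right (i j : ZMod (2*n)) :
    Interlace B i (B.σ j) ↔ Interlace B i j := by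
  unfold Interlace
  rw [B.invol]
  unfold Xor' Xor
  tauto

lemma interlace_comm {i j : ZMod (2*n)} (hns : ¬ SameChord B i j) (hn : 1 ≤ n) :
    Interlace B i j ↔ Interlace B j i := by
  obtain ⟨h1, h2, h3, h4⟩ := not_same_facts B hns
  have hv1 : j.val ≠ i.val := fun hv => h1 (val_inj.mp hv)
  have hv2 : j.val ≠ (B.σ i).val := fun hv => h2 (val_inj.mp hv)
  have hv3 : (B.σ j).val ≠ i.val := fun hv => h3 (val_inj.mp hv)
  have hv4 : (B.σ j).val ≠ (B.σ i).val := fun hv => h4 (val_inj.mp hv)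
  have hfi : i.val ≠ (B.σ i).val := fun hv => B.fpf i (val_inj.mp hv).symm
  have hfj : j.val ≠ (B.σ j).val := fun hv => B.fpf j (val_inj.mp hv).symm
  unfold Interlace Xor' Xor
  rw [min_def, max_def, min_def, max_def]
  split_ifs <;> omega

lemma mt_symm (c d : ZMod (2*n)) (hn : 1 ≤ n) : Mt B c d = Mt B d c := by
  by_cases hs : SameChord B c d
  · unfold Mt
    rw [if_pos hs, if_pos (sameChord_symm B hs)]
    rcases hs with h | h
    · rw [h]
    · rw [h]
      unfold tInd
      rw [B.t_inv]
  · unfold Mt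
    rw [if_neg hs, if_neg (fun h => hs (sameChord_symm B h))]
    rw [interlace_comm B hs hn]

lemma mt_sigma_right (c d : ZMod (2*n)) : Mt B c (B.σ d) = Mt B c d := by
  unfold Mt
  by_cases hs : SameChord B c d
  · rw [if_pos hs, if_pos ((sameChord_sigma_right B c d).mpr hs)]
    unfold tInd
    rw [B.t_inv]
  · rw [if_neg hs, if_neg (fun h => hs ((sameChord_sigma_right B c d).mp h))]
    rw [interlace_sigma_right]

/-- The endpoint at which `Φ` traverses a chord from state `q`. -/
def ep (q : ZMod (2*n) × Bool) : ZMod (2*n) := if q.2 then q.1 else q.1 + 1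

lemma gfun_step (x : Reps B → ZMod 2) (q : ZMod (2*n) × Bool) (hn : 1 ≤ n) :
    gfun B x (Phi B q).1 = gfun B x q.1
      + ∑ c : Reps B, x c * Mt B c.val (ep q) := by
  obtain ⟨i, s⟩ := q
  have hsum : ∀ j : ZMod (2*n), ∀ v w : ZMod (2*n),
      (∀ c : Reps B, Ain B c.val v = Ain B c.val w + Mt B c.val j) →
      gfun B x v = gfun B x w + ∑ c : Reps B, x c * Mt B c.val j := by
    intro j v w h
    unfold gfun
    rw [← Finset.sum_add_distrib]
    refine Finset.sum_congr rfl fun c _ => ?_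
    rw [h c, mul_add]
  cases s
  · have hep : ep ((i, false) : ZMod (2*n) × Bool) = i + 1 := rfl
    rw [hep]
    by_cases hτ : B.t (i+1) = true
    · have h1 : (Phi B (i, false)).1 = B.σ (i+1) - 1 := by simp [Phi, hτ]
      have hgoal := hsum (i+1) (B.σ (i+1) - 1) ((i+1) - 1)
        (fun c => (ain_step_tw B c (i+1) hn hτ).1)
      rw [show ((i+1 : ZMod (2*n)) - 1) = i from by ring] at hgoal
      rw [h1]
      exact hgoal
    · have hτ' : B.t (i+1) = false := by simpa using hτ
      have h1 : (Phi B (i, false)).1 = B.σ (i+1) := by simp [Phi, hτ']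
      have hgoal := hsum (i+1) (B.σ (i+1)) ((i+1) - 1)
        (fun c => (ain_step_untw B c (i+1) hn hτ').1)
      rw [show ((i+1 : ZMod (2*n)) - 1) = i from by ring] at hgoal
      rw [h1]
      exact hgoal
  · have hep : ep ((i, true) : ZMod (2*n) × Bool) = i := rfl
    rw [hep]
    by_cases hτ : B.t i = true
    · have h1 : (Phi B (i, true)).1 = B.σ i := by simp [Phi, hτ]
      rw [h1]
      exact hsum i (B.σ i) i (fun c => (ain_step_tw B c i hn hτ).2)
    · have hτ' : B.t i = false := by simpa using hτ
      have h1 : (Phi B (i, true)).1 = B.σ i - 1 := by simp [Phi, hτ']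
      rw [h1]
      exact hsum i (B.σ i - 1) i (fun c => (ain_step_untw B c i hn hτ').2)

omit [NeZero (2*n)] in
lemma tInd_step (q : ZMod (2*n) × Bool) :
    (if (Phi B q).2 then (1:ZMod 2) else 0)
      = (if q.2 then (1:ZMod 2) else 0) + tInd B (ep q) := by
  have h2 : (1 : ZMod 2) + 1 = 0 := by decide
  obtain ⟨i, s⟩ := q
  cases s
  · by_cases hτ : B.t (i+1) = true
    · simp [Phi, hτ, ep, tInd]
    · have hτ' : B.t (i+1) = false := by simpa using hτ
      simp [Phi, hτ', ep, tInd]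
  · by_cases hτ : B.t i = true
    · simp [Phi, hτ, ep, tInd, h2]
    · have hτ' : B.t i = false := by simpa using hτ
      simp [Phi, hτ', ep, tInd]

omit [NeZero (2*n)] in
lemma rr_invol (q : ZMod (2*n) × Bool) : RR (RR q) = q := by
  obtain ⟨i, s⟩ := q
  cases s <;> rfl

omit [NeZero (2*n)] in
lemma phi_rr_phi (q : ZMod (2*n) × Bool) : Phi B (RR (Phi B q)) = RR q := by
  obtain ⟨i, s⟩ := q
  cases s
  · by_cases hτ : B.t (i+1) = true
    · have h1 : Phi B (i, false) = (B.σ (i+1) - 1, true) := by simp [Phi, hτ]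
      rw [h1]
      have h2 : RR ((B.σ (i+1) - 1, true) : ZMod (2*n) × Bool)
          = (B.σ (i+1) - 1, false) := rfl
      rw [h2]
      have h3 : B.σ (i+1) - 1 + 1 = B.σ (i+1) := by ring
      have h4 : B.t (B.σ (i+1)) = true := by rw [B.t_inv]; exact hτ
      have h5 : Phi B (B.σ (i+1) - 1, false)
          = (B.σ (B.σ (i+1)) - 1, true) := by simp [Phi, h3, h4]
      rw [h5, B.invol]
      rw [show (i + 1 : ZMod (2*n)) - 1 = i from by ring]
      rfl
    · have hτ' : B.t (i+1) = false := by simpa using hτ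
      have h1 : Phi B (i, false) = (B.σ (i+1), false) := by simp [Phi, hτ']
      rw [h1]
      have h2 : RR ((B.σ (i+1), false) : ZMod (2*n) × Bool) = (B.σ (i+1), true) := rfl
      rw [h2]
      have h4 : B.t (B.σ (i+1)) = false := by rw [B.t_inv]; exact hτ'
      have h5 : Phi B (B.σ (i+1), true) = (B.σ (B.σ (i+1)) - 1, true) := by
        simp [Phi, h4]
      rw [h5, B.invol]
      rw [show (i + 1 : ZMod (2*n)) - 1 = i from by ring]
      rfl
  · by_cases hτ : B.t i = true
    · have h1 : Phi B (i, true) = (B.σ i, false) := by simp [Phi, hτ]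
      rw [h1]
      have h2 : RR ((B.σ i, false) : ZMod (2*n) × Bool) = (B.σ i, true) := rfl
      rw [h2]
      have h4 : B.t (B.σ i) = true := by rw [B.t_inv]; exact hτ
      have h5 : Phi B (B.σ i, true) = (B.σ (B.σ i), false) := by simp [Phi, h4]
      rw [h5, B.invol]
      rfl
    · have hτ' : B.t i = false := by simpa using hτ
      have h1 : Phi B (i, true) = (B.σ i - 1, true) := by simp [Phi, hτ']
      rw [h1]
      have h2 : RR ((B.σ i - 1, true) : ZMod (2*n) × Bool) = (B.σ i - 1, false) := rfl
      rw [h2]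
      have h3 : B.σ i - 1 + 1 = B.σ i := by ring
      have h4 : B.t (B.σ i) = false := by rw [B.t_inv]; exact hτ'
      have h5 : Phi B (B.σ i - 1, false) = (B.σ (B.σ i), false) := by
        simp [Phi, h3, h4]
      rw [h5, B.invol]
      rfl

lemma repOf_rep (c : Reps B) : repOf B c.val = c := by
  rw [repOf]
  refine (dif_pos c.2).trans ?_
  exact Subtype.ext rfl


lemma const_of_step (f : ZMod (2*n) → ZMod 2) (hstep : ∀ j, f j = f (j - 1)) :
    ∀ j, f j = f 0 := by
  have hnat : ∀ k : ℕ, f (k : ZMod (2*n)) = f 0 := by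
    intro k
    induction k with
    | zero => simp
    | succ k ih =>
      have h1 := hstep ((k+1 : ℕ) : ZMod (2*n))
      have h2 : ((k+1 : ℕ) : ZMod (2*n)) - 1 = (k : ℕ) := by push_cast; ring
      rw [h2] at h1
      rw [h1, ih]
  intro j
  obtain ⟨k, rfl⟩ := ZMod.natCast_zmod_surjective j
  exact hnat k

end Core

section Count

variable {n : ℕ} (B : Bouquet n) [NeZero (2*n)]

lemma mt_all (hn : 1 ≤ n) :
    ∃ x0 : Reps B → ZMod 2, ∀ j : ZMod (2*n),
      ∑ c : Reps B, Mt B c.val j * x0 c = tInd B j := by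
  classical
  obtain ⟨x0, hx0⟩ := exists_mulVec_eq_diag
    (Matrix.of (fun c d : Reps B => Mt B c.val d.val))
    (fun c d => mt_symm B c.val d.val hn)
  refine ⟨x0, fun j => ?_⟩
  have hx : ∀ d : Reps B, ∑ c : Reps B, Mt B d.val c.val * x0 c = Mt B d.val d.val := by
    intro d
    have := hx0 d
    simpa [Matrix.mulVec, dotProduct] using this
  have hdiag : ∀ d : Reps B, Mt B d.val d.val = tInd B d.val := by
    intro d
    unfold Mt
    rw [if_pos (show SameChord B d.val d.val from Or.inl rfl)]
  obtain ⟨d, hd⟩ : ∃ d : Reps B, j = d.val ∨ j = B.σ d.val :=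
    ⟨repOf B j, repOf_same B j⟩
  rcases hd with h | h <;> subst h
  · calc ∑ c : Reps B, Mt B c.val d.val * x0 c
        = ∑ c : Reps B, Mt B d.val c.val * x0 c := by
          refine Finset.sum_congr rfl fun c _ => ?_
          rw [mt_symm B c.val d.val hn]
      _ = Mt B d.val d.val := hx _
      _ = tInd B d.val := hdiag d
  · calc ∑ c : Reps B, Mt B c.val (B.σ d.val) * x0 c
        = ∑ c : Reps B, Mt B d.val c.val * x0 c := by
          refine Finset.sum_congr rfl fun c _ => ?_
          rw [mt_sigma_right, mt_symm B c.val d.val hn]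
      _ = Mt B d.val d.val := hx _
      _ = tInd B (B.σ d.val) := by
          rw [hdiag d]
          unfold tInd
          rw [B.t_inv]

lemma sol_bij (hn : n ≠ 0) :
    Nat.card {g : ZMod (2*n) × Bool → ZMod 2 //
      ∀ a b, (Phi B a = b ∨ RR a = b) → g a = g b} = 2 * Nat.card (Sol B) := by
  classical
  have hn1 : 1 ≤ n := by omega
  have key1 : ∀ a b g g' h h' u v : ZMod 2,
      a + g = b + g' → a + h = b + h' → g = h + u → g' = h' + v → u = v := by decide
  have key2 : ∀ a b : ZMod 2, a = b + (a + b) := by decide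
  have key3 : ∀ a b c dd u : ZMod 2, a = b + u → c = dd + u → a + c = b + dd := by decide
  have key4 : ∀ a b e : ZMod 2, a + b = e → a = e + b := by decide
  have key5 : ∀ e a s : ZMod 2, e + a = e + (a + s) → s = 0 := by decide
  let F : ZMod 2 × Sol B → {g : ZMod (2*n) × Bool → ZMod 2 //
      ∀ a b, (Phi B a = b ∨ RR a = b) → g a = g b} := fun p =>
    ⟨fun q => p.1 + gfun B p.2.1 q.1, by
      rintro a b (hb | hb)
      · subst hb
        have e2 := gfun_step B p.2.1 a hn1
        have e3 : ∑ c : Reps B, p.2.1 c * Mt B c.val (ep a) = 0 := by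
          have h := p.2.2 (ep a)
          exact (Finset.sum_congr rfl fun c _ => mul_comm _ _).trans h
        show p.1 + gfun B p.2.1 a.1 = p.1 + gfun B p.2.1 (Phi B a).1
        rw [e2, e3, add_zero]
      · subst hb
        rfl⟩
  have hFbij : Function.Bijective F := by
    constructor
    · rintro ⟨ε, x⟩ ⟨ε', x'⟩ hFeq
      have hpt : ∀ q : ZMod (2*n) × Bool, ε + gfun B x.1 q.1 = ε' + gfun B x'.1 q.1 :=
        fun q => congrFun (congrArg Subtype.val hFeq) q
      have hx : x = x' := by
        apply Subtype.ext
        funext c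
        have e1 := hpt (c.val, false)
        have e2 := hpt (c.val - 1, false)
        have j1 := gfun_jump B x.1 c.val hn1
        have j2 := gfun_jump B x'.1 c.val hn1
        rw [repOf_rep] at j1 j2
        exact key1 ε ε' _ _ _ _ _ _ e1 e2 j1 j2
      have hε : ε = ε' := by
        have e1 := hpt (0, false)
        rw [hx] at e1
        exact add_right_cancel e1
      rw [Prod.ext_iff]
      exact ⟨hε, hx⟩
    · rintro ⟨g, hg⟩
      have hflip : ∀ p : ZMod (2*n) × Bool, g p = g (p.1, false) := by
        intro p
        obtain ⟨i, s⟩ := p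
        cases s
        · rfl
        · exact (hg (i, false) (i, true) (Or.inr rfl)).symm
      set gh : ZMod (2*n) → ZMod 2 := fun i => g (i, false) with hgh
      have hsig : ∀ k, gh (B.σ k) + gh (B.σ k - 1) = gh k + gh (k - 1) := by
        intro k
        have hk : (k - 1 : ZMod (2*n)) + 1 = k := by ring
        by_cases hτ : B.t k = true
        · have hPhi : Phi B (k-1, false) = (B.σ k - 1, true) := by simp [Phi, hk, hτ]
          have hPhi2 : Phi B (k, true) = (B.σ k, false) := by simp [Phi, hτ]
          have r1 : gh (k-1) = gh (B.σ k - 1) := by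
            have h := hg (k-1, false) _ (Or.inl rfl)
            rw [hPhi] at h
            exact h.trans (hflip _)
          have r2 : gh k = gh (B.σ k) := by
            have h := hg (k, true) _ (Or.inl rfl)
            rw [hPhi2] at h
            exact (hflip (k, true)).symm.trans h
          rw [← r1, ← r2]
        · have hτ' : B.t k = false := by simpa using hτ
          have hPhi : Phi B (k-1, false) = (B.σ k, false) := by simp [Phi, hk, hτ']
          have hPhi2 : Phi B (k, true) = (B.σ k - 1, true) := by simp [Phi, hτ']
          have r1 : gh (k-1) = gh (B.σ k) := by
            have h := hg (k-1, false) _ (Or.inl rfl)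
            rw [hPhi] at h
            exact h
          have r2 : gh k = gh (B.σ k - 1) := by
            have h := hg (k, true) _ (Or.inl rfl)
            rw [hPhi2] at h
            exact (hflip (k, true)).symm.trans (h.trans (hflip _))
          rw [← r1, ← r2]
          exact add_comm _ _
      set x : Reps B → ZMod 2 := fun c => gh c.val + gh (c.val - 1) with hxdef
      have hjump : ∀ j, gh j = gh (j - 1) + x (repOf B j) := by
        intro j
        obtain ⟨d, hd⟩ : ∃ d : Reps B, (j = d.val ∨ j = B.σ d.val) ∧ repOf B j = d :=
          ⟨repOf B j, repOf_same B j, rfl⟩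
        rw [hd.2]
        rcases hd.1 with h | h <;> subst h
        · exact key2 _ _
        · have hs := hsig d.val
          show gh (B.σ d.val) = gh (B.σ d.val - 1) + (gh d.val + gh (d.val - 1))
          rw [← hs]
          exact key2 _ _
      have hstep : ∀ j, gh j + gfun B x j = gh (j-1) + gfun B x (j-1) :=
        fun j => key3 _ _ _ _ _ (hjump j) (gfun_jump B x j hn1)
      have hconst := const_of_step (fun j => gh j + gfun B x j) hstep
      have hrepr : ∀ j, gh j = (gh 0 + gfun B x 0) + gfun B x j :=
        fun j => key4 _ _ _ (hconst j)
      have hsol : ∀ j : ZMod (2*n), ∑ c : Reps B, Mt B c.val j * x c = 0 := by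
        intro j
        have hk : (j - 1 : ZMod (2*n)) + 1 = j := by ring
        have e2 := gfun_step B x (j-1, false) hn1
        have hepj : ep ((j-1, false) : ZMod (2*n) × Bool) = j := hk
        rw [hepj] at e2
        have hginv := hg (j-1, false) (Phi B (j-1, false)) (Or.inl rfl)
        have h1 : gh (j-1) = gh ((Phi B (j-1, false)).1) := hginv.trans (hflip _)
        rw [hrepr (j-1), hrepr ((Phi B (j-1, false)).1)] at h1
        rw [e2] at h1
        have hS := key5 _ _ _ h1
        rw [← hS]
        exact Finset.sum_congr rfl fun c _ => mul_comm _ _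
      refine ⟨(gh 0 + gfun B x 0, ⟨x, hsol⟩), ?_⟩
      apply Subtype.ext
      funext q
      show (gh 0 + gfun B x 0) + gfun B x q.1 = g q
      rw [hflip q]
      exact (hrepr q.1).symm
  have hcard := Nat.card_eq_of_bijective F hFbij
  rw [← hcard, Nat.card_prod, Nat.card_zmod]

lemma pow_numBoundary (hn : n ≠ 0) :
    2 ^ (numBoundary B) = 2 * Nat.card (Sol B) := by
  have hn1 : 1 ≤ n := by omega
  have htwo : ∀ a : ZMod 2, a + a = 0 := by decide
  obtain ⟨x0, hx0⟩ := mt_all B hn1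
  set d : ZMod (2*n) × Bool → ZMod 2 :=
    fun q => (if q.2 then 1 else 0) + gfun B x0 q.1 with hdd
  have hd : ∀ q, d (Phi B q) = d q := by
    intro q
    have e1 := tInd_step B q
    have e2 := gfun_step B x0 q hn1
    have e3 : ∑ c : Reps B, x0 c * Mt B c.val (ep q) = tInd B (ep q) := by
      rw [← hx0 (ep q)]
      exact Finset.sum_congr rfl fun c _ => mul_comm _ _
    rw [e3] at e2
    show (if (Phi B q).2 then (1:ZMod 2) else 0) + gfun B x0 (Phi B q).1
        = (if q.2 then (1:ZMod 2) else 0) + gfun B x0 q.1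
    rw [e1, e2]
    linear_combination htwo (tInd B (ep q))
  have hdR : ∀ q, d (RR q) = d q + 1 := by
    intro q
    obtain ⟨i, s⟩ := q
    have k1 : ∀ g : ZMod 2, 1 + g = (0 + g) + 1 := by decide
    have k2 : ∀ g : ZMod 2, 0 + g = (1 + g) + 1 := by decide
    cases s
    · show (1 : ZMod 2) + gfun B x0 i = ((0 : ZMod 2) + gfun B x0 i) + 1
      exact k1 _
    · show (0 : ZMod 2) + gfun B x0 i = ((1 : ZMod 2) + gfun B x0 i) + 1
      exact k2 _
  have hdg : ∀ q, d (RR q) ≠ d q := by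
    intro q hEq
    rw [hdR q] at hEq
    have : (1 : ZMod 2) = 0 := by linear_combination hEq
    exact one_ne_zero this
  have hpair := relClasses_pairing (Phi B) RR (phi_rr_phi B) rr_invol d hd hdg
  have hnb : numBoundary B
      = relClasses (fun a b : ZMod (2*n) × Bool => Phi B a = b ∨ RR a = b) := by
    unfold numBoundary
    rw [if_neg hn]
    unfold orbitCount
    rw [hpair]
    omega
  have hsym := card_invariant (α := ZMod (2*n) × Bool)
    (fun a b => Phi B a = b ∨ RR a = b)
  rw [← hnb] at hsym
  rw [← hsym]
  exact sol_bij B hn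

end Count

section MoreChord

variable {n : ℕ} (B : Bouquet n)

lemma sameChord_trans {i j k : ZMod (2*n)} (h1 : SameChord B i j)
    (h2 : SameChord B j k) : SameChord B i k := by
  rcases h1 with h1 | h1 <;> rcases h2 with h2 | h2 <;> subst h1 <;>
    first
      | exact Or.inl h2
      | exact Or.inr h2
      | (exact Or.inl (by rw [h2, B.invol]))
      | (exact Or.inr (by rw [h2]))
  -- leftover case: k = σ j, j = σ i: k = σ (σ i) = i

lemma t_same {i j : ZMod (2*n)} (h : SameChord B i j) : B.t j = B.t i := by
  rcases h with h | h
  · rw [h]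
  · rw [h, B.t_inv]

lemma interlace_sigma_left (i j : ZMod (2*n)) :
    Interlace B (B.σ i) j ↔ Interlace B i j := by
  unfold Interlace
  rw [B.invol, min_comm ((B.σ i).val) (i.val), max_comm ((B.σ i).val) (i.val)]

lemma interlace_congr_left {i i' : ZMod (2*n)} (j : ZMod (2*n))
    (h : SameChord B i i') : (Interlace B i' j ↔ Interlace B i j) := by
  rcases h with h | h
  · rw [h]
  · rw [h, interlace_sigma_left]

lemma interlace_congr_right {j j' : ZMod (2*n)} (i : ZMod (2*n))
    (h : SameChord B j j') : (Interlace B i j' ↔ Interlace B i j) := by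
  rcases h with h | h
  · rw [h]
  · rw [h, interlace_sigma_right]

lemma reps_same_eq [NeZero (2*n)] {c d : Reps B} (h : SameChord B c.val d.val) :
    c = d := by
  rcases h with h | h
  · exact (Subtype.ext h).symm
  · exfalso
    have hc := c.2
    have hd := d.2
    rw [h, B.invol] at hd
    omega

lemma card_reps [NeZero (2*n)] : Nat.card (Reps B) = n := by
  classical
  have he : Reps B ≃ {j : ZMod (2*n) // ¬ j.val < (B.σ j).val} := by
    refine ⟨fun c => ⟨B.σ c.val, ?_⟩, fun d => ⟨B.σ d.val, ?_⟩, ?_, ?_⟩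
    · rw [B.invol]
      have := c.2
      omega
    · rw [B.invol]
      have hd := d.2
      have hne : (B.σ d.val).val ≠ d.val.val :=
        fun hv => B.fpf d.val (val_inj.mp hv)
      omega
    · intro c
      apply Subtype.ext
      exact B.invol c.val
    · intro d
      apply Subtype.ext
      exact B.invol d.val
  have h0 : Nat.card (Reps B) = Nat.card {j : ZMod (2*n) // j.val < (B.σ j).val} := rfl
  have h1 : Nat.card (Reps B) = Nat.card {j : ZMod (2*n) // ¬ j.val < (B.σ j).val} :=
    Nat.card_congr he
  have h2 : Nat.card {j : ZMod (2*n) // j.val < (B.σ j).val}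
      + Nat.card {j : ZMod (2*n) // ¬ j.val < (B.σ j).val} = 2*n := by
    simp only [Nat.card_eq_fintype_card]
    rw [Fintype.card_subtype_compl]
    have hle : Fintype.card {j : ZMod (2*n) // j.val < (B.σ j).val}
        ≤ Fintype.card (ZMod (2*n)) := Fintype.card_subtype_le _
    rw [ZMod.card] at *
    omega
  omega

end MoreChord

section Transport

variable {n₁ n₂ : ℕ} (B₁ : Bouquet n₁) (B₂ : Bouquet n₂)

lemma siso_transport [NeZero (2*n₁)] [NeZero (2*n₂)] (h : SIso B₁ B₂) :
    Nat.card (Sol B₁) = Nat.card (Sol B₂) ∧ n₁ = n₂ := by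
  classical
  obtain ⟨φ, hσ, hinj, hsurj, hint, ht⟩ := h
  set F : Reps B₁ → Reps B₂ := fun c => repOf B₂ (φ c.val) with hF
  have hFspec : ∀ c : Reps B₁, SameChord B₂ (φ c.val) (F c).val :=
    fun c => sameChord_symm B₂ (repOf_same B₂ (φ c.val))
  have hφsame : ∀ i j : ZMod (2*n₁), SameChord B₁ i j → SameChord B₂ (φ i) (φ j) := by
    intro i j hij
    rcases hij with hij | hij
    · subst hij; exact Or.inl rfl
    · subst hij; exact hσ i
  have hFinj : Function.Injective F := by
    intro c d hcd
    have h1 : SameChord B₂ (φ c.val) (φ d.val) := by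
      refine sameChord_trans B₂ (hFspec c) ?_
      rw [hcd]
      exact sameChord_symm B₂ (hFspec d)
    exact reps_same_eq B₁ (hinj _ _ h1)
  have hFsurj : Function.Surjective F := by
    intro e
    obtain ⟨i, hi⟩ := hsurj e.val
    refine ⟨repOf B₁ i, ?_⟩
    have h1 : SameChord B₁ (repOf B₁ i).val i := repOf_same B₁ i
    have h2 : SameChord B₂ (φ (repOf B₁ i).val) e.val :=
      sameChord_trans B₂ (hφsame _ _ h1) hi
    refine reps_same_eq B₂ ?_
    exact sameChord_trans B₂ (sameChord_symm B₂ (hFspec _)) h2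
  have hMt : ∀ c d : Reps B₁, Mt B₂ (F c).val (F d).val = Mt B₁ c.val d.val := by
    intro c d
    have hsciff : SameChord B₂ (F c).val (F d).val ↔ SameChord B₁ c.val d.val := by
      constructor
      · intro hsc
        refine hinj _ _ ?_
        refine sameChord_trans B₂ (hFspec c) ?_
        refine sameChord_trans B₂ hsc ?_
        exact sameChord_symm B₂ (hFspec d)
      · intro hsc
        rw [reps_same_eq B₁ hsc]
        exact Or.inl rfl
    by_cases hsc : SameChord B₁ c.val d.val
    · unfold Mt
      rw [if_pos hsc, if_pos (hsciff.mpr hsc)]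
      unfold tInd
      rw [t_same B₂ (hFspec d), ht]
    · unfold Mt
      rw [if_neg hsc, if_neg (fun hc => hsc (hsciff.mp hc))]
      have hI : Interlace B₂ (F c).val (F d).val ↔ Interlace B₁ c.val d.val := by
        rw [interlace_congr_left B₂ (F d).val (hFspec c),
          interlace_congr_right B₂ (φ c.val) (hFspec d)]
        exact (hint c.val d.val).symm
      rw [if_congr hI rfl rfl]
  set E : Reps B₁ ≃ Reps B₂ := Equiv.ofBijective F ⟨hFinj, hFsurj⟩ with hE
  have hEF : ∀ c, E c = F c := fun c => by rw [hE]; rfl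
  constructor
  · -- Sol bijection
    have hsolmap : ∀ x : Sol B₂, ∀ j : ZMod (2*n₁),
        ∑ c : Reps B₁, Mt B₁ c.val j * x.1 (E c) = 0 := by
      intro x j
      obtain ⟨d, hd⟩ : ∃ d : Reps B₁, j = d.val ∨ j = B₁.σ d.val :=
        ⟨repOf B₁ j, repOf_same B₁ j⟩
      have hred : ∀ c : Reps B₁, Mt B₁ c.val j = Mt B₂ (E c).val (E d).val := by
        intro c
        rcases hd with hj | hj <;> subst hj
        · rw [hEF, hEF, hMt]
        · rw [mt_sigma_right, hEF, hEF, hMt]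
      calc ∑ c : Reps B₁, Mt B₁ c.val j * x.1 (E c)
          = ∑ c : Reps B₁, Mt B₂ (E c).val (E d).val * x.1 (E c) := by
            exact Finset.sum_congr rfl fun c _ => by rw [hred c]
        _ = ∑ c₂ : Reps B₂, Mt B₂ c₂.val (E d).val * x.1 c₂ :=
            Equiv.sum_comp E (fun c₂ => Mt B₂ c₂.val (E d).val * x.1 c₂)
        _ = 0 := x.2 (E d).val
    have hsolmap' : ∀ x : Sol B₁, ∀ j : ZMod (2*n₂),
        ∑ c : Reps B₂, Mt B₂ c.val j * x.1 (E.symm c) = 0 := by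
      intro x j
      obtain ⟨d, hd⟩ : ∃ d : Reps B₂, j = d.val ∨ j = B₂.σ d.val :=
        ⟨repOf B₂ j, repOf_same B₂ j⟩
      have hred : ∀ c : Reps B₂, Mt B₂ c.val j = Mt B₁ (E.symm c).val (E.symm d).val := by
        intro c
        rcases hd with hj | hj <;> subst hj
        · rw [← hMt (E.symm c) (E.symm d), ← hEF, ← hEF,
            Equiv.apply_symm_apply, Equiv.apply_symm_apply]
        · rw [mt_sigma_right, ← hMt (E.symm c) (E.symm d), ← hEF, ← hEF,
            Equiv.apply_symm_apply, Equiv.apply_symm_apply]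
      calc ∑ c : Reps B₂, Mt B₂ c.val j * x.1 (E.symm c)
          = ∑ c : Reps B₂, Mt B₁ (E.symm c).val (E.symm d).val * x.1 (E.symm c) := by
            exact Finset.sum_congr rfl fun c _ => by rw [hred c]
        _ = ∑ c₁ : Reps B₁, Mt B₁ c₁.val (E.symm d).val * x.1 c₁ :=
            Equiv.sum_comp E.symm (fun c₁ => Mt B₁ c₁.val (E.symm d).val * x.1 c₁)
        _ = 0 := x.2 (E.symm d).val
    refine Nat.card_eq_of_bijective
      (fun x : Sol B₁ => (⟨fun c₂ => x.1 (E.symm c₂), hsolmap' x⟩ : Sol B₂)) ?_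
    constructor
    · intro x y hxy
      apply Subtype.ext
      funext c
      have := congrFun (congrArg Subtype.val hxy) (E c)
      simpa using this
    · intro y
      refine ⟨⟨fun c₁ => y.1 (E c₁), hsolmap y⟩, ?_⟩
      apply Subtype.ext
      funext c₂
      simp
  · have h1 := card_reps B₁
    have h2 := card_reps B₂
    have h3 := Nat.card_congr E
    omega

end Transport

section Zero

lemma no_small_fibers {α β : Type*} [Infinite α] [Finite β] (ψ : α → β)
    (h : ∀ a b c : α, ψ b = ψ a → ψ c = ψ a → b = c ∨ b = a ∨ c = a) : False := by
  obtain ⟨y, hy⟩ := Finite.exists_infinite_fiber ψ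
  haveI := hy
  let e := Infinite.natEmbedding (ψ ⁻¹' {y})
  have hval : ∀ k : ℕ, ψ (e k).val = y := fun k => (e k).2
  have h3 := h (e 0).val (e 1).val (e 2).val
    ((hval 1).trans (hval 0).symm) ((hval 2).trans (hval 0).symm)
  have hne : ∀ k l : ℕ, k ≠ l → ((e k : {x // x ∈ ψ ⁻¹' {y}}) : α) ≠ (e l : α) := by
    intro k l hkl hEq
    exact hkl (e.injective (Subtype.ext hEq))
  rcases h3 with h3 | h3 | h3
  · exact hne 1 2 (by omega) h3
  · exact hne 1 0 (by omega) h3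
  · exact hne 2 0 (by omega) h3

lemma fiber_le_two {m : ℕ} (Bx : Bouquet m) {a b c : ZMod (2*m)}
    (hb : SameChord Bx b a) (hc : SameChord Bx c a) : b = c ∨ b = a ∨ c = a := by
  rcases hb with h1 | h1 <;> rcases hc with h2 | h2
  · exact Or.inr (Or.inl h1.symm)
  · exact Or.inr (Or.inl h1.symm)
  · exact Or.inr (Or.inr h2.symm)
  · refine Or.inl ?_
    have hb' : b = Bx.σ a := by rw [h1, Bx.invol]
    have hc' : c = Bx.σ a := by rw [h2, Bx.invol]
    rw [hb', hc']

variable {n₁ n₂ : ℕ} (B₁ : Bouquet n₁) (B₂ : Bouquet n₂)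

lemma siso_zero (h : SIso B₁ B₂) (hn₁ : n₁ = 0) : n₂ = 0 := by
  subst hn₁
  by_contra hn₂
  haveI : NeZero (2*n₂) := ⟨by omega⟩
  haveI : Infinite (ZMod (2*0)) := (inferInstance : Infinite ℤ)
  obtain ⟨φ, hσ, hinj, hsurj, hint, ht⟩ := h
  classical
  refine no_small_fibers (fun i : ZMod (2*0) => repOf B₂ (φ i)) ?_
  intro a b c hb hc
  have hsc : ∀ u v : ZMod (2*0),
      repOf B₂ (φ u) = repOf B₂ (φ v) → SameChord B₁ u v := by
    intro u v huv
    apply hinj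
    refine sameChord_trans B₂ (sameChord_symm B₂ (repOf_same B₂ (φ u))) ?_
    rw [huv]
    exact repOf_same B₂ (φ v)
  exact fiber_le_two B₁ (hsc b a hb) (hsc c a hc)

lemma siso_zero' (h : SIso B₁ B₂) (hn₂ : n₂ = 0) : n₁ = 0 := by
  subst hn₂
  by_contra hn₁
  haveI : NeZero (2*n₁) := ⟨by omega⟩
  haveI : Infinite (ZMod (2*0)) := (inferInstance : Infinite ℤ)
  obtain ⟨φ, hσ, hinj, hsurj, hint, ht⟩ := h
  classical
  choose χ hχ using hsurj
  refine no_small_fibers (fun j : ZMod (2*0) => repOf B₁ (χ j)) ?_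
  intro a b c hb hc
  have hsc : ∀ u v : ZMod (2*0),
      repOf B₁ (χ u) = repOf B₁ (χ v) → SameChord B₂ u v := by
    intro u v huv
    have h1 : SameChord B₁ (χ u) (χ v) := by
      refine sameChord_trans B₁ (sameChord_symm B₁ (repOf_same B₁ (χ u))) ?_
      rw [huv]
      exact repOf_same B₁ (χ v)
    have h2 : SameChord B₂ (φ (χ u)) (φ (χ v)) := by
      rcases h1 with h1 | h1
      · rw [h1]
        exact Or.inl rfl
      · rw [h1]
        exact hσ (χ u)
    exact sameChord_trans B₂ (sameChord_symm B₂ (hχ u)) (sameChord_trans B₂ h2 (hχ v))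
  exact fiber_le_two B₂ (hsc b a hb) (hsc c a hc)

end Zero




/-- Bouquets with isomorphic signed intersection graphs have the same Euler genus;
equivalently (as they have the same number of chords) the same number of boundary
components. -/
theorem eulerGenus_eq_of_siso {n₁ n₂ : ℕ} (B₁ : Bouquet n₁) (B₂ : Bouquet n₂)
    (h : SIso B₁ B₂) :
    eulerGenus B₁ = eulerGenus B₂ ∧ numBoundary B₁ = numBoundary B₂ := by
  by_cases h1 : n₁ = 0
  · have h2 : n₂ = 0 := siso_zero B₁ B₂ h h1
    have e1 : numBoundary B₁ = 1 := by unfold numBoundary; rw [if_pos h1]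
    have e2 : numBoundary B₂ = 1 := by unfold numBoundary; rw [if_pos h2]
    refine ⟨?_, by rw [e1, e2]⟩
    unfold eulerGenus
    rw [e1, e2, h1, h2]
  · have h2 : n₂ ≠ 0 := fun hz => h1 (siso_zero' B₁ B₂ h hz)
    haveI : NeZero (2*n₁) := ⟨by omega⟩
    haveI : NeZero (2*n₂) := ⟨by omega⟩
    obtain ⟨hsol, hnn⟩ := siso_transport B₁ B₂ h
    have p1 := pow_numBoundary B₁ h1
    have p2 := pow_numBoundary B₂ h2
    rw [hsol] at p1
    have hnb : numBoundary B₁ = numBoundary B₂ :=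
      Nat.pow_right_injective (le_refl 2) (p1.trans p2.symm)
    refine ⟨?_, hnb⟩
    unfold eulerGenus
    rw [hnb, hnn]

end Bouquet
end

section
/- Let n ≥ 1 and let B be a bouquet with n + 1 chords, all untwisted, such that one chord c interlaces each of the other n chords while no two of the other n chords interlace each other (i.e. the signed intersection graph of B is the positive star with centre c and n leaves). Then ∂ε_B(z) = (2^{n+1} − 2)z² + 2. -/
open Polynomial
open scoped Classical

namespace Bouquet

variable {n : ℕ}

/-! ### Auxiliary lemmas for orbit counting -/

section Counting

lemma eqvGen_lift {α β : Type*} {r : α → α → Prop} {s : β → β → Prop} (g : α → β)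
    (hg : ∀ x y, r x y → Relation.EqvGen s (g x) (g y)) {x y : α}
    (h : Relation.EqvGen r x y) : Relation.EqvGen s (g x) (g y) := by
  induction h with
  | rel a b hab => exact hg a b hab
  | refl a => exact .refl _
  | symm a b _ ih => exact .symm _ _ ih
  | trans a b c _ _ ih1 ih2 => exact .trans _ _ _ ih1 ih2

lemma relClasses_eq_card {α β : Type*} (r : α → α → Prop) (ℓ : α → β)
    (h1 : ∀ x y, r x y → ℓ x = ℓ y)
    (h2 : Function.Surjective ℓ)
    (h3 : ∀ x y, ℓ x = ℓ y → Relation.EqvGen r x y) :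
    relClasses r = Nat.card β := by
  apply Nat.card_congr
  have hconst : ∀ a b : α, Relation.EqvGen r a b → ℓ a = ℓ b := by
    intro a b h
    induction h with
    | rel a b hab => exact h1 a b hab
    | refl a => rfl
    | symm a b _ ih => exact ih.symm
    | trans a b c _ _ ih1 ih2 => exact ih1.trans ih2
  refine Equiv.ofBijective (Quotient.lift ℓ hconst) ⟨?_, ?_⟩
  · intro qa qb
    induction qa using Quotient.inductionOn with
    | h a =>
      induction qb using Quotient.inductionOn with
      | h b =>
        intro h
        exact Quotient.sound (h3 a b h)
  · intro b
    obtain ⟨a, ha⟩ := h2 b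
    exact ⟨Quotient.mk _ a, ha⟩

end Counting
section NumBoundary

lemma numBoundary_eq_card {m : ℕ} (hm : m ≠ 0) (B : Bouquet m)
    (ht : ∀ i, B.t i = false) {β : Type*} (ℓ : ZMod (2*m) → β)
    (h1 : ∀ x, ℓ (B.σ (x+1)) = ℓ x)
    (h2 : Function.Surjective ℓ)
    (h3 : ∀ x y, ℓ x = ℓ y → Relation.EqvGen (fun a b => B.σ (a+1) = b) x y) :
    numBoundary B = Nat.card β := by
  have hΦf : ∀ i, Phi B (i, false) = (B.σ (i+1), false) := by
    intro i; simp [Phi, ht]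
  have hΦt : ∀ i, Phi B (i, true) = (B.σ i - 1, true) := by
    intro i; simp [Phi, ht]
  have key : relClasses (fun p q => Phi B p = q) = Nat.card (β × Bool) := by
    apply relClasses_eq_card _ (fun p => (ℓ p.1, p.2))
    · rintro ⟨x, bx⟩ q hq
      cases bx
      · rw [hΦf] at hq; subst hq; simp [h1]
      · rw [hΦt] at hq; subst hq
        have := h1 (B.σ x - 1)
        rw [sub_add_cancel, B.invol] at this
        simp [this]
    · rintro ⟨b, bb⟩
      obtain ⟨x, hx⟩ := h2 b
      exact ⟨(x, bb), by simp [hx]⟩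
    · rintro ⟨x, bx⟩ ⟨y, by'⟩ hxy
      simp only [Prod.mk.injEq] at hxy
      obtain ⟨hℓ, hb⟩ := hxy
      subst hb
      have E := h3 x y hℓ
      cases bx
      · refine eqvGen_lift (fun a => (a, false)) ?_ E
        intro a b hab
        exact Relation.EqvGen.rel _ _ (by rw [hΦf, hab])
      · refine eqvGen_lift (fun a => (a, true)) ?_ E
        intro a b hab
        refine Relation.EqvGen.symm _ _ (Relation.EqvGen.rel _ _ ?_)
        rw [hΦt, ← hab, B.invol]
        simp
  have : numBoundary B = orbitCount (Phi B) / 2 := by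
    rw [numBoundary, if_neg hm]
  rw [this, orbitCount, key, Nat.card_prod]
  simp only [Nat.card_eq_fintype_card, Fintype.card_bool]
  omega

end NumBoundary
section CNext

variable {M : ℕ}

/-- Cyclic successor within a finite subset of `ZMod M`. -/
noncomputable def cnext (S : Finset (ZMod M)) (y : ZMod M) : ZMod M :=
  if h : ∃ k : ℕ, 0 < k ∧ y + ((k : ℕ) : ZMod M) ∈ S then
    y + ((Nat.find h : ℕ) : ZMod M) else y

lemma cnext_eq {S : Finset (ZMod M)} {y : ZMod M} {d : ℕ} (hd : 0 < d)
    (hmem : y + ((d : ℕ) : ZMod M) ∈ S)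
    (hmin : ∀ k : ℕ, 0 < k → k < d → y + ((k : ℕ) : ZMod M) ∉ S) :
    cnext S y = y + ((d : ℕ) : ZMod M) := by
  have hex : ∃ k : ℕ, 0 < k ∧ y + ((k : ℕ) : ZMod M) ∈ S := ⟨d, hd, hmem⟩
  rw [cnext, dif_pos hex]
  have h1 := Nat.find_spec hex
  have hle : Nat.find hex ≤ d := Nat.find_le ⟨hd, hmem⟩
  have heq : Nat.find hex = d := by
    rcases lt_or_eq_of_le hle with hlt | he
    · exact absurd h1.2 (hmin _ h1.1 hlt)
    · exact he
  rw [heq]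

lemma cnext_mem [NeZero M] {S : Finset (ZMod M)} {y : ZMod M} (hy : y ∈ S) :
    cnext S y ∈ S := by
  have hex : ∃ k : ℕ, 0 < k ∧ y + ((k : ℕ) : ZMod M) ∈ S :=
    ⟨M, Nat.pos_of_ne_zero (NeZero.ne M), by simp [ZMod.natCast_self, hy]⟩
  rw [cnext, dif_pos hex]
  exact (Nat.find_spec hex).2

lemma cnext_orderIso {M m : ℕ} [NeZero M] (hm : 0 < 2*m) (S : Finset (ZMod M))
    (S' : Finset (Fin M)) (hS' : ∀ k : Fin M, k ∈ S' ↔ ((k.val : ℕ) : ZMod M) ∈ S)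
    (hc : S'.card = 2*m) (j : Fin (2*m)) :
    cnext S (((S'.orderIsoOfFin hc j : Fin M).val : ℕ) : ZMod M)
      = (((S'.orderIsoOfFin hc ⟨(j.val+1) % (2*m), Nat.mod_lt _ hm⟩ : Fin M).val : ℕ) : ZMod M) := by
  set o := S'.orderIsoOfFin hc with ho
  have hmemS : ∀ l : Fin (2*m), (((o l : Fin M).val : ℕ) : ZMod M) ∈ S :=
    fun l => (hS' _).1 (o l).2
  have hsurj : ∀ a : Fin M, a ∈ S' → ∃ l, (o l : Fin M) = a :=
    fun a ha => ⟨o.symm ⟨a, ha⟩, by simp⟩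
  have hlt : ∀ l l' : Fin (2*m), l < l' → (o l : Fin M) < (o l' : Fin M) := by
    intro l l' h
    exact Subtype.coe_lt_coe.2 (o.lt_iff_lt.2 h)
  have hle : ∀ l l' : Fin (2*m), l ≤ l' → (o l : Fin M) ≤ (o l' : Fin M) := by
    intro l l' h
    exact Subtype.coe_le_coe.2 (o.le_iff_le.2 h)
  rcases Nat.lt_or_ge (j.val+1) (2*m) with h | h
  · -- non-wrapping case
    have hjlt : j < (⟨j.val+1, h⟩ : Fin (2*m)) := Fin.lt_def.2 (by show j.val < j.val + 1; omega)
    have hidx : (⟨(j.val+1) % (2*m), Nat.mod_lt _ hm⟩ : Fin (2*m)) = (⟨j.val+1, h⟩ : Fin (2*m)) :=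
      Fin.ext (by simp [Nat.mod_eq_of_lt h])
    rw [hidx]
    obtain ⟨a, hadef⟩ : ∃ a : Fin M, (o j : Fin M) = a := ⟨_, rfl⟩
    obtain ⟨b, hbdef⟩ : ∃ b : Fin M, (o ⟨j.val+1, h⟩ : Fin M) = b := ⟨_, rfl⟩
    rw [hadef, hbdef]
    have hab : a < b := by rw [← hadef, ← hbdef]; exact hlt _ _ hjlt
    have habv : a.val < b.val := hab
    have hsum : ((a.val : ℕ) : ZMod M) + ((b.val - a.val : ℕ) : ZMod M) = ((b.val : ℕ) : ZMod M) := by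
      rw [← Nat.cast_add]; congr 1; omega
    rw [cnext_eq (d := b.val - a.val) (by omega)
      (by rw [hsum, ← hbdef]; exact hmemS _) ?hmin, hsum]
    case hmin =>
      intro k hk0 hkd hmem
      have hv : a.val + k < M := by have := b.isLt; omega
      rw [← Nat.cast_add] at hmem
      have hfin : (⟨a.val + k, hv⟩ : Fin M) ∈ S' := (hS' ⟨a.val + k, hv⟩).2 hmem
      obtain ⟨l, hl⟩ := hsurj _ hfin
      have h1 : (o j : Fin M) < (o l : Fin M) := by
        rw [hl, hadef]; exact Fin.lt_def.2 (by simp; omega)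
      have h2 : (o l : Fin M) < (o ⟨j.val+1, h⟩ : Fin M) := by
        rw [hl, hbdef]; exact Fin.lt_def.2 (by simp; omega)
      have hj1 : j < l := o.lt_iff_lt.1 (Subtype.coe_lt_coe.1 h1)
      have hj2 : l < (⟨j.val+1, h⟩ : Fin (2*m)) := o.lt_iff_lt.1 (Subtype.coe_lt_coe.1 h2)
      have e1 : j.val < l.val := hj1
      have e2 : l.val < j.val + 1 := hj2
      omega
  · -- wrapping case
    have hj : j.val + 1 = 2*m := by have := j.isLt; omega
    have hidx : (⟨(j.val+1) % (2*m), Nat.mod_lt _ hm⟩ : Fin (2*m)) = ⟨0, hm⟩ :=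
      Fin.ext (by simp [hj])
    rw [hidx]
    have hmax : ∀ l, (o l : Fin M) ≤ (o j : Fin M) := by
      intro l
      exact hle l j (Fin.le_def.2 (by have := l.isLt; omega))
    have hminb : ∀ l, (o ⟨0, hm⟩ : Fin M) ≤ (o l : Fin M) := by
      intro l
      have h0 : (⟨0, hm⟩ : Fin (2*m)).val = 0 := rfl
      exact hle ⟨0, hm⟩ l (Fin.le_def.2 (by omega))
    obtain ⟨a, hadef⟩ : ∃ a : Fin M, (o j : Fin M) = a := ⟨_, rfl⟩
    obtain ⟨b, hbdef⟩ : ∃ b : Fin M, (o ⟨0, hm⟩ : Fin M) = b := ⟨_, rfl⟩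
    rw [hadef, hbdef]
    have haM := a.isLt
    have hbM := b.isLt
    have hsum : ((a.val : ℕ) : ZMod M) + ((M - a.val + b.val : ℕ) : ZMod M) = ((b.val : ℕ) : ZMod M) := by
      rw [← Nat.cast_add]
      have heq : a.val + (M - a.val + b.val) = M + b.val := by omega
      rw [heq, Nat.cast_add, ZMod.natCast_self, zero_add]
    rw [cnext_eq (d := M - a.val + b.val) (by omega)
      (by rw [hsum, ← hbdef]; exact hmemS _) ?hmin, hsum]
    case hmin =>
      intro k hk0 hkd hmem
      rw [← Nat.cast_add] at hmem
      by_cases hvM : a.val + k < M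
      · have hfin : (⟨a.val + k, hvM⟩ : Fin M) ∈ S' := (hS' ⟨a.val + k, hvM⟩).2 hmem
        obtain ⟨l, hl⟩ := hsurj _ hfin
        have h1 := hmax l
        rw [hl, hadef] at h1
        have : a.val + k ≤ a.val := h1
        omega
      · have hcast : ((a.val + k : ℕ) : ZMod M) = ((a.val + k - M : ℕ) : ZMod M) := by
          have heq : a.val + k = (a.val + k - M) + M := by omega
          conv_lhs => rw [heq]
          rw [Nat.cast_add, ZMod.natCast_self, add_zero]
        rw [hcast] at hmem
        have hv2 : a.val + k - M < b.val := by omega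
        have hvlt : a.val + k - M < M := by omega
        have hfin : (⟨a.val + k - M, hvlt⟩ : Fin M) ∈ S' := (hS' ⟨a.val + k - M, hvlt⟩).2 hmem
        obtain ⟨l, hl⟩ := hsurj _ hfin
        have h1 := hminb l
        rw [hl, hbdef] at h1
        have : b.val ≤ a.val + k - M := h1
        omega

end CNext
section RestrictCount

lemma numBoundary_restrict {n : ℕ} (B : Bouquet n) (S : Finset (ZMod (2*n)))
    (hn : n ≠ 0) (hS0 : S.card / 2 ≠ 0) (hSc : S.card = 2 * (S.card / 2))
    (hSinv : ∀ i ∈ S, B.σ i ∈ S) (ht : ∀ i, B.t i = false)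
    {β : Type*} (ℓ₀ : {x : ZMod (2*n) // x ∈ S} → β)
    (h1 : ∀ p q : {x : ZMod (2*n) // x ∈ S},
        (q : ZMod (2*n)) = B.σ (cnext S (p : ZMod (2*n))) → ℓ₀ q = ℓ₀ p)
    (h2 : Function.Surjective ℓ₀)
    (h3 : ∀ p q : {x : ZMod (2*n) // x ∈ S}, ℓ₀ p = ℓ₀ q →
        Relation.EqvGen (fun a b : {x : ZMod (2*n) // x ∈ S} =>
          (b : ZMod (2*n)) = B.σ (cnext S (a : ZMod (2*n)))) p q) :
    numBoundary (B.restrict S) = Nat.card β := by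
  haveI i1 : NeZero (2*n) := ⟨by omega⟩
  haveI i2 : NeZero (2*(S.card/2)) := ⟨by omega⟩
  have h : n ≠ 0 ∧ S.card / 2 ≠ 0 ∧ S.card = 2 * (S.card / 2) ∧ ∀ i ∈ S, B.σ i ∈ S :=
    ⟨hn, hS0, hSc, hSinv⟩
  have hm2 : 0 < 2 * (S.card/2) := by omega
  have h1lt : 1 < 2 * (S.card/2) := by omega
  set E := zmodFinEquiv (2*n) with hE
  set S' : Finset (Fin (2*n)) := S.image E with hS'def
  have hc : S'.card = 2*(S.card/2) := by
    rw [hS'def, Finset.card_image_of_injective _ E.injective]; exact hSc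
  have hiff : ∀ a : Fin (2*n), a ∈ S' ↔ (E.symm a : ZMod (2*n)) ∈ S := by
    intro a
    rw [hS'def, Finset.mem_image]
    constructor
    · rintro ⟨b, hb, rfl⟩; simpa using hb
    · intro ha; exact ⟨E.symm a, ha, by simp⟩
  set e : ZMod (2*(S.card/2)) ≃ {x : ZMod (2*n) // x ∈ S} :=
    (zmodFinEquiv (2*(S.card/2))).trans
      ((S'.orderIsoOfFin hc).toEquiv.trans (Equiv.subtypeEquiv E.symm hiff)) with hedef
  have hres : numBoundary (B.restrict S) = numBoundary (transport h.2.1 B S h.2.2.2 e) := by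
    congr 1
    rw [restrict, dif_pos h]
  rw [hres]
  -- the key successor property of `e`
  have hS'mem : ∀ k : Fin (2*n), k ∈ S' ↔ ((k.val : ℕ) : ZMod (2*n)) ∈ S := by
    intro k
    rw [hiff k]
    rfl
  have hcoe : ∀ z : ZMod (2*(S.card/2)), ((e z : {x : ZMod (2*n) // x ∈ S}) : ZMod (2*n))
      = (((S'.orderIsoOfFin hc (zmodFinEquiv (2*(S.card/2)) z) : Fin (2*n)).val : ℕ) : ZMod (2*n)) := by
    intro z
    rfl
  have hKEY : ∀ x : ZMod (2*(S.card/2)),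
      ((e (x+1) : {x : ZMod (2*n) // x ∈ S}) : ZMod (2*n))
        = cnext S ((e x : {x : ZMod (2*n) // x ∈ S}) : ZMod (2*n)) := by
    intro x
    haveI : Fact (1 < 2*(S.card/2)) := ⟨h1lt⟩
    have hvv : (zmodFinEquiv (2*(S.card/2)) x).val = x.val := rfl
    have hidx : (zmodFinEquiv (2*(S.card/2))) (x+1)
        = ⟨((zmodFinEquiv (2*(S.card/2)) x).val + 1) % (2*(S.card/2)), Nat.mod_lt _ hm2⟩ := by
      apply Fin.ext
      show (x+1).val = ((zmodFinEquiv (2*(S.card/2)) x).val + 1) % (2*(S.card/2))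
      rw [hvv, ZMod.val_add, ZMod.val_one]
    rw [hcoe, hcoe, hidx]
    exact (cnext_orderIso (m := S.card/2) hm2 S S' hS'mem hc (zmodFinEquiv (2*(S.card/2)) x)).symm
  have hσ' : ∀ x, (transport h.2.1 B S h.2.2.2 e).σ x
      = e.symm ⟨B.σ ((e x : {x : ZMod (2*n) // x ∈ S}) : ZMod (2*n)), h.2.2.2 _ (e x).2⟩ :=
    fun _ => rfl
  apply numBoundary_eq_card h.2.1 _ (fun i => ht _) (fun x => ℓ₀ (e x))
  · intro x
    rw [hσ', Equiv.apply_symm_apply]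
    refine h1 (e x) _ ?_
    show B.σ ((e (x+1) : {x : ZMod (2*n) // x ∈ S}) : ZMod (2*n)) = _
    exact congrArg B.σ (hKEY x)
  · intro b
    obtain ⟨p, hp⟩ := h2 b
    exact ⟨e.symm p, by simp [hp]⟩
  · intro x y hxy
    have hEG := h3 (e x) (e y) hxy
    have := eqvGen_lift (s := fun a b => (transport h.2.1 B S h.2.2.2 e).σ (a+1) = b) e.symm ?_ hEG
    · simpa using this
    · intro p q hpq
      apply Relation.EqvGen.rel
      rw [hσ']
      apply Equiv.congr_arg
      apply Subtype.ext
      show B.σ ((e (e.symm p + 1) : {x : ZMod (2*n) // x ∈ S}) : ZMod (2*n)) = (q : ZMod (2*n))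
      rw [hpq]
      have hk := hKEY (e.symm p)
      rw [Equiv.apply_symm_apply] at hk
      exact congrArg B.σ hk

end RestrictCount
section StarStructure

lemma star_structure_aux {n : ℕ} (hn : 1 ≤ n) (B : Bouquet (n+1)) (c : ZMod (2*(n+1)))
    (hcentre : ∀ j, ¬ SameChord B c j → Interlace B c j)
    (hleaves : ∀ j k, ¬ SameChord B c j → ¬ SameChord B c k → ¬ SameChord B j k →
      ¬ Interlace B j k)
    (hlt : c.val < (B.σ c).val) :
    B.σ c = c + ((n+1 : ℕ) : ZMod (2*(n+1))) ∧
      ∀ i : ℕ, 1 ≤ i → i ≤ n → B.σ (c + (i : ZMod (2*(n+1)))) = c - (i : ZMod (2*(n+1))) := by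
  haveI : NeZero (2*(n+1)) := ⟨by omega⟩
  have hNc : c.val < 2*(n+1) := ZMod.val_lt c
  have hNσc : (B.σ c).val < 2*(n+1) := ZMod.val_lt _
  have hinj : ∀ a b : ZMod (2*(n+1)), B.σ a = B.σ b → a = b := by
    intro a b hab
    have h2 := congrArg B.σ hab
    rwa [B.invol, B.invol] at h2
  have hvinj : ∀ a b : ZMod (2*(n+1)), a.val = b.val → a = b := by
    intro a b hab
    have h1 : ((a.val : ℕ) : ZMod (2*(n+1))) = ((b.val : ℕ) : ZMod (2*(n+1))) := by rw [hab]
    rwa [ZMod.natCast_rightInverse a, ZMod.natCast_rightInverse b] at h1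
  have hmod : ∀ a : ℕ, a < 2*(2*(n+1)) →
      a % (2*(n+1)) = if a < 2*(n+1) then a else a - 2*(n+1) := by
    intro a ha
    split
    · exact Nat.mod_eq_of_lt ‹_›
    · rw [Nat.mod_eq_sub_mod (by omega), Nat.mod_eq_of_lt (by omega)]
  have hvalo : ∀ o : ℕ, o < 2*(n+1) → (c + (o : ZMod (2*(n+1)))).val
      = if c.val + o < 2*(n+1) then c.val + o else c.val + o - 2*(n+1) := by
    intro o ho
    rw [ZMod.val_add, ZMod.val_cast_of_lt ho, hmod _ (by omega)]
  have hoff : ∀ o₁ o₂ : ℕ, o₁ < 2*(n+1) → o₂ < 2*(n+1) →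
      ((c + (o₁ : ZMod (2*(n+1))) = c + (o₂ : ZMod (2*(n+1)))) ↔ o₁ = o₂) := by
    intro o₁ o₂ h1 h2
    constructor
    · intro h
      have h3 := add_left_cancel h
      have h4 := congrArg ZMod.val h3
      rwa [ZMod.val_cast_of_lt h1, ZMod.val_cast_of_lt h2] at h4
    · rintro rfl; rfl
  have hofs : ∀ z : ZMod (2*(n+1)), z = c + (((z - c).val : ℕ) : ZMod (2*(n+1))) := by
    intro z
    rw [ZMod.natCast_rightInverse (z - c)]
    ring
  have hXor : ∀ z, ¬ SameChord B c z →
      ((c.val < z.val ∧ z.val < (B.σ c).val) ∧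
          ¬(c.val < (B.σ z).val ∧ (B.σ z).val < (B.σ c).val)) ∨
       ((c.val < (B.σ z).val ∧ (B.σ z).val < (B.σ c).val) ∧
          ¬(c.val < z.val ∧ z.val < (B.σ c).val)) := by
    intro z hz
    have h := hcentre z hz
    simp only [Interlace, Xor', min_eq_left (le_of_lt hlt), max_eq_right (le_of_lt hlt)] at h
    exact h
  have hXleft : ∀ z : ZMod (2*(n+1)), c.val < z.val → z.val < (B.σ c).val →
      ¬ SameChord B c z := by
    intro z h1 h2 hs
    rcases hs with rfl | rfl <;> omega
  -- Part 1 : counting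
  set D := Finset.univ.filter
      (fun z : ZMod (2*(n+1)) => c.val < z.val ∧ z.val < (B.σ c).val) with hD
  set D₂ := Finset.univ.filter
      (fun z : ZMod (2*(n+1)) =>
        ¬(c.val < z.val ∧ z.val < (B.σ c).val) ∧ z ≠ c ∧ z ≠ B.σ c) with hD2
  have hDcard : D.card = (B.σ c).val - c.val - 1 := by
    rw [← Nat.card_Ioo]
    apply Finset.card_bij' (i := fun z _ => z.val)
      (j := fun o _ => ((o : ℕ) : ZMod (2*(n+1))))
    · intro z hz
      rw [hD, Finset.mem_filter] at hz
      rw [Finset.mem_Ioo]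
      exact hz.2
    · intro o ho
      rw [Finset.mem_Ioo] at ho
      rw [hD, Finset.mem_filter]
      refine ⟨Finset.mem_univ _, ?_⟩
      rw [ZMod.val_cast_of_lt (by omega)]
      exact ho
    · intro z hz
      exact ZMod.natCast_rightInverse z
    · intro o ho
      rw [Finset.mem_Ioo] at ho
      exact ZMod.val_cast_of_lt (by omega)
  have hcount := Finset.card_filter_add_card_filter_not
      (s := (Finset.univ : Finset (ZMod (2*(n+1)))))
      (p := fun z => c.val < z.val ∧ z.val < (B.σ c).val)
  have huniv : (Finset.univ : Finset (ZMod (2*(n+1)))).card = 2*(n+1) := by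
    rw [Finset.card_univ, ZMod.card]
  have hσcne : B.σ c ≠ c := B.fpf c
  have hD2eq : D₂ = ((Finset.univ.filter
      (fun z : ZMod (2*(n+1)) =>
        ¬(c.val < z.val ∧ z.val < (B.σ c).val))).erase (B.σ c)).erase c := by
    ext z
    simp only [hD2, Finset.mem_filter, Finset.mem_erase, Finset.mem_univ, true_and]
    tauto
  have hcmem : c ∈ (Finset.univ.filter
      (fun z : ZMod (2*(n+1)) =>
        ¬(c.val < z.val ∧ z.val < (B.σ c).val))).erase (B.σ c) := by
    rw [Finset.mem_erase]
    refine ⟨fun h => hσcne h.symm, ?_⟩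
    rw [Finset.mem_filter]
    exact ⟨Finset.mem_univ _, by omega⟩
  have hσcmem : B.σ c ∈ Finset.univ.filter
      (fun z : ZMod (2*(n+1)) => ¬(c.val < z.val ∧ z.val < (B.σ c).val)) := by
    rw [Finset.mem_filter]
    exact ⟨Finset.mem_univ _, by omega⟩
  have hD2card : D₂.card = 2*(n+1) - ((B.σ c).val - c.val - 1) - 2 := by
    rw [hD2eq, Finset.card_erase_of_mem hcmem, Finset.card_erase_of_mem hσcmem]
    rw [← hD] at hcount
    omega
  have hbij : D.card = D₂.card := by
    apply Finset.card_bij' (i := fun z _ => B.σ z) (j := fun z _ => B.σ z)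
    · intro z hz
      rw [hD, Finset.mem_filter] at hz
      have hns := hXleft z hz.2.1 hz.2.2
      have hX := hXor z hns
      rw [hD2, Finset.mem_filter]
      refine ⟨Finset.mem_univ _, ?_, ?_, ?_⟩
      · rcases hX with ⟨_, hb⟩ | ⟨_, ha⟩
        · exact hb
        · exact absurd hz.2 ha
      · intro h
        have h2 : z = B.σ c := by rw [← B.invol z, h]
        rw [h2] at hz
        omega
      · intro h
        have h2 := hinj _ _ h
        rw [h2] at hz
        omega
    · intro z hz
      rw [hD2, Finset.mem_filter] at hz
      have hns : ¬ SameChord B c z := by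
        rintro (rfl | rfl)
        · exact hz.2.2.1 rfl
        · exact hz.2.2.2 rfl
      have hX := hXor z hns
      rw [hD, Finset.mem_filter]
      refine ⟨Finset.mem_univ _, ?_⟩
      rcases hX with ⟨ha, _⟩ | ⟨hb, _⟩
      · exact absurd ha hz.2.1
      · exact hb
    · intro z _; exact B.invol z
    · intro z _; exact B.invol z
  have hkey : (B.σ c).val = c.val + (n+1) := by omega
  have part1 : B.σ c = c + ((n+1 : ℕ) : ZMod (2*(n+1))) := by
    apply hvinj
    rw [hvalo (n+1) (by omega), if_pos (by omega)]
    omega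
  -- partner representation lemmas
  have hsubc : ∀ s : ℕ, s ≤ 2*(n+1) →
      c + (((2*(n+1) - s : ℕ)) : ZMod (2*(n+1))) = c - ((s : ℕ) : ZMod (2*(n+1))) := by
    intro s h2
    rw [Nat.cast_sub h2, ZMod.natCast_self]
    ring
  have hrepin : ∀ z, ¬ SameChord B c z →
      (c.val < (B.σ z).val ∧ (B.σ z).val < (B.σ c).val) →
      ∃ o : ℕ, 1 ≤ o ∧ o ≤ n ∧ B.σ z = c + ((o : ℕ) : ZMod (2*(n+1))) := by
    intro z hz hin
    have hoN : (B.σ z - c).val < 2*(n+1) := ZMod.val_lt _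
    have hzo : B.σ z = c + (((B.σ z - c).val : ℕ) : ZMod (2*(n+1))) := hofs (B.σ z)
    have hvz : (B.σ z).val = if c.val + (B.σ z - c).val < 2*(n+1)
        then c.val + (B.σ z - c).val else c.val + (B.σ z - c).val - 2*(n+1) := by
      conv_lhs => rw [hzo]
      exact hvalo _ hoN
    rw [hkey] at hin
    have hobound : 1 ≤ (B.σ z - c).val ∧ (B.σ z - c).val ≤ n := by
      split at hvz <;> omega
    exact ⟨(B.σ z - c).val, hobound.1, hobound.2, hzo⟩
  have hrepout : ∀ z, ¬ SameChord B c z →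
      ¬(c.val < (B.σ z).val ∧ (B.σ z).val < (B.σ c).val) →
      ∃ s : ℕ, 1 ≤ s ∧ s ≤ n ∧ B.σ z = c + (((2*(n+1) - s : ℕ)) : ZMod (2*(n+1))) := by
    intro z hz hout
    have hoN : (B.σ z - c).val < 2*(n+1) := ZMod.val_lt _
    have hzo : B.σ z = c + (((B.σ z - c).val : ℕ) : ZMod (2*(n+1))) := hofs (B.σ z)
    have hvz : (B.σ z).val = if c.val + (B.σ z - c).val < 2*(n+1)
        then c.val + (B.σ z - c).val else c.val + (B.σ z - c).val - 2*(n+1) := by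
      conv_lhs => rw [hzo]
      exact hvalo _ hoN
    have ho0 : (B.σ z - c).val ≠ 0 := by
      intro h0
      apply hz
      right
      rw [h0] at hzo
      simp only [Nat.cast_zero, add_zero] at hzo
      rw [← hzo, B.invol]
    have hon1 : (B.σ z - c).val ≠ n+1 := by
      intro h0
      apply hz
      left
      have h2 : B.σ z = B.σ c := by rw [hzo, h0, ← part1]
      exact hinj _ _ h2
    have honotmid : ¬(1 ≤ (B.σ z - c).val ∧ (B.σ z - c).val ≤ n) := by
      rintro ⟨h1, h2⟩
      apply hout
      rw [hkey]
      split at hvz <;> omega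
    have hs2 : n+2 ≤ (B.σ z - c).val := by omega
    refine ⟨2*(n+1) - (B.σ z - c).val, by omega, by omega, ?_⟩
    have hNo : 2*(n+1) - (2*(n+1) - (B.σ z - c).val) = (B.σ z - c).val := by omega
    rw [hNo]
    exact hzo
  refine ⟨part1, ?_⟩
  intro i
  induction i using Nat.strong_induction_on with
  | _ i IH =>
    intro h1i hin
    have hcval : c.val ≤ n := by omega
    have hiN : i < 2*(n+1) := by omega
    have hzc : ¬ SameChord B c (c + (i : ZMod (2*(n+1)))) := by
      rintro (h | h)
      · have h2 := (hoff i 0 hiN (by omega)).1 (by rw [h]; simp)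
        omega
      · rw [part1] at h
        have h2 := (hoff i (n+1) hiN (by omega)).1 h
        omega
    have hzin : c.val < (c + (i : ZMod (2*(n+1)))).val ∧
        (c + (i : ZMod (2*(n+1)))).val < (B.σ c).val := by
      rw [hvalo i hiN, if_pos (by omega), hkey]
      omega
    have hzout : ¬(c.val < (B.σ (c + (i : ZMod (2*(n+1))))).val ∧
        (B.σ (c + (i : ZMod (2*(n+1))))).val < (B.σ c).val) := by
      rcases hXor _ hzc with ⟨_, hb⟩ | ⟨_, ha⟩
      · exact hb
      · exact absurd hzin ha
    obtain ⟨s, hs1, hsn, hσz⟩ := hrepout _ hzc hzout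
    have hsgei : i ≤ s := by
      by_contra hlt2
      push_neg at hlt2
      have hIH := IH s hlt2 hs1 (by omega)
      rw [← hsubc s (by omega)] at hIH
      have h2 : c + ((s : ℕ) : ZMod (2*(n+1))) = c + ((i : ℕ) : ZMod (2*(n+1))) :=
        hinj _ _ (hIH.trans hσz.symm)
      have h3 := (hoff s i (by omega) hiN).1 h2
      omega
    rcases Nat.eq_or_lt_of_le hsgei with heq | hsgt
    · rw [hσz, hsubc s (by omega), heq]
    · exfalso
      have hNiN : 2*(n+1) - i < 2*(n+1) := by omega
      have hwc : ¬ SameChord B c (c + (((2*(n+1) - i : ℕ)) : ZMod (2*(n+1)))) := by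
        rintro (h | h)
        · have h2 := (hoff (2*(n+1)-i) 0 hNiN (by omega)).1 (by rw [h]; simp)
          omega
        · rw [part1] at h
          have h2 := (hoff (2*(n+1)-i) (n+1) hNiN (by omega)).1 h
          omega
      have hwout : ¬(c.val < (c + (((2*(n+1) - i : ℕ)) : ZMod (2*(n+1)))).val ∧
          (c + (((2*(n+1) - i : ℕ)) : ZMod (2*(n+1)))).val < (B.σ c).val) := by
        rw [hvalo _ hNiN, hkey]
        split <;> omega
      have hwin : c.val < (B.σ (c + (((2*(n+1) - i : ℕ)) : ZMod (2*(n+1))))).val ∧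
          (B.σ (c + (((2*(n+1) - i : ℕ)) : ZMod (2*(n+1))))).val < (B.σ c).val := by
        rcases hXor _ hwc with ⟨ha, _⟩ | ⟨hb, _⟩
        · exact absurd ha hwout
        · exact hb
      obtain ⟨j', hj1, hjn, hσw⟩ := hrepin _ hwc hwin
      have hji : j' ≠ i := by
        intro h
        have h2 : B.σ (B.σ (c + (((2*(n+1) - i : ℕ)) : ZMod (2*(n+1)))))
            = B.σ (c + (i : ZMod (2*(n+1)))) := by rw [hσw, h]
        rw [B.invol, hσz] at h2
        have h3 := (hoff (2*(n+1)-i) (2*(n+1)-s) hNiN (by omega)).1 h2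
        omega
      have hjgt : i < j' := by
        rcases Nat.lt_or_ge j' i with hlt3 | hge3
        · exfalso
          have hIH := IH j' hlt3 hj1 (by omega)
          have h2 : B.σ (c + ((j' : ℕ) : ZMod (2*(n+1))))
              = c + (((2*(n+1) - i : ℕ)) : ZMod (2*(n+1))) := by
            rw [← hσw, B.invol]
          rw [← hsubc j' (by omega)] at hIH
          have h3 := (hoff (2*(n+1)-j') (2*(n+1)-i) (by omega) hNiN).1 (hIH.symm.trans h2)
          omega
        · omega
      have hnsame : ¬ SameChord B (c + (i : ZMod (2*(n+1))))
          (c + (((2*(n+1) - i : ℕ)) : ZMod (2*(n+1)))) := by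
        rintro (h | h)
        · have h2 := (hoff (2*(n+1)-i) i hNiN hiN).1 h
          omega
        · rw [hσz] at h
          have h2 := (hoff (2*(n+1)-i) (2*(n+1)-s) hNiN (by omega)).1 h
          omega
      have hInt : Interlace B (c + (i : ZMod (2*(n+1))))
          (c + (((2*(n+1) - i : ℕ)) : ZMod (2*(n+1)))) := by
        simp only [Interlace, Xor', Xor]
        rw [hσz, hσw]
        rw [hvalo i hiN, hvalo (2*(n+1)-i) hNiN, hvalo (2*(n+1)-s) (by omega),
          hvalo j' (by omega)]
        split_ifs <;> omega
      exact hleaves _ _ hzc hwc hnsame hInt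

end StarStructure
section ZHelp

variable {M : ℕ} [NeZero M] (c : ZMod M)

lemma zval_add (o : ℕ) (ho : o < M) :
    (c + (o : ZMod M)).val = if c.val + o < M then c.val + o else c.val + o - M := by
  have hc := ZMod.val_lt c
  rw [ZMod.val_add, ZMod.val_cast_of_lt ho]
  split
  · exact Nat.mod_eq_of_lt ‹_›
  · rw [Nat.mod_eq_sub_mod (by omega), Nat.mod_eq_of_lt (by omega)]

lemma zoff_inj {o₁ o₂ : ℕ} (h1 : o₁ < M) (h2 : o₂ < M) :
    c + (o₁ : ZMod M) = c + (o₂ : ZMod M) ↔ o₁ = o₂ := by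
  constructor
  · intro h
    have h3 := add_left_cancel h
    have h4 := congrArg ZMod.val h3
    rwa [ZMod.val_cast_of_lt h1, ZMod.val_cast_of_lt h2] at h4
  · rintro rfl; rfl

lemma zrep (z : ZMod M) : z = c + ((z - c).val : ZMod M) := by
  rw [ZMod.natCast_rightInverse (z - c)]
  ring

lemma zadd_assoc (a b : ℕ) :
    c + (a : ZMod M) + (b : ZMod M) = c + ((a + b : ℕ) : ZMod M) := by
  push_cast
  ring

lemma zwrap {a : ℕ} (ha : M ≤ a) :
    c + (a : ZMod M) = c + ((a - M : ℕ) : ZMod M) := by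
  have h : a = (a - M) + M := by omega
  conv_lhs => rw [h]
  rw [Nat.cast_add, ZMod.natCast_self, add_zero]

lemma zsub (s : ℕ) (hs : s ≤ M) :
    c + ((M - s : ℕ) : ZMod M) = c - (s : ZMod M) := by
  rw [Nat.cast_sub hs, ZMod.natCast_self]
  ring

lemma zoff_val (o : ℕ) (ho : o < M) : ((c + (o : ZMod M)) - c).val = o := by
  rw [add_sub_cancel_left, ZMod.val_cast_of_lt ho]

end ZHelp

section Chords

instance (n : ℕ) : NeZero (2*(n+1)) := ⟨by omega⟩

/-- The index of the chord through the point at offset `o` from the centre. -/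
def chordOf (n o : ℕ) : ℕ := if o = n+1 then 0 else if o ≤ n then o else 2*(n+1) - o

/-- The two offsets of the endpoints of chord `i`. -/
def chordOffs (n i : ℕ) : Finset ℕ := if i = 0 then {0, n+1} else {i, 2*(n+1) - i}

/-- All endpoint offsets of a set `T` of chords. -/
def offs (n : ℕ) (T : Finset ℕ) : Finset ℕ := T.biUnion (chordOffs n)

/-- The set of endpoints of the set `T` of chords of the standard star based at `c`. -/
noncomputable def chordSet (n : ℕ) (c : ZMod (2*(n+1))) (T : Finset ℕ) :
    Finset (ZMod (2*(n+1))) :=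
  (offs n T).image (fun o : ℕ => c + (o : ZMod (2*(n+1))))

lemma chordOf_le (n o : ℕ) : chordOf n o ≤ n := by
  unfold chordOf; split_ifs <;> omega

lemma chordOf_small {n o : ℕ} (h : o ≤ n) : chordOf n o = o := by
  unfold chordOf; rw [if_neg (by omega), if_pos h]

lemma chordOf_mid (n : ℕ) : chordOf n (n+1) = 0 := by
  unfold chordOf; rw [if_pos rfl]

lemma chordOf_large {n o : ℕ} (h : n+2 ≤ o) : chordOf n o = 2*(n+1) - o := by
  unfold chordOf; rw [if_neg (by omega), if_neg (by omega)]

lemma mem_chordOffs {n i o : ℕ} (hi : i ≤ n) (ho : o ∈ chordOffs n i) :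
    chordOf n o = i ∧ o < 2*(n+1) := by
  unfold chordOffs at ho
  by_cases h0 : i = 0
  · rw [if_pos h0] at ho
    simp only [Finset.mem_insert, Finset.mem_singleton] at ho
    rcases ho with rfl | rfl
    · rw [chordOf_small (by omega)]; omega
    · rw [chordOf_mid]; omega
  · rw [if_neg h0] at ho
    simp only [Finset.mem_insert, Finset.mem_singleton] at ho
    rcases ho with rfl | rfl
    · rw [chordOf_small hi]; omega
    · rw [chordOf_large (by omega)]; omega

lemma mem_offs {n : ℕ} {T : Finset ℕ} (hT : T ⊆ Finset.range (n+1)) {o : ℕ}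
    (ho : o < 2*(n+1)) : o ∈ offs n T ↔ chordOf n o ∈ T := by
  unfold offs
  rw [Finset.mem_biUnion]
  constructor
  · rintro ⟨i, hiT, hio⟩
    have hi : i ≤ n := by have := hT hiT; rw [Finset.mem_range] at this; omega
    rw [(mem_chordOffs hi hio).1]; exact hiT
  · intro h
    refine ⟨chordOf n o, h, ?_⟩
    by_cases h1 : o = n+1
    · subst h1
      rw [chordOf_mid]
      unfold chordOffs
      rw [if_pos rfl]
      simp
    · by_cases h2 : o ≤ n
      · rw [chordOf_small h2]
        unfold chordOffs
        by_cases h3 : o = 0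
        · subst h3; rw [if_pos rfl]; simp
        · rw [if_neg h3]; simp
      · rw [chordOf_large (by omega)]
        unfold chordOffs
        rw [if_neg (by omega)]
        simp only [Finset.mem_insert, Finset.mem_singleton]
        right; omega

lemma offs_lt {n : ℕ} {T : Finset ℕ} (hT : T ⊆ Finset.range (n+1)) {o : ℕ}
    (ho : o ∈ offs n T) : o < 2*(n+1) := by
  unfold offs at ho
  rw [Finset.mem_biUnion] at ho
  obtain ⟨i, hiT, hio⟩ := ho
  have hi : i ≤ n := by have := hT hiT; rw [Finset.mem_range] at this; omega
  exact (mem_chordOffs hi hio).2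

lemma mem_chordSet {n : ℕ} {c : ZMod (2*(n+1))} {T : Finset ℕ}
    (hT : T ⊆ Finset.range (n+1)) {z : ZMod (2*(n+1))} :
    z ∈ chordSet n c T ↔ chordOf n ((z - c).val) ∈ T := by
  unfold chordSet
  rw [Finset.mem_image]
  constructor
  · rintro ⟨o, ho, rfl⟩
    have hlt := offs_lt hT ho
    rw [zoff_val c o hlt]
    exact (mem_offs hT hlt).1 ho
  · intro h
    exact ⟨(z - c).val, (mem_offs hT (ZMod.val_lt _)).2 h, (zrep c z).symm⟩

/-- The involution on offsets induced by `σ`. -/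
def sigmaOff (n o : ℕ) : ℕ := if o = 0 then n+1 else if o = n+1 then 0 else 2*(n+1) - o

lemma sigmaOff_lt {n o : ℕ} (ho : o < 2*(n+1)) : sigmaOff n o < 2*(n+1) := by
  unfold sigmaOff; split_ifs <;> omega

lemma chordOf_sigmaOff {n o : ℕ} (ho : o < 2*(n+1)) :
    chordOf n (sigmaOff n o) = chordOf n o := by
  unfold chordOf sigmaOff; split_ifs <;> omega

lemma sigma_off {n : ℕ} (B : Bouquet (n+1)) (c : ZMod (2*(n+1)))
    (hc1 : B.σ c = c + ((n+1 : ℕ) : ZMod (2*(n+1))))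
    (hc2 : ∀ i : ℕ, 1 ≤ i → i ≤ n → B.σ (c + (i : ZMod (2*(n+1)))) = c - (i : ZMod (2*(n+1))))
    {o : ℕ} (ho : o < 2*(n+1)) :
    B.σ (c + (o : ZMod (2*(n+1)))) = c + ((sigmaOff n o : ℕ) : ZMod (2*(n+1))) := by
  unfold sigmaOff
  by_cases h0 : o = 0
  · subst h0
    rw [if_pos rfl]
    simp only [Nat.cast_zero, add_zero]
    exact hc1
  · rw [if_neg h0]
    by_cases h1 : o = n+1
    · rw [if_pos h1, h1]
      have h2 : B.σ (B.σ c) = c := B.invol c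
      rw [hc1] at h2
      simpa using h2
    · rw [if_neg h1]
      by_cases h2 : o ≤ n
      · rw [hc2 o (by omega) h2]
        exact (zsub c o (by omega)).symm
      · have h4 : c - ((2*(n+1) - o : ℕ) : ZMod (2*(n+1))) = c + (o : ZMod (2*(n+1))) := by
          rw [← zsub c (2*(n+1) - o) (by omega)]
          have h5 : 2*(n+1) - (2*(n+1) - o) = o := by omega
          rw [h5]
        have h3 := hc2 (2*(n+1) - o) (by omega) (by omega)
        rw [← h4, ← h3, B.invol]

lemma chordSet_inv {n : ℕ} {T : Finset ℕ} (hT : T ⊆ Finset.range (n+1))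
    (B : Bouquet (n+1)) (c : ZMod (2*(n+1)))
    (hc1 : B.σ c = c + ((n+1 : ℕ) : ZMod (2*(n+1))))
    (hc2 : ∀ i : ℕ, 1 ≤ i → i ≤ n → B.σ (c + (i : ZMod (2*(n+1)))) = c - (i : ZMod (2*(n+1)))) :
    ∀ z ∈ chordSet n c T, B.σ z ∈ chordSet n c T := by
  intro z hz
  rw [mem_chordSet hT] at hz ⊢
  have hov : (z - c).val < 2*(n+1) := ZMod.val_lt _
  have hσ : B.σ z = c + ((sigmaOff n ((z - c).val) : ℕ) : ZMod (2*(n+1))) := by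
    conv_lhs => rw [zrep c z]
    exact sigma_off B c hc1 hc2 hov
  rw [hσ, zoff_val c _ (sigmaOff_lt hov), chordOf_sigmaOff hov]
  exact hz

lemma chordOffs_card {n i : ℕ} (hi : i ≤ n) : (chordOffs n i).card = 2 := by
  unfold chordOffs
  split_ifs with h
  · rw [Finset.card_insert_of_notMem (by simp), Finset.card_singleton]
  · rw [Finset.card_insert_of_notMem (by simp; omega), Finset.card_singleton]

lemma offs_card {n : ℕ} {T : Finset ℕ} (hT : T ⊆ Finset.range (n+1)) :
    (offs n T).card = 2 * T.card := by
  unfold offs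
  rw [Finset.card_biUnion]
  · rw [Finset.sum_congr rfl (fun i hi => chordOffs_card
      (by have := hT hi; rw [Finset.mem_range] at this; omega))]
    rw [Finset.sum_const, smul_eq_mul]
    ring
  · intro i hi j hj hij
    rw [Function.onFun, Finset.disjoint_left]
    intro o hoi hoj
    have hi' : i ≤ n := by have := hT hi; rw [Finset.mem_range] at this; omega
    have hj' : j ≤ n := by have := hT hj; rw [Finset.mem_range] at this; omega
    exact hij ((mem_chordOffs hi' hoi).1.symm.trans (mem_chordOffs hj' hoj).1)

lemma chordSet_card {n : ℕ} (c : ZMod (2*(n+1))) {T : Finset ℕ}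
    (hT : T ⊆ Finset.range (n+1)) : (chordSet n c T).card = 2 * T.card := by
  unfold chordSet
  rw [Finset.card_image_of_injOn, offs_card hT]
  intro a ha b hb hab
  exact (zoff_inj c (offs_lt hT (by simpa using ha)) (offs_lt hT (by simpa using hb))).1 hab

lemma chordSet_compl {n : ℕ} (c : ZMod (2*(n+1))) {T : Finset ℕ}
    (hT : T ⊆ Finset.range (n+1)) :
    (chordSet n c T)ᶜ = chordSet n c (Finset.range (n+1) \ T) := by
  ext z
  rw [Finset.mem_compl, mem_chordSet hT, mem_chordSet (Finset.sdiff_subset),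
    Finset.mem_sdiff, Finset.mem_range]
  have := chordOf_le n ((z - c).val)
  constructor
  · intro h; exact ⟨by omega, h⟩
  · tauto

lemma mem_chordSet_pt {n : ℕ} (c : ZMod (2*(n+1))) {T : Finset ℕ}
    (hT : T ⊆ Finset.range (n+1)) {i : ℕ} (hi : i ≤ n) :
    c + (i : ZMod (2*(n+1))) ∈ chordSet n c T ↔ i ∈ T := by
  rw [mem_chordSet hT, zoff_val c i (by omega), chordOf_small hi]

lemma chordSet_surj {n : ℕ} (B : Bouquet (n+1)) (c : ZMod (2*(n+1)))
    (hc1 : B.σ c = c + ((n+1 : ℕ) : ZMod (2*(n+1))))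
    (hc2 : ∀ i : ℕ, 1 ≤ i → i ≤ n → B.σ (c + (i : ZMod (2*(n+1)))) = c - (i : ZMod (2*(n+1))))
    (S : Finset (ZMod (2*(n+1)))) (hS : ∀ z ∈ S, B.σ z ∈ S) :
    S = chordSet n c ((Finset.range (n+1)).filter (fun i : ℕ => c + (i : ZMod (2*(n+1))) ∈ S)) := by
  have hT : (Finset.range (n+1)).filter (fun i : ℕ => c + (i : ZMod (2*(n+1))) ∈ S)
      ⊆ Finset.range (n+1) := Finset.filter_subset _ _
  ext z
  rw [mem_chordSet hT, Finset.mem_filter, Finset.mem_range]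
  have hov : (z - c).val < 2*(n+1) := ZMod.val_lt _
  have hzrep : z = c + (((z - c).val : ℕ) : ZMod (2*(n+1))) := zrep c z
  constructor
  · intro hz
    refine ⟨by have := chordOf_le n ((z - c).val); omega, ?_⟩
    by_cases h1 : (z - c).val = n+1
    · rw [h1, chordOf_mid]
      have hσ : B.σ z = c + ((0 : ℕ) : ZMod (2*(n+1))) := by
        conv_lhs => rw [hzrep]
        rw [sigma_off B c hc1 hc2 hov]
        have : sigmaOff n ((z - c).val) = 0 := by
          unfold sigmaOff; rw [if_neg (by omega), if_pos h1]
        rw [this]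
      rw [← hσ]
      exact hS z hz
    · by_cases h2 : (z - c).val ≤ n
      · rw [chordOf_small h2, ← hzrep]
        exact hz
      · rw [chordOf_large (by omega)]
        have hσ : B.σ z = c + ((2*(n+1) - (z - c).val : ℕ) : ZMod (2*(n+1))) := by
          conv_lhs => rw [hzrep]
          rw [sigma_off B c hc1 hc2 hov]
          have : sigmaOff n ((z - c).val) = 2*(n+1) - (z - c).val := by
            unfold sigmaOff; rw [if_neg (by omega), if_neg h1]
          rw [this]
        rw [← hσ]
        exact hS z hz
  · rintro ⟨hb, hm⟩
    by_cases h1 : (z - c).val = n+1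
    · rw [h1, chordOf_mid] at hm
      have h3 := hS _ hm
      rw [sigma_off B c hc1 hc2 (show (0:ℕ) < 2*(n+1) by omega)] at h3
      have h4 : sigmaOff n 0 = n+1 := by unfold sigmaOff; rw [if_pos rfl]
      rw [h4] at h3
      rw [hzrep, h1]
      exact h3
    · by_cases h2 : (z - c).val ≤ n
      · rw [chordOf_small h2] at hm
        rw [hzrep]
        exact hm
      · rw [chordOf_large (by omega)] at hm
        have h3 := hS _ hm
        rw [sigma_off B c hc1 hc2 (show 2*(n+1) - (z - c).val < 2*(n+1) by omega)] at h3
        have h4 : sigmaOff n (2*(n+1) - (z - c).val) = (z - c).val := by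
          unfold sigmaOff; rw [if_neg (by omega), if_neg (by omega)]
          omega
        rw [h4] at h3
        rw [hzrep]
        exact h3

lemma chordSet_T_eq {n : ℕ} (c : ZMod (2*(n+1))) {T : Finset ℕ}
    (hT : T ⊆ Finset.range (n+1)) :
    (Finset.range (n+1)).filter (fun i : ℕ => c + (i : ZMod (2*(n+1))) ∈ chordSet n c T) = T := by
  ext i
  rw [Finset.mem_filter, Finset.mem_range]
  constructor
  · rintro ⟨hb, hm⟩
    exact (mem_chordSet_pt c hT (by omega)).1 hm
  · intro hi
    have hb := hT hi
    rw [Finset.mem_range] at hb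
    exact ⟨hb, (mem_chordSet_pt c hT (by omega)).2 hi⟩

end Chords
section LeafCase

lemma eulerGenus_leaf {n : ℕ} (B : Bouquet (n+1)) (c : ZMod (2*(n+1)))
    (hc1 : B.σ c = c + ((n+1 : ℕ) : ZMod (2*(n+1))))
    (hc2 : ∀ i : ℕ, 1 ≤ i → i ≤ n → B.σ (c + (i : ZMod (2*(n+1)))) = c - (i : ZMod (2*(n+1))))
    (hor : ∀ i, B.t i = false)
    {T : Finset ℕ} (hT : T ⊆ Finset.range (n+1)) (h0 : 0 ∉ T) (hne : T.Nonempty) :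
    eulerGenus (B.restrict (chordSet n c T)) = 0 := by
  have hk : 1 ≤ T.card := Finset.card_pos.2 hne
  set S := chordSet n c T with hSdef
  have hScard : S.card = 2 * T.card := chordSet_card c hT
  have hSinv := chordSet_inv hT B c hc1 hc2
  set oT := T.orderIsoOfFin rfl with hoT
  set uj : Fin T.card → ℕ := fun j => ((oT j : {a // a ∈ T}) : ℕ) with hujdef
  have hmemT : ∀ j, uj j ∈ T := fun j => (oT j).2
  have hbnd : ∀ j, 1 ≤ uj j ∧ uj j ≤ n := by
    intro j
    have h1 := hmemT j
    have h2 := hT h1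
    rw [Finset.mem_range] at h2
    have h3 : uj j ≠ 0 := fun h => h0 (h ▸ h1)
    omega
  have hmono : ∀ {a b : Fin T.card}, a < b → uj a < uj b := by
    intro a b h
    exact Subtype.coe_lt_coe.2 (oT.lt_iff_lt.2 h)
  have hmono' : ∀ {a b : Fin T.card}, uj a < uj b → a < b := by
    intro a b h
    exact oT.lt_iff_lt.1 (Subtype.coe_lt_coe.1 h)
  have hall : ∀ a ∈ T, ∃ j, uj j = a := by
    intro a ha
    refine ⟨oT.symm ⟨a, ha⟩, ?_⟩
    rw [hujdef]
    simp
  set idxOf : ℕ → ℕ :=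
    fun a => if h : a ∈ T then (oT.symm ⟨a, h⟩ : Fin T.card).val else 0 with hidxOf
  have hidx_uj : ∀ j, idxOf (uj j) = j.val := by
    intro j
    rw [hidxOf]
    simp only []
    rw [dif_pos (hmemT j)]
    have h2 : (⟨uj j, hmemT j⟩ : {a // a ∈ T}) = oT j := Subtype.ext rfl
    rw [h2, oT.symm_apply_apply]
  have hmemS : ∀ o : ℕ, o < 2*(n+1) →
      (c + (o : ZMod (2*(n+1))) ∈ S ↔ chordOf n o ∈ T) := by
    intro o ho
    rw [hSdef, mem_chordSet hT, zoff_val c o ho]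
  have hnotmemS : ∀ o : ℕ, o < 2*(n+1) → chordOf n o ∉ T →
      c + (o : ZMod (2*(n+1))) ∉ S := by
    intro o ho hno hmem
    exact hno ((hmemS o ho).1 hmem)
  have hin_mem : ∀ j, c + ((uj j : ℕ) : ZMod (2*(n+1))) ∈ S := by
    intro j
    have hb := hbnd j
    rw [hmemS _ (by omega), chordOf_small (by omega)]
    exact hmemT j
  have hout_mem : ∀ j, c + ((2*(n+1) - uj j : ℕ) : ZMod (2*(n+1))) ∈ S := by
    intro j
    have hb := hbnd j
    rw [hmemS _ (by omega), chordOf_large (by omega),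
      show 2*(n+1) - (2*(n+1) - uj j) = uj j from by omega]
    exact hmemT j
  have hgapT : ∀ (j1 j2 : Fin T.card) (a : ℕ), j1.val + 1 = j2.val → a ∈ T →
      uj j1 < a → a < uj j2 → False := by
    intro j1 j2 a hj ha h1 h2
    obtain ⟨l, rfl⟩ := hall a ha
    have hl1 : j1 < l := hmono' h1
    have hl2 : l < j2 := hmono' h2
    have e1 : j1.val < l.val := hl1
    have e2 : l.val < j2.val := hl2
    omega
  have hktop : T.card - 1 < T.card := by omega
  have h0k : 0 < T.card := hk
  set jtop : Fin T.card := ⟨T.card - 1, hktop⟩ with hjtopdef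
  set j0 : Fin T.card := ⟨0, h0k⟩ with hj0def
  have hjtopv : jtop.val = T.card - 1 := rfl
  have hj0v : j0.val = 0 := rfl
  have htopT : ∀ a ∈ T, a ≤ uj jtop := by
    intro a ha
    obtain ⟨l, rfl⟩ := hall a ha
    have hle : l ≤ jtop := Fin.le_def.2 (by rw [hjtopv]; have := l.isLt; omega)
    rcases eq_or_lt_of_le hle with h | h
    · rw [h]
    · exact le_of_lt (hmono h)
  have hbotT : ∀ a ∈ T, uj j0 ≤ a := by
    intro a ha
    obtain ⟨l, rfl⟩ := hall a ha
    have hle : j0 ≤ l := Fin.le_def.2 (by rw [hj0v]; omega)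
    rcases eq_or_lt_of_le hle with h | h
    · rw [← h]
    · exact le_of_lt (hmono h)
  -- cyclic successor computations
  have hcnext_in : ∀ j1 j2 : Fin T.card, j1.val + 1 = j2.val →
      cnext S (c + ((uj j1 : ℕ) : ZMod (2*(n+1)))) = c + ((uj j2 : ℕ) : ZMod (2*(n+1))) := by
    intro j1 j2 hj
    have hb1 := hbnd j1
    have hb2 := hbnd j2
    have hlt12 : uj j1 < uj j2 := hmono (Fin.lt_def.2 (by omega))
    have hmem2 : (c + ((uj j1 : ℕ) : ZMod (2*(n+1))))
        + ((uj j2 - uj j1 : ℕ) : ZMod (2*(n+1))) ∈ S := by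
      rw [zadd_assoc, show uj j1 + (uj j2 - uj j1) = uj j2 from by omega]
      exact hin_mem j2
    have hmin2 : ∀ k' : ℕ, 0 < k' → k' < uj j2 - uj j1 →
        (c + ((uj j1 : ℕ) : ZMod (2*(n+1)))) + ((k' : ℕ) : ZMod (2*(n+1))) ∉ S := by
      intro k' h1 h2
      rw [zadd_assoc]
      apply hnotmemS _ (by omega)
      rw [chordOf_small (by omega)]
      intro hmem
      exact hgapT j1 j2 _ hj hmem (by omega) (by omega)
    rw [cnext_eq (by omega) hmem2 hmin2, zadd_assoc,
      show uj j1 + (uj j2 - uj j1) = uj j2 from by omega]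
  have hcnext_top : cnext S (c + ((uj jtop : ℕ) : ZMod (2*(n+1))))
      = c + ((2*(n+1) - uj jtop : ℕ) : ZMod (2*(n+1))) := by
    have hb := hbnd jtop
    have hmem2 : (c + ((uj jtop : ℕ) : ZMod (2*(n+1))))
        + ((2*(n+1) - 2*uj jtop : ℕ) : ZMod (2*(n+1))) ∈ S := by
      rw [zadd_assoc, show uj jtop + (2*(n+1) - 2*uj jtop) = 2*(n+1) - uj jtop from by omega]
      exact hout_mem jtop
    have hmin2 : ∀ k' : ℕ, 0 < k' → k' < 2*(n+1) - 2*uj jtop →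
        (c + ((uj jtop : ℕ) : ZMod (2*(n+1)))) + ((k' : ℕ) : ZMod (2*(n+1))) ∉ S := by
      intro k' h1 h2
      rw [zadd_assoc]
      apply hnotmemS _ (by omega)
      intro hmem
      by_cases hs : uj jtop + k' ≤ n
      · rw [chordOf_small hs] at hmem
        have := htopT _ hmem
        omega
      · by_cases hmid : uj jtop + k' = n+1
        · rw [hmid, chordOf_mid] at hmem
          exact h0 hmem
        · rw [chordOf_large (by omega)] at hmem
          have := htopT _ hmem
          omega
    rw [cnext_eq (by omega) hmem2 hmin2, zadd_assoc,
      show uj jtop + (2*(n+1) - 2*uj jtop) = 2*(n+1) - uj jtop from by omega]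
  have hcnext_out : ∀ j1 j2 : Fin T.card, j1.val + 1 = j2.val →
      cnext S (c + ((2*(n+1) - uj j2 : ℕ) : ZMod (2*(n+1))))
        = c + ((2*(n+1) - uj j1 : ℕ) : ZMod (2*(n+1))) := by
    intro j1 j2 hj
    have hb1 := hbnd j1
    have hb2 := hbnd j2
    have hlt12 : uj j1 < uj j2 := hmono (Fin.lt_def.2 (by omega))
    have hmem2 : (c + ((2*(n+1) - uj j2 : ℕ) : ZMod (2*(n+1))))
        + ((uj j2 - uj j1 : ℕ) : ZMod (2*(n+1))) ∈ S := by
      rw [zadd_assoc,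
        show 2*(n+1) - uj j2 + (uj j2 - uj j1) = 2*(n+1) - uj j1 from by omega]
      exact hout_mem j1
    have hmin2 : ∀ k' : ℕ, 0 < k' → k' < uj j2 - uj j1 →
        (c + ((2*(n+1) - uj j2 : ℕ) : ZMod (2*(n+1)))) + ((k' : ℕ) : ZMod (2*(n+1))) ∉ S := by
      intro k' h1 h2
      rw [zadd_assoc]
      apply hnotmemS _ (by omega)
      rw [chordOf_large (by omega)]
      intro hmem
      exact hgapT j1 j2 _ hj hmem (by omega) (by omega)
    rw [cnext_eq (by omega) hmem2 hmin2, zadd_assoc,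
      show 2*(n+1) - uj j2 + (uj j2 - uj j1) = 2*(n+1) - uj j1 from by omega]
  have hcnext_wrap : cnext S (c + ((2*(n+1) - uj j0 : ℕ) : ZMod (2*(n+1))))
      = c + ((uj j0 : ℕ) : ZMod (2*(n+1))) := by
    have hb := hbnd j0
    have hmem2 : (c + ((2*(n+1) - uj j0 : ℕ) : ZMod (2*(n+1))))
        + ((2 * uj j0 : ℕ) : ZMod (2*(n+1))) ∈ S := by
      rw [zadd_assoc, show 2*(n+1) - uj j0 + 2*uj j0 = 2*(n+1) + uj j0 from by omega,
        zwrap c (by omega), show 2*(n+1) + uj j0 - 2*(n+1) = uj j0 from by omega]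
      exact hin_mem j0
    have hmin2 : ∀ k' : ℕ, 0 < k' → k' < 2 * uj j0 →
        (c + ((2*(n+1) - uj j0 : ℕ) : ZMod (2*(n+1)))) + ((k' : ℕ) : ZMod (2*(n+1))) ∉ S := by
      intro k' h1 h2
      rw [zadd_assoc]
      by_cases hw : 2*(n+1) - uj j0 + k' < 2*(n+1)
      · apply hnotmemS _ hw
        rw [chordOf_large (by omega)]
        intro hmem
        have := hbotT _ hmem
        omega
      · rw [zwrap c (by omega)]
        apply hnotmemS _ (by omega)
        rw [chordOf_small (by omega)]
        intro hmem
        have := hbotT _ hmem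
        omega
    rw [cnext_eq (by omega) hmem2 hmin2, zadd_assoc,
      show 2*(n+1) - uj j0 + 2*uj j0 = 2*(n+1) + uj j0 from by omega,
      zwrap c (by omega), show 2*(n+1) + uj j0 - 2*(n+1) = uj j0 from by omega]
  -- σ on the endpoints
  have hsig_in : ∀ j : Fin T.card, B.σ (c + ((uj j : ℕ) : ZMod (2*(n+1))))
      = c + ((2*(n+1) - uj j : ℕ) : ZMod (2*(n+1))) := by
    intro j
    have hb := hbnd j
    rw [sigma_off B c hc1 hc2 (by omega)]
    rw [show sigmaOff n (uj j) = 2*(n+1) - uj j from by unfold sigmaOff; split_ifs <;> omega]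
  have hsig_out : ∀ j : Fin T.card, B.σ (c + ((2*(n+1) - uj j : ℕ) : ZMod (2*(n+1))))
      = c + ((uj j : ℕ) : ZMod (2*(n+1))) := by
    intro j
    have hb := hbnd j
    rw [sigma_off B c hc1 hc2 (by omega)]
    rw [show sigmaOff n (2*(n+1) - uj j) = uj j from by unfold sigmaOff; split_ifs <;> omega]
  -- decomposition of the elements of S
  have hdec : ∀ z : ZMod (2*(n+1)), z ∈ S →
      ∃ j : Fin T.card, z = c + ((uj j : ℕ) : ZMod (2*(n+1)))
        ∨ z = c + ((2*(n+1) - uj j : ℕ) : ZMod (2*(n+1))) := by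
    intro z hz
    have hov : (z - c).val < 2*(n+1) := ZMod.val_lt _
    have hzr : z = c + (((z - c).val : ℕ) : ZMod (2*(n+1))) := zrep c z
    rw [hSdef, mem_chordSet hT] at hz
    by_cases h1 : (z - c).val = n+1
    · rw [h1, chordOf_mid] at hz
      exact absurd hz h0
    · by_cases h2 : (z - c).val ≤ n
      · rw [chordOf_small h2] at hz
        obtain ⟨j, hjj⟩ := hall _ hz
        exact ⟨j, Or.inl (by rw [hzr, hjj])⟩
      · rw [chordOf_large (by omega)] at hz
        obtain ⟨j, hjj⟩ := hall _ hz
        refine ⟨j, Or.inr ?_⟩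
        rw [show 2*(n+1) - uj j = (z - c).val from by omega, ← hzr]
  -- the labelling
  set lab : ZMod (2*(n+1)) → ℕ := fun z =>
    if ((z - c).val) ≤ n then idxOf ((z - c).val) + 1 else idxOf (2*(n+1) - (z - c).val)
    with hlab
  set ℓ₀ : {x : ZMod (2*(n+1)) // x ∈ S} → Fin (T.card + 1) :=
    fun z => ⟨min (lab (z : ZMod (2*(n+1)))) T.card, Nat.lt_succ_of_le (min_le_right _ _)⟩
    with hℓ₀
  have hlab_in : ∀ (j : Fin T.card) (z : ZMod (2*(n+1))),
      z = c + ((uj j : ℕ) : ZMod (2*(n+1))) → lab z = j.val + 1 := by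
    intro j z hzz
    have hb := hbnd j
    rw [hlab]
    simp only []
    rw [hzz, zoff_val c _ (by omega), if_pos (by omega), hidx_uj]
  have hlab_out : ∀ (j : Fin T.card) (z : ZMod (2*(n+1))),
      z = c + ((2*(n+1) - uj j : ℕ) : ZMod (2*(n+1))) → lab z = j.val := by
    intro j z hzz
    have hb := hbnd j
    rw [hlab]
    simp only []
    rw [hzz, zoff_val c _ (by omega), if_neg (by omega),
      show 2*(n+1) - (2*(n+1) - uj j) = uj j from by omega, hidx_uj]
  have hℓ_in : ∀ (j : Fin T.card) (z : {x : ZMod (2*(n+1)) // x ∈ S}),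
      (z : ZMod (2*(n+1))) = c + ((uj j : ℕ) : ZMod (2*(n+1))) → (ℓ₀ z).val = j.val + 1 := by
    intro j z hzz
    rw [hℓ₀]
    simp only []
    rw [hlab_in j _ hzz]
    have := j.isLt
    omega
  have hℓ_out : ∀ (j : Fin T.card) (z : {x : ZMod (2*(n+1)) // x ∈ S}),
      (z : ZMod (2*(n+1))) = c + ((2*(n+1) - uj j : ℕ) : ZMod (2*(n+1))) →
      (ℓ₀ z).val = j.val := by
    intro j z hzz
    rw [hℓ₀]
    simp only []
    rw [hlab_out j _ hzz]
    have := j.isLt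
    omega
  -- the three conditions
  have hcond1 : ∀ p q : {x : ZMod (2*(n+1)) // x ∈ S},
      (q : ZMod (2*(n+1))) = B.σ (cnext S (p : ZMod (2*(n+1)))) → ℓ₀ q = ℓ₀ p := by
    intro p q hq
    obtain ⟨j, hp | hp⟩ := hdec _ p.2
    · by_cases hjtop2 : j.val + 1 < T.card
      · have hq2 : (q : ZMod (2*(n+1)))
            = c + ((2*(n+1) - uj ⟨j.val + 1, hjtop2⟩ : ℕ) : ZMod (2*(n+1))) := by
          rw [hq, hp, hcnext_in j ⟨j.val + 1, hjtop2⟩ rfl, hsig_in]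
        apply Fin.ext
        rw [hℓ_out ⟨j.val + 1, hjtop2⟩ q hq2, hℓ_in j p hp]
      · have hj : j = jtop := Fin.ext (by rw [hjtopv]; have := j.isLt; omega)
        rw [hj] at hp
        have hq2 : (q : ZMod (2*(n+1))) = (p : ZMod (2*(n+1))) := by
          rw [hq, hp, hcnext_top, hsig_out, ← hp]
        exact congrArg ℓ₀ (Subtype.ext hq2)
    · by_cases hj0' : j.val = 0
      · have hj : j = j0 := Fin.ext (by rw [hj0v]; omega)
        rw [hj] at hp
        have hq2 : (q : ZMod (2*(n+1))) = (p : ZMod (2*(n+1))) := by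
          rw [hq, hp, hcnext_wrap, hsig_in, ← hp]
        exact congrArg ℓ₀ (Subtype.ext hq2)
      · have hj1lt : j.val - 1 < T.card := by have := j.isLt; omega
        have hj1j : (⟨j.val - 1, hj1lt⟩ : Fin T.card).val + 1 = j.val := by
          have : (⟨j.val - 1, hj1lt⟩ : Fin T.card).val = j.val - 1 := rfl
          omega
        have hq2 : (q : ZMod (2*(n+1)))
            = c + ((uj ⟨j.val - 1, hj1lt⟩ : ℕ) : ZMod (2*(n+1))) := by
          rw [hq, hp, hcnext_out ⟨j.val - 1, hj1lt⟩ j hj1j, hsig_out]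
        apply Fin.ext
        rw [hℓ_in ⟨j.val - 1, hj1lt⟩ q hq2, hℓ_out j p hp]
        omega
  have hcond2 : Function.Surjective ℓ₀ := by
    intro l
    by_cases hl : l.val = 0
    · refine ⟨⟨c + ((2*(n+1) - uj j0 : ℕ) : ZMod (2*(n+1))), hout_mem j0⟩, ?_⟩
      apply Fin.ext
      rw [hℓ_out j0 _ rfl, hj0v, hl]
    · have hlt : l.val - 1 < T.card := by have := l.isLt; omega
      refine ⟨⟨c + ((uj ⟨l.val - 1, hlt⟩ : ℕ) : ZMod (2*(n+1))), hin_mem _⟩, ?_⟩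
      apply Fin.ext
      rw [hℓ_in ⟨l.val - 1, hlt⟩ _ rfl]
      have : (⟨l.val - 1, hlt⟩ : Fin T.card).val = l.val - 1 := rfl
      omega
  have hcond3 : ∀ p q : {x : ZMod (2*(n+1)) // x ∈ S}, ℓ₀ p = ℓ₀ q →
      Relation.EqvGen (fun a b : {x : ZMod (2*(n+1)) // x ∈ S} =>
        (b : ZMod (2*(n+1))) = B.σ (cnext S (a : ZMod (2*(n+1))))) p q := by
    intro p q hpq
    obtain ⟨jp, hp⟩ := hdec _ p.2
    obtain ⟨jq, hq⟩ := hdec _ q.2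
    have hval := congrArg Fin.val hpq
    have hrel : ∀ (j1 j2 : Fin T.card), j1.val + 1 = j2.val →
        ∀ (a b : {x : ZMod (2*(n+1)) // x ∈ S}),
          (a : ZMod (2*(n+1))) = c + ((uj j1 : ℕ) : ZMod (2*(n+1))) →
          (b : ZMod (2*(n+1))) = c + ((2*(n+1) - uj j2 : ℕ) : ZMod (2*(n+1))) →
          Relation.EqvGen (fun a b : {x : ZMod (2*(n+1)) // x ∈ S} =>
            (b : ZMod (2*(n+1))) = B.σ (cnext S (a : ZMod (2*(n+1))))) a b := by
      intro j1 j2 hj a b ha hb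
      apply Relation.EqvGen.rel
      rw [ha, hb, hcnext_in j1 j2 hj, hsig_in]
    rcases hp with hp | hp <;> rcases hq with hq | hq
    · rw [hℓ_in jp p hp, hℓ_in jq q hq] at hval
      have hj : jp = jq := Fin.ext (by omega)
      rw [← hj] at hq
      rw [Subtype.ext (hp.trans hq.symm)]
      exact Relation.EqvGen.refl _
    · rw [hℓ_in jp p hp, hℓ_out jq q hq] at hval
      exact hrel jp jq (by omega) p q hp hq
    · rw [hℓ_out jp p hp, hℓ_in jq q hq] at hval
      exact Relation.EqvGen.symm _ _ (hrel jq jp (by omega) q p hq hp)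
    · rw [hℓ_out jp p hp, hℓ_out jq q hq] at hval
      have hj : jp = jq := Fin.ext (by omega)
      rw [← hj] at hq
      rw [Subtype.ext (hp.trans hq.symm)]
      exact Relation.EqvGen.refl _
  have hnum := numBoundary_restrict B S (by omega) (by omega) (by omega) hSinv hor
    ℓ₀ hcond1 hcond2 hcond3
  show 1 + S.card / 2 - numBoundary (B.restrict S) = 0
  rw [hnum]
  have hcb : Nat.card (Fin (T.card + 1)) = T.card + 1 := by
    simp [Nat.card_eq_fintype_card]
  rw [hcb]
  omega

end LeafCase
section CentreOnly

lemma eulerGenus_centre_only {n : ℕ} (B : Bouquet (n+1)) (c : ZMod (2*(n+1)))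
    (hc1 : B.σ c = c + ((n+1 : ℕ) : ZMod (2*(n+1))))
    (hc2 : ∀ i : ℕ, 1 ≤ i → i ≤ n → B.σ (c + (i : ZMod (2*(n+1)))) = c - (i : ZMod (2*(n+1))))
    (hor : ∀ i, B.t i = false) :
    eulerGenus (B.restrict (chordSet n c {0})) = 0 := by
  have hT : ({0} : Finset ℕ) ⊆ Finset.range (n+1) := by simp
  set S := chordSet n c {0} with hSdef
  have hScard : S.card = 2 := by
    rw [hSdef, chordSet_card c hT]
    simp
  have hSinv := chordSet_inv hT B c hc1 hc2
  have hmemS : ∀ o : ℕ, o < 2*(n+1) →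
      (c + (o : ZMod (2*(n+1))) ∈ S ↔ chordOf n o = 0) := by
    intro o ho
    rw [hSdef, mem_chordSet hT, zoff_val c o ho, Finset.mem_singleton]
  have hc_mem : c + ((0 : ℕ) : ZMod (2*(n+1))) ∈ S := by
    rw [hmemS _ (by omega), chordOf_small (by omega)]
  have hq_mem : c + ((n+1 : ℕ) : ZMod (2*(n+1))) ∈ S := by
    rw [hmemS _ (by omega), chordOf_mid]
  have hdec : ∀ z : ZMod (2*(n+1)), z ∈ S →
      z = c + ((0 : ℕ) : ZMod (2*(n+1))) ∨ z = c + ((n+1 : ℕ) : ZMod (2*(n+1))) := by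
    intro z hz
    have hov : (z - c).val < 2*(n+1) := ZMod.val_lt _
    have hzr : z = c + (((z - c).val : ℕ) : ZMod (2*(n+1))) := zrep c z
    rw [hzr] at hz
    rw [hmemS _ hov] at hz
    by_cases h1 : (z - c).val = n+1
    · right; rw [hzr, h1]
    · by_cases h2 : (z - c).val ≤ n
      · rw [chordOf_small h2] at hz
        left; rw [hzr, hz]
      · rw [chordOf_large (by omega)] at hz
        omega
  have hcnext_c : cnext S (c + ((0 : ℕ) : ZMod (2*(n+1))))
      = c + ((n+1 : ℕ) : ZMod (2*(n+1))) := by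
    have hmem2 : (c + ((0 : ℕ) : ZMod (2*(n+1)))) + ((n+1 : ℕ) : ZMod (2*(n+1))) ∈ S := by
      rw [zadd_assoc, show 0 + (n+1) = n+1 from by omega]
      exact hq_mem
    have hmin2 : ∀ k' : ℕ, 0 < k' → k' < n+1 →
        (c + ((0 : ℕ) : ZMod (2*(n+1)))) + ((k' : ℕ) : ZMod (2*(n+1))) ∉ S := by
      intro k' h1 h2 hmem
      rw [zadd_assoc, show 0 + k' = k' from by omega] at hmem
      rw [hmemS _ (by omega), chordOf_small (by omega)] at hmem
      omega
    rw [cnext_eq (by omega) hmem2 hmin2, zadd_assoc, show 0 + (n+1) = n+1 from by omega]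
  have hcnext_q : cnext S (c + ((n+1 : ℕ) : ZMod (2*(n+1))))
      = c + ((0 : ℕ) : ZMod (2*(n+1))) := by
    have hmem2 : (c + ((n+1 : ℕ) : ZMod (2*(n+1)))) + ((n+1 : ℕ) : ZMod (2*(n+1))) ∈ S := by
      rw [zadd_assoc, show (n+1) + (n+1) = 2*(n+1) from by omega, zwrap c (by omega),
        show 2*(n+1) - 2*(n+1) = 0 from by omega]
      exact hc_mem
    have hmin2 : ∀ k' : ℕ, 0 < k' → k' < n+1 →
        (c + ((n+1 : ℕ) : ZMod (2*(n+1)))) + ((k' : ℕ) : ZMod (2*(n+1))) ∉ S := by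
      intro k' h1 h2 hmem
      rw [zadd_assoc] at hmem
      rw [hmemS _ (by omega), chordOf_large (by omega)] at hmem
      omega
    rw [cnext_eq (by omega) hmem2 hmin2, zadd_assoc,
      show (n+1) + (n+1) = 2*(n+1) from by omega, zwrap c (by omega),
      show 2*(n+1) - 2*(n+1) = 0 from by omega]
  have hsig_c : B.σ (c + ((0 : ℕ) : ZMod (2*(n+1)))) = c + ((n+1 : ℕ) : ZMod (2*(n+1))) := by
    rw [sigma_off B c hc1 hc2 (by omega)]
    rw [show sigmaOff n 0 = n+1 from by unfold sigmaOff; rw [if_pos rfl]]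
  have hsig_q : B.σ (c + ((n+1 : ℕ) : ZMod (2*(n+1)))) = c + ((0 : ℕ) : ZMod (2*(n+1))) := by
    rw [sigma_off B c hc1 hc2 (by omega)]
    rw [show sigmaOff n (n+1) = 0 from by unfold sigmaOff; rw [if_neg (by omega), if_pos rfl]]
  set ℓ₀ : {x : ZMod (2*(n+1)) // x ∈ S} → Fin 2 :=
    fun z => if ((z : ZMod (2*(n+1))) - c).val = 0 then 0 else 1 with hℓ₀
  have hℓ_c : ∀ z : {x : ZMod (2*(n+1)) // x ∈ S},
      (z : ZMod (2*(n+1))) = c + ((0 : ℕ) : ZMod (2*(n+1))) → ℓ₀ z = 0 := by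
    intro z hz
    rw [hℓ₀]
    simp only []
    rw [hz, zoff_val c 0 (by omega), if_pos rfl]
  have hℓ_q : ∀ z : {x : ZMod (2*(n+1)) // x ∈ S},
      (z : ZMod (2*(n+1))) = c + ((n+1 : ℕ) : ZMod (2*(n+1))) → ℓ₀ z = 1 := by
    intro z hz
    rw [hℓ₀]
    simp only []
    rw [hz, zoff_val c (n+1) (by omega), if_neg (by omega)]
  have hcond1 : ∀ p q : {x : ZMod (2*(n+1)) // x ∈ S},
      (q : ZMod (2*(n+1))) = B.σ (cnext S (p : ZMod (2*(n+1)))) → ℓ₀ q = ℓ₀ p := by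
    intro p q hq
    rcases hdec _ p.2 with hp | hp
    · have hq2 : (q : ZMod (2*(n+1))) = (p : ZMod (2*(n+1))) := by
        rw [hq, hp, hcnext_c, hsig_q, ← hp]
      exact congrArg ℓ₀ (Subtype.ext hq2)
    · have hq2 : (q : ZMod (2*(n+1))) = (p : ZMod (2*(n+1))) := by
        rw [hq, hp, hcnext_q, hsig_c, ← hp]
      exact congrArg ℓ₀ (Subtype.ext hq2)
  have hcond2 : Function.Surjective ℓ₀ := by
    intro l
    by_cases hl : l = 0
    · exact ⟨⟨c + ((0 : ℕ) : ZMod (2*(n+1))), hc_mem⟩, by rw [hℓ_c _ rfl, hl]⟩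
    · refine ⟨⟨c + ((n+1 : ℕ) : ZMod (2*(n+1))), hq_mem⟩, ?_⟩
      rw [hℓ_q _ rfl]
      omega
  have hcond3 : ∀ p q : {x : ZMod (2*(n+1)) // x ∈ S}, ℓ₀ p = ℓ₀ q →
      Relation.EqvGen (fun a b : {x : ZMod (2*(n+1)) // x ∈ S} =>
        (b : ZMod (2*(n+1))) = B.σ (cnext S (a : ZMod (2*(n+1))))) p q := by
    intro p q hpq
    rcases hdec _ p.2 with hp | hp <;> rcases hdec _ q.2 with hq | hq
    · rw [Subtype.ext (hp.trans hq.symm)]; exact Relation.EqvGen.refl _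
    · rw [hℓ_c p hp, hℓ_q q hq] at hpq
      exact absurd hpq (by omega)
    · rw [hℓ_q p hp, hℓ_c q hq] at hpq
      exact absurd hpq (by omega)
    · rw [Subtype.ext (hp.trans hq.symm)]; exact Relation.EqvGen.refl _
  have hnum := numBoundary_restrict B S (by omega) (by omega) (by omega) hSinv hor
    ℓ₀ hcond1 hcond2 hcond3
  show 1 + S.card / 2 - numBoundary (B.restrict S) = 0
  rw [hnum]
  have hcb : Nat.card (Fin 2) = 2 := by simp [Nat.card_eq_fintype_card]
  rw [hcb]
  omega

end CentreOnly
section StarCase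

lemma eulerGenus_star_case {n : ℕ} (B : Bouquet (n+1)) (c : ZMod (2*(n+1)))
    (hc1 : B.σ c = c + ((n+1 : ℕ) : ZMod (2*(n+1))))
    (hc2 : ∀ i : ℕ, 1 ≤ i → i ≤ n → B.σ (c + (i : ZMod (2*(n+1)))) = c - (i : ZMod (2*(n+1))))
    (hor : ∀ i, B.t i = false)
    {T : Finset ℕ} (hT : T ⊆ Finset.range (n+1)) (h0 : 0 ∈ T) (hcard : 2 ≤ T.card) :
    eulerGenus (B.restrict (chordSet n c T)) = 2 := by
  set I := T.erase 0 with hIdef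
  have hkI : I.card = T.card - 1 := by rw [hIdef, Finset.card_erase_of_mem h0]
  have hk : 1 ≤ I.card := by omega
  set S := chordSet n c T with hSdef
  have hScard : S.card = 2 * T.card := chordSet_card c hT
  have hSinv := chordSet_inv hT B c hc1 hc2
  set oT := I.orderIsoOfFin rfl with hoT
  set uj : Fin I.card → ℕ := fun j => ((oT j : {a // a ∈ I}) : ℕ) with hujdef
  have hmemI : ∀ j, uj j ∈ I := fun j => (oT j).2
  have hmemT : ∀ j, uj j ∈ T := fun j => Finset.mem_of_mem_erase (hmemI j)
  have hbnd : ∀ j, 1 ≤ uj j ∧ uj j ≤ n := by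
    intro j
    have h1 := hmemI j
    rw [hIdef, Finset.mem_erase] at h1
    have h2 := hT h1.2
    rw [Finset.mem_range] at h2
    omega
  have hmono : ∀ {a b : Fin I.card}, a < b → uj a < uj b := by
    intro a b h
    exact Subtype.coe_lt_coe.2 (oT.lt_iff_lt.2 h)
  have hmono' : ∀ {a b : Fin I.card}, uj a < uj b → a < b := by
    intro a b h
    exact oT.lt_iff_lt.1 (Subtype.coe_lt_coe.1 h)
  have hall : ∀ a ∈ I, ∃ j, uj j = a := by
    intro a ha
    refine ⟨oT.symm ⟨a, ha⟩, ?_⟩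
    rw [hujdef]
    simp
  set idxOf : ℕ → ℕ :=
    fun a => if h : a ∈ I then (oT.symm ⟨a, h⟩ : Fin I.card).val else 0 with hidxOf
  have hidx_uj : ∀ j, idxOf (uj j) = j.val := by
    intro j
    rw [hidxOf]
    simp only []
    rw [dif_pos (hmemI j)]
    have h2 : (⟨uj j, hmemI j⟩ : {a // a ∈ I}) = oT j := Subtype.ext rfl
    rw [h2, oT.symm_apply_apply]
  have hmemS : ∀ o : ℕ, o < 2*(n+1) →
      (c + (o : ZMod (2*(n+1))) ∈ S ↔ chordOf n o ∈ T) := by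
    intro o ho
    rw [hSdef, mem_chordSet hT, zoff_val c o ho]
  have hnotmemS : ∀ o : ℕ, o < 2*(n+1) → chordOf n o ∉ T →
      c + (o : ZMod (2*(n+1))) ∉ S := by
    intro o ho hno hmem
    exact hno ((hmemS o ho).1 hmem)
  have hc_mem : c + ((0 : ℕ) : ZMod (2*(n+1))) ∈ S := by
    rw [hmemS _ (by omega), chordOf_small (by omega)]
    exact h0
  have hq_mem : c + ((n+1 : ℕ) : ZMod (2*(n+1))) ∈ S := by
    rw [hmemS _ (by omega), chordOf_mid]
    exact h0
  have hin_mem : ∀ j, c + ((uj j : ℕ) : ZMod (2*(n+1))) ∈ S := by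
    intro j
    have hb := hbnd j
    rw [hmemS _ (by omega), chordOf_small (by omega)]
    exact hmemT j
  have hout_mem : ∀ j, c + ((2*(n+1) - uj j : ℕ) : ZMod (2*(n+1))) ∈ S := by
    intro j
    have hb := hbnd j
    rw [hmemS _ (by omega), chordOf_large (by omega),
      show 2*(n+1) - (2*(n+1) - uj j) = uj j from by omega]
    exact hmemT j
  have hgapT : ∀ (j1 j2 : Fin I.card) (a : ℕ), j1.val + 1 = j2.val → a ∈ I →
      uj j1 < a → a < uj j2 → False := by
    intro j1 j2 a hj ha h1 h2
    obtain ⟨l, rfl⟩ := hall a ha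
    have hl1 : j1 < l := hmono' h1
    have hl2 : l < j2 := hmono' h2
    have e1 : j1.val < l.val := hl1
    have e2 : l.val < j2.val := hl2
    omega
  have hktop : I.card - 1 < I.card := by omega
  have h0k : 0 < I.card := hk
  set jtop : Fin I.card := ⟨I.card - 1, hktop⟩ with hjtopdef
  set j0 : Fin I.card := ⟨0, h0k⟩ with hj0def
  have hjtopv : jtop.val = I.card - 1 := rfl
  have hj0v : j0.val = 0 := rfl
  have htopT : ∀ a ∈ I, a ≤ uj jtop := by
    intro a ha
    obtain ⟨l, rfl⟩ := hall a ha
    have hle : l ≤ jtop := Fin.le_def.2 (by rw [hjtopv]; have := l.isLt; omega)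
    rcases eq_or_lt_of_le hle with h | h
    · rw [h]
    · exact le_of_lt (hmono h)
  have hbotT : ∀ a ∈ I, uj j0 ≤ a := by
    intro a ha
    obtain ⟨l, rfl⟩ := hall a ha
    have hle : j0 ≤ l := Fin.le_def.2 (by rw [hj0v]; omega)
    rcases eq_or_lt_of_le hle with h | h
    · rw [← h]
    · exact le_of_lt (hmono h)
  have hmemI' : ∀ a : ℕ, a ≠ 0 → a ∈ T → a ∈ I := by
    intro a ha hat
    rw [hIdef, Finset.mem_erase]
    exact ⟨ha, hat⟩
  -- cyclic successor computations
  have hcnext_c : cnext S (c + ((0 : ℕ) : ZMod (2*(n+1))))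
      = c + ((uj j0 : ℕ) : ZMod (2*(n+1))) := by
    have hb := hbnd j0
    have hmem2 : (c + ((0 : ℕ) : ZMod (2*(n+1)))) + ((uj j0 : ℕ) : ZMod (2*(n+1))) ∈ S := by
      rw [zadd_assoc, show 0 + uj j0 = uj j0 from by omega]
      exact hin_mem j0
    have hmin2 : ∀ k' : ℕ, 0 < k' → k' < uj j0 →
        (c + ((0 : ℕ) : ZMod (2*(n+1)))) + ((k' : ℕ) : ZMod (2*(n+1))) ∉ S := by
      intro k' h1 h2
      rw [zadd_assoc, show 0 + k' = k' from by omega]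
      apply hnotmemS _ (by omega)
      rw [chordOf_small (by omega)]
      intro hmem
      have := hbotT _ (hmemI' _ (by omega) hmem)
      omega
    rw [cnext_eq (by omega) hmem2 hmin2, zadd_assoc, show 0 + uj j0 = uj j0 from by omega]
  have hcnext_in : ∀ j1 j2 : Fin I.card, j1.val + 1 = j2.val →
      cnext S (c + ((uj j1 : ℕ) : ZMod (2*(n+1)))) = c + ((uj j2 : ℕ) : ZMod (2*(n+1))) := by
    intro j1 j2 hj
    have hb1 := hbnd j1
    have hb2 := hbnd j2
    have hlt12 : uj j1 < uj j2 := hmono (Fin.lt_def.2 (by omega))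
    have hmem2 : (c + ((uj j1 : ℕ) : ZMod (2*(n+1))))
        + ((uj j2 - uj j1 : ℕ) : ZMod (2*(n+1))) ∈ S := by
      rw [zadd_assoc, show uj j1 + (uj j2 - uj j1) = uj j2 from by omega]
      exact hin_mem j2
    have hmin2 : ∀ k' : ℕ, 0 < k' → k' < uj j2 - uj j1 →
        (c + ((uj j1 : ℕ) : ZMod (2*(n+1)))) + ((k' : ℕ) : ZMod (2*(n+1))) ∉ S := by
      intro k' h1 h2
      rw [zadd_assoc]
      apply hnotmemS _ (by omega)
      rw [chordOf_small (by omega)]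
      intro hmem
      exact hgapT j1 j2 _ hj (hmemI' _ (by omega) hmem) (by omega) (by omega)
    rw [cnext_eq (by omega) hmem2 hmin2, zadd_assoc,
      show uj j1 + (uj j2 - uj j1) = uj j2 from by omega]
  have hcnext_top : cnext S (c + ((uj jtop : ℕ) : ZMod (2*(n+1))))
      = c + ((n+1 : ℕ) : ZMod (2*(n+1))) := by
    have hb := hbnd jtop
    have hmem2 : (c + ((uj jtop : ℕ) : ZMod (2*(n+1))))
        + ((n+1 - uj jtop : ℕ) : ZMod (2*(n+1))) ∈ S := by
      rw [zadd_assoc, show uj jtop + (n+1 - uj jtop) = n+1 from by omega]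
      exact hq_mem
    have hmin2 : ∀ k' : ℕ, 0 < k' → k' < n+1 - uj jtop →
        (c + ((uj jtop : ℕ) : ZMod (2*(n+1)))) + ((k' : ℕ) : ZMod (2*(n+1))) ∉ S := by
      intro k' h1 h2
      rw [zadd_assoc]
      apply hnotmemS _ (by omega)
      rw [chordOf_small (by omega)]
      intro hmem
      have := htopT _ (hmemI' _ (by omega) hmem)
      omega
    rw [cnext_eq (by omega) hmem2 hmin2, zadd_assoc,
      show uj jtop + (n+1 - uj jtop) = n+1 from by omega]
  have hcnext_q : cnext S (c + ((n+1 : ℕ) : ZMod (2*(n+1))))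
      = c + ((2*(n+1) - uj jtop : ℕ) : ZMod (2*(n+1))) := by
    have hb := hbnd jtop
    have hmem2 : (c + ((n+1 : ℕ) : ZMod (2*(n+1))))
        + ((n+1 - uj jtop : ℕ) : ZMod (2*(n+1))) ∈ S := by
      rw [zadd_assoc, show n+1 + (n+1 - uj jtop) = 2*(n+1) - uj jtop from by omega]
      exact hout_mem jtop
    have hmin2 : ∀ k' : ℕ, 0 < k' → k' < n+1 - uj jtop →
        (c + ((n+1 : ℕ) : ZMod (2*(n+1)))) + ((k' : ℕ) : ZMod (2*(n+1))) ∉ S := by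
      intro k' h1 h2
      rw [zadd_assoc]
      apply hnotmemS _ (by omega)
      rw [chordOf_large (by omega)]
      intro hmem
      have := htopT _ (hmemI' _ (by omega) hmem)
      omega
    rw [cnext_eq (by omega) hmem2 hmin2, zadd_assoc,
      show n+1 + (n+1 - uj jtop) = 2*(n+1) - uj jtop from by omega]
  have hcnext_out : ∀ j1 j2 : Fin I.card, j1.val + 1 = j2.val →
      cnext S (c + ((2*(n+1) - uj j2 : ℕ) : ZMod (2*(n+1))))
        = c + ((2*(n+1) - uj j1 : ℕ) : ZMod (2*(n+1))) := by
    intro j1 j2 hj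
    have hb1 := hbnd j1
    have hb2 := hbnd j2
    have hlt12 : uj j1 < uj j2 := hmono (Fin.lt_def.2 (by omega))
    have hmem2 : (c + ((2*(n+1) - uj j2 : ℕ) : ZMod (2*(n+1))))
        + ((uj j2 - uj j1 : ℕ) : ZMod (2*(n+1))) ∈ S := by
      rw [zadd_assoc,
        show 2*(n+1) - uj j2 + (uj j2 - uj j1) = 2*(n+1) - uj j1 from by omega]
      exact hout_mem j1
    have hmin2 : ∀ k' : ℕ, 0 < k' → k' < uj j2 - uj j1 →
        (c + ((2*(n+1) - uj j2 : ℕ) : ZMod (2*(n+1)))) + ((k' : ℕ) : ZMod (2*(n+1))) ∉ S := by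
      intro k' h1 h2
      rw [zadd_assoc]
      apply hnotmemS _ (by omega)
      rw [chordOf_large (by omega)]
      intro hmem
      exact hgapT j1 j2 _ hj (hmemI' _ (by omega) hmem) (by omega) (by omega)
    rw [cnext_eq (by omega) hmem2 hmin2, zadd_assoc,
      show 2*(n+1) - uj j2 + (uj j2 - uj j1) = 2*(n+1) - uj j1 from by omega]
  have hcnext_wrap : cnext S (c + ((2*(n+1) - uj j0 : ℕ) : ZMod (2*(n+1))))
      = c + ((0 : ℕ) : ZMod (2*(n+1))) := by
    have hb := hbnd j0
    have hmem2 : (c + ((2*(n+1) - uj j0 : ℕ) : ZMod (2*(n+1))))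
        + ((uj j0 : ℕ) : ZMod (2*(n+1))) ∈ S := by
      rw [zadd_assoc, show 2*(n+1) - uj j0 + uj j0 = 2*(n+1) from by omega,
        zwrap c (by omega), show 2*(n+1) - 2*(n+1) = 0 from by omega]
      exact hc_mem
    have hmin2 : ∀ k' : ℕ, 0 < k' → k' < uj j0 →
        (c + ((2*(n+1) - uj j0 : ℕ) : ZMod (2*(n+1)))) + ((k' : ℕ) : ZMod (2*(n+1))) ∉ S := by
      intro k' h1 h2
      rw [zadd_assoc]
      apply hnotmemS _ (by omega)
      rw [chordOf_large (by omega)]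
      intro hmem
      have := hbotT _ (hmemI' _ (by omega) hmem)
      omega
    rw [cnext_eq (by omega) hmem2 hmin2, zadd_assoc,
      show 2*(n+1) - uj j0 + uj j0 = 2*(n+1) from by omega,
      zwrap c (by omega), show 2*(n+1) - 2*(n+1) = 0 from by omega]
  -- σ on the endpoints
  have hsig_c : B.σ (c + ((0 : ℕ) : ZMod (2*(n+1)))) = c + ((n+1 : ℕ) : ZMod (2*(n+1))) := by
    rw [sigma_off B c hc1 hc2 (by omega)]
    rw [show sigmaOff n 0 = n+1 from by unfold sigmaOff; rw [if_pos rfl]]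
  have hsig_q : B.σ (c + ((n+1 : ℕ) : ZMod (2*(n+1)))) = c + ((0 : ℕ) : ZMod (2*(n+1))) := by
    rw [sigma_off B c hc1 hc2 (by omega)]
    rw [show sigmaOff n (n+1) = 0 from by unfold sigmaOff; rw [if_neg (by omega), if_pos rfl]]
  have hsig_in : ∀ j : Fin I.card, B.σ (c + ((uj j : ℕ) : ZMod (2*(n+1))))
      = c + ((2*(n+1) - uj j : ℕ) : ZMod (2*(n+1))) := by
    intro j
    have hb := hbnd j
    rw [sigma_off B c hc1 hc2 (by omega)]
    rw [show sigmaOff n (uj j) = 2*(n+1) - uj j from by unfold sigmaOff; split_ifs <;> omega]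
  have hsig_out : ∀ j : Fin I.card, B.σ (c + ((2*(n+1) - uj j : ℕ) : ZMod (2*(n+1))))
      = c + ((uj j : ℕ) : ZMod (2*(n+1))) := by
    intro j
    have hb := hbnd j
    rw [sigma_off B c hc1 hc2 (by omega)]
    rw [show sigmaOff n (2*(n+1) - uj j) = uj j from by unfold sigmaOff; split_ifs <;> omega]
  -- decomposition
  have hdec : ∀ z : ZMod (2*(n+1)), z ∈ S →
      z = c + ((0 : ℕ) : ZMod (2*(n+1))) ∨ z = c + ((n+1 : ℕ) : ZMod (2*(n+1))) ∨
      ∃ j : Fin I.card, z = c + ((uj j : ℕ) : ZMod (2*(n+1)))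
        ∨ z = c + ((2*(n+1) - uj j : ℕ) : ZMod (2*(n+1))) := by
    intro z hz
    have hov : (z - c).val < 2*(n+1) := ZMod.val_lt _
    have hzr : z = c + (((z - c).val : ℕ) : ZMod (2*(n+1))) := zrep c z
    rw [hSdef, mem_chordSet hT] at hz
    by_cases h1 : (z - c).val = n+1
    · right; left; rw [hzr, h1]
    · by_cases h2 : (z - c).val ≤ n
      · rw [chordOf_small h2] at hz
        by_cases h3 : (z - c).val = 0
        · left; rw [hzr, h3]
        · right; right
          obtain ⟨j, hjj⟩ := hall _ (hmemI' _ h3 hz)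
          exact ⟨j, Or.inl (by rw [hzr, hjj])⟩
      · rw [chordOf_large (by omega)] at hz
        right; right
        obtain ⟨j, hjj⟩ := hall _ (hmemI' _ (by omega) hz)
        refine ⟨j, Or.inr ?_⟩
        rw [show 2*(n+1) - uj j = (z - c).val from by omega, ← hzr]
  -- the labelling into Fin I.card
  set lab : ZMod (2*(n+1)) → ℕ := fun z =>
    if (z - c).val = 0 ∨ (z - c).val = n+1 then 0
    else if (z - c).val ≤ n then
      (if idxOf ((z - c).val) + 1 = I.card then 0 else idxOf ((z - c).val) + 1)
    else idxOf (2*(n+1) - (z - c).val) with hlab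
  set ℓ₀ : {x : ZMod (2*(n+1)) // x ∈ S} → Fin I.card :=
    fun z => ⟨min (lab (z : ZMod (2*(n+1)))) (I.card - 1),
      lt_of_le_of_lt (min_le_right _ _) (by omega)⟩ with hℓ₀
  have hlab_c : ∀ z : ZMod (2*(n+1)), z = c + ((0 : ℕ) : ZMod (2*(n+1))) → lab z = 0 := by
    intro z hzz
    rw [hlab]
    simp only []
    rw [hzz, zoff_val c 0 (by omega), if_pos (by omega)]
  have hlab_q : ∀ z : ZMod (2*(n+1)), z = c + ((n+1 : ℕ) : ZMod (2*(n+1))) → lab z = 0 := by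
    intro z hzz
    rw [hlab]
    simp only []
    rw [hzz, zoff_val c (n+1) (by omega), if_pos (by omega)]
  have hlab_in : ∀ (j : Fin I.card) (z : ZMod (2*(n+1))),
      z = c + ((uj j : ℕ) : ZMod (2*(n+1))) →
      lab z = if j.val + 1 = I.card then 0 else j.val + 1 := by
    intro j z hzz
    have hb := hbnd j
    rw [hlab]
    simp only []
    rw [hzz, zoff_val c _ (by omega), if_neg (by omega), if_pos (by omega), hidx_uj]
  have hlab_out : ∀ (j : Fin I.card) (z : ZMod (2*(n+1))),
      z = c + ((2*(n+1) - uj j : ℕ) : ZMod (2*(n+1))) → lab z = j.val := by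
    intro j z hzz
    have hb := hbnd j
    rw [hlab]
    simp only []
    rw [hzz, zoff_val c _ (by omega), if_neg (by omega), if_neg (by omega),
      show 2*(n+1) - (2*(n+1) - uj j) = uj j from by omega, hidx_uj]
  have hℓ_c : ∀ z : {x : ZMod (2*(n+1)) // x ∈ S},
      (z : ZMod (2*(n+1))) = c + ((0 : ℕ) : ZMod (2*(n+1))) → (ℓ₀ z).val = 0 := by
    intro z hzz
    rw [hℓ₀]
    simp only []
    rw [hlab_c _ hzz]
    omega
  have hℓ_q : ∀ z : {x : ZMod (2*(n+1)) // x ∈ S},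
      (z : ZMod (2*(n+1))) = c + ((n+1 : ℕ) : ZMod (2*(n+1))) → (ℓ₀ z).val = 0 := by
    intro z hzz
    rw [hℓ₀]
    simp only []
    rw [hlab_q _ hzz]
    omega
  have hℓ_in : ∀ (j : Fin I.card) (z : {x : ZMod (2*(n+1)) // x ∈ S}),
      (z : ZMod (2*(n+1))) = c + ((uj j : ℕ) : ZMod (2*(n+1))) →
      (ℓ₀ z).val = if j.val + 1 = I.card then 0 else j.val + 1 := by
    intro j z hzz
    rw [hℓ₀]
    simp only []
    rw [hlab_in j _ hzz]
    have := j.isLt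
    split_ifs <;> omega
  have hℓ_out : ∀ (j : Fin I.card) (z : {x : ZMod (2*(n+1)) // x ∈ S}),
      (z : ZMod (2*(n+1))) = c + ((2*(n+1) - uj j : ℕ) : ZMod (2*(n+1))) →
      (ℓ₀ z).val = j.val := by
    intro j z hzz
    rw [hℓ₀]
    simp only []
    rw [hlab_out j _ hzz]
    have := j.isLt
    omega
  -- condition (i)
  have hcond1 : ∀ p q : {x : ZMod (2*(n+1)) // x ∈ S},
      (q : ZMod (2*(n+1))) = B.σ (cnext S (p : ZMod (2*(n+1)))) → ℓ₀ q = ℓ₀ p := by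
    intro p q hq
    rcases hdec _ p.2 with hp | hp | ⟨j, hp | hp⟩
    · -- p = c
      have hq2 : (q : ZMod (2*(n+1)))
          = c + ((2*(n+1) - uj j0 : ℕ) : ZMod (2*(n+1))) := by
        rw [hq, hp, hcnext_c, hsig_in]
      apply Fin.ext
      rw [hℓ_out j0 q hq2, hℓ_c p hp, hj0v]
    · -- p = q-point
      have hq2 : (q : ZMod (2*(n+1))) = c + ((uj jtop : ℕ) : ZMod (2*(n+1))) := by
        rw [hq, hp, hcnext_q, hsig_out]
      apply Fin.ext
      rw [hℓ_in jtop q hq2, hℓ_q p hp, if_pos (by rw [hjtopv]; omega)]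
    · -- p inner
      by_cases hjtop2 : j.val + 1 < I.card
      · have hq2 : (q : ZMod (2*(n+1)))
            = c + ((2*(n+1) - uj ⟨j.val + 1, hjtop2⟩ : ℕ) : ZMod (2*(n+1))) := by
          rw [hq, hp, hcnext_in j ⟨j.val + 1, hjtop2⟩ rfl, hsig_in]
        apply Fin.ext
        rw [hℓ_out ⟨j.val + 1, hjtop2⟩ q hq2, hℓ_in j p hp, if_neg (by omega)]
      · have hj : j = jtop := Fin.ext (by rw [hjtopv]; have := j.isLt; omega)
        rw [hj] at hp
        have hq2 : (q : ZMod (2*(n+1))) = c + ((0 : ℕ) : ZMod (2*(n+1))) := by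
          rw [hq, hp, hcnext_top, hsig_q]
        apply Fin.ext
        rw [hℓ_c q hq2, hℓ_in jtop p hp, if_pos (by rw [hjtopv]; omega)]
    · -- p outer
      by_cases hj0' : j.val = 0
      · have hj : j = j0 := Fin.ext (by rw [hj0v]; omega)
        rw [hj] at hp
        have hq2 : (q : ZMod (2*(n+1))) = c + ((n+1 : ℕ) : ZMod (2*(n+1))) := by
          rw [hq, hp, hcnext_wrap, hsig_c]
        apply Fin.ext
        rw [hℓ_q q hq2, hℓ_out j0 p hp, hj0v]
      · have hj1lt : j.val - 1 < I.card := by have := j.isLt; omega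
        have hj1j : (⟨j.val - 1, hj1lt⟩ : Fin I.card).val + 1 = j.val := by
          have h5 : (⟨j.val - 1, hj1lt⟩ : Fin I.card).val = j.val - 1 := rfl
          omega
        have hq2 : (q : ZMod (2*(n+1)))
            = c + ((uj ⟨j.val - 1, hj1lt⟩ : ℕ) : ZMod (2*(n+1))) := by
          rw [hq, hp, hcnext_out ⟨j.val - 1, hj1lt⟩ j hj1j, hsig_out]
        apply Fin.ext
        rw [hℓ_in ⟨j.val - 1, hj1lt⟩ q hq2, hℓ_out j p hp,
          if_neg (by have := j.isLt; omega)]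
        omega
  -- condition (ii)
  have hcond2 : Function.Surjective ℓ₀ := by
    intro l
    by_cases hl : l.val = 0
    · refine ⟨⟨c + ((0 : ℕ) : ZMod (2*(n+1))), hc_mem⟩, ?_⟩
      apply Fin.ext
      rw [hℓ_c _ rfl, hl]
    · have hlt : l.val - 1 < I.card := by have := l.isLt; omega
      refine ⟨⟨c + ((uj ⟨l.val - 1, hlt⟩ : ℕ) : ZMod (2*(n+1))), hin_mem _⟩, ?_⟩
      apply Fin.ext
      rw [hℓ_in ⟨l.val - 1, hlt⟩ _ rfl]
      have h5 : (⟨l.val - 1, hlt⟩ : Fin I.card).val = l.val - 1 := rfl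
      have := l.isLt
      rw [if_neg (by omega)]
      omega
  -- condition (iii)
  have hcond3 : ∀ p q : {x : ZMod (2*(n+1)) // x ∈ S}, ℓ₀ p = ℓ₀ q →
      Relation.EqvGen (fun a b : {x : ZMod (2*(n+1)) // x ∈ S} =>
        (b : ZMod (2*(n+1))) = B.σ (cnext S (a : ZMod (2*(n+1))))) p q := by
    intro p q hpq
    have hval := congrArg Fin.val hpq
    set r : {x : ZMod (2*(n+1)) // x ∈ S} → {x : ZMod (2*(n+1)) // x ∈ S} → Prop :=
      fun a b => (b : ZMod (2*(n+1))) = B.σ (cnext S (a : ZMod (2*(n+1)))) with hr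
    set pc : {x : ZMod (2*(n+1)) // x ∈ S} := ⟨c + ((0 : ℕ) : ZMod (2*(n+1))), hc_mem⟩
    set pq : {x : ZMod (2*(n+1)) // x ∈ S} := ⟨c + ((n+1 : ℕ) : ZMod (2*(n+1))), hq_mem⟩
    set pout0 : {x : ZMod (2*(n+1)) // x ∈ S} :=
      ⟨c + ((2*(n+1) - uj j0 : ℕ) : ZMod (2*(n+1))), hout_mem j0⟩
    set pintop : {x : ZMod (2*(n+1)) // x ∈ S} :=
      ⟨c + ((uj jtop : ℕ) : ZMod (2*(n+1))), hin_mem jtop⟩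
    have e1 : Relation.EqvGen r pc pout0 := by
      apply Relation.EqvGen.rel
      show ((pout0 : {x : ZMod (2*(n+1)) // x ∈ S}) : ZMod (2*(n+1)))
        = B.σ (cnext S ((pc : {x : ZMod (2*(n+1)) // x ∈ S}) : ZMod (2*(n+1))))
      rw [hcnext_c, hsig_in]
    have e2 : Relation.EqvGen r pout0 pq := by
      apply Relation.EqvGen.rel
      show ((pq : {x : ZMod (2*(n+1)) // x ∈ S}) : ZMod (2*(n+1)))
        = B.σ (cnext S ((pout0 : {x : ZMod (2*(n+1)) // x ∈ S}) : ZMod (2*(n+1))))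
      rw [hcnext_wrap, hsig_c]
    have e3 : Relation.EqvGen r pq pintop := by
      apply Relation.EqvGen.rel
      show ((pintop : {x : ZMod (2*(n+1)) // x ∈ S}) : ZMod (2*(n+1)))
        = B.σ (cnext S ((pq : {x : ZMod (2*(n+1)) // x ∈ S}) : ZMod (2*(n+1))))
      rw [hcnext_q, hsig_out]
    have hconn0 : ∀ z : {x : ZMod (2*(n+1)) // x ∈ S}, (ℓ₀ z).val = 0 →
        Relation.EqvGen r z pc := by
      intro z hz
      rcases hdec _ z.2 with hzf | hzf | ⟨j, hzf | hzf⟩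
      · rw [show z = pc from Subtype.ext hzf]
        exact Relation.EqvGen.refl _
      · rw [show z = pq from Subtype.ext hzf]
        exact Relation.EqvGen.symm _ _ (Relation.EqvGen.trans _ _ _ e1 e2)
      · rw [hℓ_in j z hzf] at hz
        have hjj : j = jtop := by
          apply Fin.ext
          rw [hjtopv]
          have := j.isLt
          split_ifs at hz <;> omega
        rw [hjj] at hzf
        rw [show z = pintop from Subtype.ext hzf]
        exact Relation.EqvGen.symm _ _
          (Relation.EqvGen.trans _ _ _ e1 (Relation.EqvGen.trans _ _ _ e2 e3))
      · rw [hℓ_out j z hzf] at hz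
        have hjj : j = j0 := Fin.ext (by rw [hj0v]; omega)
        rw [hjj] at hzf
        rw [show z = pout0 from Subtype.ext hzf]
        exact Relation.EqvGen.symm _ _ e1
    by_cases hl0 : (ℓ₀ p).val = 0
    · exact Relation.EqvGen.trans _ _ _ (hconn0 p hl0)
        (Relation.EqvGen.symm _ _ (hconn0 q (by omega)))
    · -- ℓ₀ p = l ≥ 1 : elements are inner ⟨l-1⟩ or outer ⟨l⟩
      have hform : ∀ z : {x : ZMod (2*(n+1)) // x ∈ S}, (ℓ₀ z).val = (ℓ₀ p).val →
          (∃ (hj : (ℓ₀ p).val - 1 < I.card),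
            (z : ZMod (2*(n+1))) = c + ((uj ⟨(ℓ₀ p).val - 1, hj⟩ : ℕ) : ZMod (2*(n+1)))) ∨
          (∃ (hj : (ℓ₀ p).val < I.card),
            (z : ZMod (2*(n+1))) = c + ((2*(n+1) - uj ⟨(ℓ₀ p).val, hj⟩ : ℕ) : ZMod (2*(n+1)))) := by
        intro z hz
        have hlp := (ℓ₀ p).isLt
        rcases hdec _ z.2 with hzf | hzf | ⟨j, hzf | hzf⟩
        · rw [hℓ_c z hzf] at hz; omega
        · rw [hℓ_q z hzf] at hz; omega
        · rw [hℓ_in j z hzf] at hz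
          have := j.isLt
          left
          refine ⟨by omega, ?_⟩
          have hjj : j = ⟨(ℓ₀ p).val - 1, by omega⟩ := by
            apply Fin.ext
            show j.val = (ℓ₀ p).val - 1
            split_ifs at hz <;> omega
          rw [← hjj]
          exact hzf
        · rw [hℓ_out j z hzf] at hz
          have := j.isLt
          right
          refine ⟨by omega, ?_⟩
          have hjj : j = ⟨(ℓ₀ p).val, by omega⟩ := Fin.ext (by show j.val = (ℓ₀ p).val; omega)
          rw [← hjj]
          exact hzf
      have hrel : ∀ (a b : {x : ZMod (2*(n+1)) // x ∈ S})
          (hj1 : (ℓ₀ p).val - 1 < I.card) (hj2 : (ℓ₀ p).val < I.card),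
          (a : ZMod (2*(n+1))) = c + ((uj ⟨(ℓ₀ p).val - 1, hj1⟩ : ℕ) : ZMod (2*(n+1))) →
          (b : ZMod (2*(n+1))) = c + ((2*(n+1) - uj ⟨(ℓ₀ p).val, hj2⟩ : ℕ) : ZMod (2*(n+1))) →
          Relation.EqvGen r a b := by
        intro a b hj1 hj2 ha hb
        apply Relation.EqvGen.rel
        show (b : ZMod (2*(n+1))) = B.σ (cnext S (a : ZMod (2*(n+1))))
        rw [ha, hb, hcnext_in ⟨(ℓ₀ p).val - 1, hj1⟩ ⟨(ℓ₀ p).val, hj2⟩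
          (by show (ℓ₀ p).val - 1 + 1 = (ℓ₀ p).val; omega), hsig_in]
      rcases hform p rfl with ⟨hj1, hp1⟩ | ⟨hj2, hp1⟩ <;>
        rcases hform q (by omega) with ⟨hk1, hq1⟩ | ⟨hk2, hq1⟩
      · rw [Subtype.ext (hp1.trans hq1.symm)]
        exact Relation.EqvGen.refl _
      · exact hrel p q hj1 hk2 hp1 hq1
      · exact Relation.EqvGen.symm _ _ (hrel q p hk1 hj2 hq1 hp1)
      · rw [Subtype.ext (hp1.trans hq1.symm)]
        exact Relation.EqvGen.refl _
  have hnum := numBoundary_restrict B S (by omega) (by omega) (by omega) hSinv hor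
    ℓ₀ hcond1 hcond2 hcond3
  show 1 + S.card / 2 - numBoundary (B.restrict S) = 2
  rw [hnum]
  have hcb : Nat.card (Fin I.card) = I.card := by simp [Nat.card_eq_fintype_card]
  rw [hcb]
  omega

end StarCase
section Assembly

lemma eulerGenus_of_zero {m : ℕ} (B' : Bouquet m) (hm : m = 0) : eulerGenus B' = 0 := by
  show 1 + m - numBoundary B' = 0
  rw [numBoundary, if_pos hm]
  omega

lemma eulerGenus_chordSet {n : ℕ} (hn : 1 ≤ n) (B : Bouquet (n+1)) (c : ZMod (2*(n+1)))
    (hc1 : B.σ c = c + ((n+1 : ℕ) : ZMod (2*(n+1))))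
    (hc2 : ∀ i : ℕ, 1 ≤ i → i ≤ n → B.σ (c + (i : ZMod (2*(n+1)))) = c - (i : ZMod (2*(n+1))))
    (hor : ∀ i, B.t i = false)
    {T : Finset ℕ} (hT : T ⊆ Finset.range (n+1)) :
    eulerGenus (B.restrict (chordSet n c T)) = if 0 ∈ T ∧ 2 ≤ T.card then 2 else 0 := by
  by_cases h0 : 0 ∈ T
  · by_cases h2 : 2 ≤ T.card
    · rw [if_pos ⟨h0, h2⟩]
      exact eulerGenus_star_case B c hc1 hc2 hor hT h0 h2
    · rw [if_neg (by tauto)]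
      have hcd : 0 < T.card := Finset.card_pos.2 ⟨0, h0⟩
      have hc1' : T.card = 1 := by omega
      have hT0 : T = {0} := by
        obtain ⟨a, ha⟩ := Finset.card_eq_one.1 hc1'
        rw [ha] at h0 ⊢
        rw [Finset.mem_singleton] at h0
        rw [h0]
      rw [hT0]
      exact eulerGenus_centre_only B c hc1 hc2 hor
  · rw [if_neg (by tauto)]
    rcases Finset.eq_empty_or_nonempty T with rfl | hne
    · have hemp : chordSet n c ∅ = ∅ := by
        unfold chordSet offs
        simp
      rw [hemp]
      apply eulerGenus_of_zero
      simp
    · exact eulerGenus_leaf B c hc1 hc2 hor hT h0 hne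

lemma star_structure {n : ℕ} (hn : 1 ≤ n) (B : Bouquet (n+1)) (c : ZMod (2*(n+1)))
    (hcentre : ∀ j, ¬ SameChord B c j → Interlace B c j)
    (hleaves : ∀ j k, ¬ SameChord B c j → ¬ SameChord B c k → ¬ SameChord B j k →
      ¬ Interlace B j k) :
    ∃ c' : ZMod (2*(n+1)), B.σ c' = c' + ((n+1 : ℕ) : ZMod (2*(n+1))) ∧
      ∀ i : ℕ, 1 ≤ i → i ≤ n → B.σ (c' + (i : ZMod (2*(n+1)))) = c' - (i : ZMod (2*(n+1))) := by
  have hvne : c.val ≠ (B.σ c).val := by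
    intro h
    apply B.fpf c
    have h1 : ((c.val : ℕ) : ZMod (2*(n+1))) = (((B.σ c).val : ℕ) : ZMod (2*(n+1))) := by
      rw [h]
    rw [ZMod.natCast_rightInverse c, ZMod.natCast_rightInverse (B.σ c)] at h1
    exact h1.symm
  rcases Nat.lt_or_ge c.val (B.σ c).val with hlt | hge
  · exact ⟨c, star_structure_aux hn B c hcentre hleaves hlt⟩
  · have hlt2 : (B.σ c).val < (B.σ (B.σ c)).val := by rw [B.invol]; omega
    refine ⟨B.σ c, star_structure_aux hn B (B.σ c) ?_ ?_ hlt2⟩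
    · intro j hj
      have hsc : ¬ SameChord B c j := by
        intro hs
        apply hj
        rcases hs with rfl | rfl
        · right; rw [B.invol]
        · left; rfl
      have h2 := hcentre j hsc
      simp only [Interlace] at h2 ⊢
      rw [B.invol, min_comm, max_comm]
      exact h2
    · intro j k hj hk hjk
      apply hleaves j k ?_ ?_ hjk
      · intro hs; apply hj
        rcases hs with rfl | rfl
        · right; rw [B.invol]
        · left; rfl
      · intro hs; apply hk
        rcases hs with rfl | rfl
        · right; rw [B.invol]
        · left; rfl

end Assembly
/-- A bouquet whose signed intersection graph is the positive star with `n` leaves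
(one untwisted chord interlacing each of the `n` others, which are pairwise
non-interlacing) has `∂ε_B(z) = (2^{n+1} - 2) z² + 2`. -/
theorem pdPoly_star {n : ℕ} (hn : 1 ≤ n) (B : Bouquet (n+1))
    (hor : ∀ i, B.t i = false) (c : ZMod (2*(n+1)))
    (hcentre : ∀ j, ¬ SameChord B c j → Interlace B c j)
    (hleaves : ∀ j k, ¬ SameChord B c j → ¬ SameChord B c k → ¬ SameChord B j k →
      ¬ Interlace B j k) :
    pdPoly B = Polynomial.C ((2:ℤ)^(n+1) - 2) * Polynomial.X ^ 2 + Polynomial.C 2 := by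
  obtain ⟨c', hc1, hc2⟩ := star_structure hn B c hcentre hleaves
  rw [pdPoly, dif_neg (show ¬(n+1 = 0) by omega)]
  have trans1 : (∑ S ∈ Finset.univ.filter
        (fun S : Finset (ZMod (2*(n+1))) => ∀ i ∈ S, B.σ i ∈ S),
      (Polynomial.X : Polynomial ℤ) ^ (eulerGenus (B.restrict S) + eulerGenus (B.restrict Sᶜ)))
      = ∑ T ∈ (Finset.range (n+1)).powerset,
        (Polynomial.X : Polynomial ℤ) ^
          ((if 0 ∈ T ∧ 2 ≤ T.card then 2 else 0) +
           (if 0 ∈ Finset.range (n+1) \ T ∧ 2 ≤ (Finset.range (n+1) \ T).card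
             then 2 else 0)) := by
    apply Finset.sum_nbij'
      (i := fun S => (Finset.range (n+1)).filter (fun i : ℕ => c' + (i : ZMod (2*(n+1))) ∈ S))
      (j := fun T => chordSet n c' T)
    · intro S hS
      exact Finset.mem_powerset.2 (Finset.filter_subset _ _)
    · intro T hTp
      rw [Finset.mem_filter]
      exact ⟨Finset.mem_univ _, chordSet_inv (Finset.mem_powerset.1 hTp) B c' hc1 hc2⟩
    · intro S hS
      rw [Finset.mem_filter] at hS
      exact (chordSet_surj B c' hc1 hc2 S hS.2).symm
    · intro T hTp
      exact chordSet_T_eq c' (Finset.mem_powerset.1 hTp)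
    · intro S hS
      rw [Finset.mem_filter] at hS
      have hSrw := chordSet_surj B c' hc1 hc2 S hS.2
      set T0 := (Finset.range (n+1)).filter
        (fun i : ℕ => c' + (i : ZMod (2*(n+1))) ∈ S) with hT0
      have hT0sub : T0 ⊆ Finset.range (n+1) := Finset.filter_subset _ _
      conv_lhs => rw [hSrw]
      rw [chordSet_compl c' hT0sub,
        eulerGenus_chordSet hn B c' hc1 hc2 hor hT0sub,
        eulerGenus_chordSet hn B c' hc1 hc2 hor (Finset.sdiff_subset)]
  rw [trans1]
  have trans2 : ∀ T ∈ (Finset.range (n+1)).powerset,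
      (Polynomial.X : Polynomial ℤ) ^
          ((if 0 ∈ T ∧ 2 ≤ T.card then 2 else 0) +
           (if 0 ∈ Finset.range (n+1) \ T ∧ 2 ≤ (Finset.range (n+1) \ T).card
             then 2 else 0))
      = if (T = {0} ∨ T = (Finset.range (n+1)).erase 0) then (1 : Polynomial ℤ)
        else (Polynomial.X : Polynomial ℤ)^2 := by
    intro T hTp
    have hT := Finset.mem_powerset.1 hTp
    have hcomp_card : (Finset.range (n+1) \ T).card = (n+1) - T.card := by
      rw [Finset.card_sdiff_of_subset hT, Finset.card_range]
    have h0comp : (0 ∈ Finset.range (n+1) \ T) ↔ 0 ∉ T := by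
      rw [Finset.mem_sdiff, Finset.mem_range]
      constructor
      · tauto
      · intro h; exact ⟨by omega, h⟩
    have hcard_le : T.card ≤ n+1 := by
      have h5 := Finset.card_le_card hT
      rwa [Finset.card_range] at h5
    by_cases h0 : 0 ∈ T
    · have hnot1 : ¬(0 ∈ Finset.range (n+1) \ T ∧ 2 ≤ (Finset.range (n+1) \ T).card) :=
        fun hh => (h0comp.1 hh.1) h0
      by_cases h2 : 2 ≤ T.card
      · have hnot2 : ¬(T = {0} ∨ T = (Finset.range (n+1)).erase 0) := by
          rintro (rfl | hTe)
          · simp at h2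
          · rw [hTe] at h0
            simp at h0
        rw [if_pos ⟨h0, h2⟩, if_neg hnot1, if_neg hnot2]
      · have hcd : 0 < T.card := Finset.card_pos.2 ⟨0, h0⟩
        have hT0 : T = {0} := by
          obtain ⟨a, ha⟩ := Finset.card_eq_one.1 (by omega : T.card = 1)
          rw [ha] at h0 ⊢
          rw [Finset.mem_singleton] at h0
          rw [h0]
        rw [if_neg (show ¬(0 ∈ T ∧ 2 ≤ T.card) by tauto), if_neg hnot1,
          if_pos (Or.inl hT0)]
        exact pow_zero _
    · have h0c : 0 ∈ Finset.range (n+1) \ T := h0comp.2 h0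
      have hTsub : T ⊆ (Finset.range (n+1)).erase 0 := Finset.subset_erase.2 ⟨hT, h0⟩
      have hcard_le2 : T.card ≤ n := by
        have h5 := Finset.card_le_card hTsub
        rwa [Finset.card_erase_of_mem (by simp), Finset.card_range] at h5
      by_cases h2 : 2 ≤ (Finset.range (n+1) \ T).card
      · have hnot2 : ¬(T = {0} ∨ T = (Finset.range (n+1)).erase 0) := by
          rintro (rfl | hTe)
          · exact h0 (by simp)
          · have h6 : T.card = n := by
              rw [hTe, Finset.card_erase_of_mem (by simp), Finset.card_range]
              omega
            omega
        rw [if_neg (show ¬(0 ∈ T ∧ 2 ≤ T.card) by tauto), if_pos ⟨h0c, h2⟩, if_neg hnot2]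
      · have hTe : T = (Finset.range (n+1)).erase 0 := by
          have hTn : T.card = n := by omega
          apply Finset.eq_of_subset_of_card_le hTsub
          rw [Finset.card_erase_of_mem (by simp), Finset.card_range]
          omega
        rw [if_neg (show ¬(0 ∈ T ∧ 2 ≤ T.card) by tauto),
          if_neg (show ¬(0 ∈ Finset.range (n+1) \ T ∧
            2 ≤ (Finset.range (n+1) \ T).card) by tauto),
          if_pos (Or.inr hTe)]
        exact pow_zero _
  rw [Finset.sum_congr rfl trans2, Finset.sum_ite, Finset.sum_const, Finset.sum_const]
  have hfilter1 : ((Finset.range (n+1)).powerset.filter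
      (fun T => T = {0} ∨ T = (Finset.range (n+1)).erase 0))
      = {{0}, (Finset.range (n+1)).erase 0} := by
    ext T
    simp only [Finset.mem_filter, Finset.mem_powerset, Finset.mem_insert, Finset.mem_singleton]
    constructor
    · tauto
    · rintro (rfl | rfl)
      · refine ⟨?_, Or.inl rfl⟩
        intro x hx
        rw [Finset.mem_singleton] at hx
        rw [hx]
        simp
      · exact ⟨Finset.erase_subset _ _, Or.inr rfl⟩
  have hne2 : ({0} : Finset ℕ) ≠ (Finset.range (n+1)).erase 0 := by
    intro h
    have h1 : (1:ℕ) ∈ (Finset.range (n+1)).erase 0 := by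
      rw [Finset.mem_erase, Finset.mem_range]
      omega
    rw [← h] at h1
    simp at h1
  have hcard1 : ((Finset.range (n+1)).powerset.filter
      (fun T => T = {0} ∨ T = (Finset.range (n+1)).erase 0)).card = 2 := by
    rw [hfilter1, Finset.card_insert_of_notMem (by simpa using hne2), Finset.card_singleton]
  have hcount := Finset.card_filter_add_card_filter_not
    (s := (Finset.range (n+1)).powerset)
    (p := fun T => T = {0} ∨ T = (Finset.range (n+1)).erase 0)
  have hcardP : (Finset.range (n+1)).powerset.card = 2^(n+1) := by
    rw [Finset.card_powerset, Finset.card_range]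
  have hcard2 : ((Finset.range (n+1)).powerset.filter
      (fun T => ¬(T = {0} ∨ T = (Finset.range (n+1)).erase 0))).card = 2^(n+1) - 2 := by
    omega
  rw [hcard1, hcard2]
  have h2le : 2 ≤ 2^(n+1) := by
    calc (2:ℕ) = 2^1 := rfl
    _ ≤ 2^(n+1) := Nat.pow_le_pow_right (by omega) (by omega)
  have hC : Polynomial.C ((2:ℤ)^(n+1) - 2) = (2 : Polynomial ℤ)^(n+1) - 2 := by
    rw [map_sub, map_pow]
    norm_num
  have hC2 : Polynomial.C (2:ℤ) = (2 : Polynomial ℤ) := by norm_num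
  rw [hC, hC2, nsmul_eq_mul, nsmul_eq_mul]
  push_cast [h2le]
  ring

end Bouquet
end
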